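/- arXiv:2512.13772 — 13 statements merged into one kernel-verified Lean document; each statement's English description precedes it below -/
import Mathlib

section
/- Let X and Y be linear orders. If X is order-isomorphic to an initial segment (a lower set, with the induced order) of Y, and Y is order-isomorphic to a final segment (an upper set, with the induced order) of X, then X and Y are order-isomorphic. -/
/-- **Lindenbaum's Fundamental Theorem.** If `X` is order-isomorphic to an initial segment
(lower set) of `Y`, and `Y` is order-isomorphic to a final segment (upper set) of `X`, then
`X` and `Y` are order-isomorphic. -/
theorem lindenbaum_fundamental {X Y : Type*} [LinearOrder X] [LinearOrder Y]
    (L : Set Y) (hL : IsLowerSet L) (R : Set X) (hR : IsUpperSet R)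
    (f : X ≃o ↥L) (g : Y ≃o ↥R) : Nonempty (X ≃o Y) := by
  classical
  set h : X → X := fun x => (g (f x) : X) with hh
  set C : ℕ → Set X := fun n => (Set.image h)^[n] Rᶜ with hC
  set A : Set X := ⋃ n, C n with hA
  have hC0 : C 0 = Rᶜ := rfl
  have hCsucc : ∀ n, C (n + 1) = h '' C n := by
    intro n; simp only [hC, Function.iterate_succ_apply']
  have hsubA : ∀ n, C n ⊆ A := fun n => Set.subset_iUnion C n
  have hmemA : ∀ {x}, x ∈ A ↔ ∃ n, x ∈ C n := by
    intro x; simp [hA]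
  have hnotA : ∀ {x}, x ∉ A → x ∈ R := by
    intro x hx
    by_contra hxR
    exact hx (hsubA 0 hxR)
  -- `A` is a lower set
  have key : ∀ n, ∀ x ∈ C n, ∀ y, y ≤ x → y ∈ A := by
    intro n
    induction n with
    | zero =>
      intro x hx y hyx
      refine hsubA 0 ?_
      intro hyR
      exact hx (hR hyx hyR)
    | succ n ih =>
      intro x hx y hyx
      rw [hCsucc] at hx
      obtain ⟨z, hz, rfl⟩ := hx
      by_cases hyR : y ∈ R
      · have hle : (⟨y, hyR⟩ : R) ≤ g (f z) := Subtype.coe_le_coe.mp hyx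
        set w : Y := g.symm ⟨y, hyR⟩ with hw
        have hwfz : w ≤ (f z : Y) := by
          have := g.symm.monotone hle
          rwa [g.symm_apply_apply] at this
        have hwL : w ∈ L := hL hwfz (f z).2
        set u : X := f.symm ⟨w, hwL⟩ with hu
        have hfu : f u = ⟨w, hwL⟩ := f.apply_symm_apply _
        have huz : u ≤ z := by
          rw [← f.le_iff_le, hfu]
          exact Subtype.coe_le_coe.mp hwfz
        obtain ⟨m, hm⟩ := hmemA.mp (ih z hz u huz)
        have : h u ∈ C (m + 1) := by
          rw [hCsucc]; exact ⟨u, hm, rfl⟩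
        have hhu : h u = y := by
          simp only [hh, hfu, hw, g.apply_symm_apply]
        rw [hhu] at this
        exact hsubA _ this
      · exact hsubA 0 hyR
  have hAlow : IsLowerSet A := by
    intro x y hyx hx
    obtain ⟨n, hn⟩ := hmemA.mp hx
    exact key n x hn y hyx
  -- the candidate map
  set H : X → Y := fun x =>
    if hx : x ∈ A then (f x : Y) else g.symm ⟨x, hnotA hx⟩ with hH
  have hHA : ∀ {x} (hx : x ∈ A), H x = (f x : Y) := by
    intro x hx; simp [hH, hx]
  have hHnA : ∀ {x} (hx : x ∉ A), H x = g.symm ⟨x, hnotA hx⟩ := by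
    intro x hx; simp [hH, hx]
  have hmono : StrictMono H := by
    intro x x' hlt
    by_cases hx : x ∈ A
    · by_cases hx' : x' ∈ A
      · rw [hHA hx, hHA hx']
        exact Subtype.coe_lt_coe.mpr (f.strictMono hlt)
      · rw [hHA hx, hHnA hx']
        by_contra hc
        push_neg at hc
        have : (⟨x', hnotA hx'⟩ : R) ≤ g (f x) := by
          have := g.monotone hc
          rwa [g.apply_symm_apply] at this
        have hx'le : x' ≤ h x := Subtype.coe_le_coe.mpr this
        obtain ⟨n, hn⟩ := hmemA.mp hx
        have : h x ∈ A := hsubA (n + 1) (by rw [hCsucc]; exact ⟨x, hn, rfl⟩)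
        exact hx' (hAlow hx'le this)
    · by_cases hx' : x' ∈ A
      · exact absurd (hAlow hlt.le hx') hx
      · rw [hHnA hx, hHnA hx']
        exact g.symm.strictMono (Subtype.mk_lt_mk.mpr hlt)
  have hsurj : Function.Surjective H := by
    intro y
    by_cases hgy : (g y : X) ∈ A
    · obtain ⟨n, hn⟩ := hmemA.mp hgy
      match n, hn with
      | 0, hn => exact absurd (g y).2 hn
      | (m + 1), hn =>
        rw [hCsucc] at hn
        obtain ⟨z, hz, hze⟩ := hn
        have : g (f z) = g y := Subtype.coe_injective hze
        have hyz : y = (f z : Y) := by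
          have := g.injective this
          rw [this]
        exact ⟨z, by rw [hHA (hsubA m hz), hyz]⟩
    · refine ⟨(g y : X), ?_⟩
      rw [hHnA hgy]
      have : (⟨(g y : X), hnotA hgy⟩ : R) = g y := Subtype.ext rfl
      rw [this, g.symm_apply_apply]
  exact ⟨StrictMono.orderIsoOfSurjective H hmono hsurj⟩
end

section
/- For every infinite cardinal κ there exists a linear order X of cardinality 2^κ with the following two properties. (a) For all linear orders A, B, C, D, each of cardinality at most κ, every order isomorphism f from the lexicographic sum A + X + B to the lexicographic sum C + X + D maps the copy of A onto the copy of C, the copy of X onto the copy of X, and the copy of B onto the copy of D. (b) For every nonempty proper initial segment I of X there is an initial segment J of X properly containing I such that J is order-isomorphic to I. -/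
universe u

open Cardinal Set

/-!
Take `X = Lex (ι → ℤ)` for a well-order `ι` of size `κ`: a linearly ordered abelian group of
cardinality `2 ^ κ`. Translations make `X` homogeneous, so a nonempty proper initial segment `I`
containing `u` and missing `w` is isomorphic to its translate by `w - u`, an initial segment
comparable with `I` that contains `w`, hence strictly larger. Homogeneity and the reflection
`y ↦ 2x - y` also give every open ray of `X` cardinality `2 ^ κ > κ`. So an isomorphism
`f : A + X + B ≃o C + X + D` cannot send a point of `X` into `C`, since the more than `κ` points
below it would land in `C`, nor into `D`; applied to `f` and `f⁻¹` this shows that `f` maps `X`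
onto `X`, and then `A` and `C`, the points strictly below all of `X`, correspond, as do `B`
and `D`.
-/

section Homogeneous

variable {α : Type*} [LinearOrder α]

theorem IsLowerSet.exists_ssuperset_orderIso_of_homogeneous
    (hα : ∀ u w : α, ∃ φ : α ≃o α, φ u = w) {I : Set α} (hI : IsLowerSet I)
    (hne : I.Nonempty) (hI_ne_univ : I ≠ Set.univ) :
    ∃ J : Set α, IsLowerSet J ∧ I ⊂ J ∧ Nonempty (J ≃o I) := by
  obtain ⟨u, hu⟩ := hne
  obtain ⟨w, hw⟩ := (ne_univ_iff_exists_notMem I).1 hI_ne_univ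
  obtain ⟨φ, rfl⟩ := hα u w
  have hJ : IsLowerSet (φ '' I) := hI.image φ
  have hφu : φ u ∈ φ '' I := mem_image_of_mem φ hu
  have hIJ : I ⊆ φ '' I := (hI.total hJ).resolve_right fun h => hw (h hφu)
  exact ⟨φ '' I, hJ, hIJ.ssubset_of_not_subset fun h => hw (h hφu),
    ⟨(StrictMonoOn.orderIso φ I (φ.strictMono.strictMonoOn I)).symm⟩⟩

end Homogeneous

section OrderedGroup

variable {G : Type*} [AddCommGroup G] [LinearOrder G] [IsOrderedAddMonoid G]

theorem exists_orderIso_apply_eq (u w : G) : ∃ φ : G ≃o G, φ u = w :=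
  ⟨OrderIso.addRight (w - u), add_sub_cancel u w⟩

theorem Cardinal.mk_Iio_eq_mk_Ioi (x : G) : #(Iio x) = #(Ioi x) := by
  rw [← mk_image_eq (sub_right_injective (b := x + x)), image_const_sub_Iio,
    add_sub_cancel_right]

theorem Cardinal.mk_Ioi_eq [Infinite G] (x : G) : #(Ioi x) = #G := by
  refine le_antisymm (mk_set_le _) ?_
  have hG : #G ≤ #(Ioi x) + (#(Ioi x) + 1) := calc
    #G = #(Iio x ∪ insert x (Ioi x) : Set G) := by rw [Ioi_insert, Iio_union_Ici, mk_univ]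
    _ ≤ #(Iio x) + (#(Ioi x) + 1) := (mk_union_le _ _).trans (by gcongr; exact mk_insert_le)
    _ = #(Ioi x) + (#(Ioi x) + 1) := by rw [mk_Iio_eq_mk_Ioi]
  have hx : ℵ₀ ≤ #(Ioi x) := by
    by_contra! h
    exact (aleph0_le_mk G).not_gt
      (hG.trans_lt (add_lt_aleph0 h (add_lt_aleph0 h one_lt_aleph0)))
  rwa [add_one_eq hx, add_eq_self hx] at hG

end OrderedGroup

theorem OrderIso.image_setOf_forall_lt {α β : Type*} [Preorder α] [Preorder β] (e : α ≃o β)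
    (s : Set α) : e '' {p | ∀ m ∈ s, p < m} = {q | ∀ m ∈ e '' s, q < m} := by
  ext q
  obtain ⟨p, rfl⟩ := e.surjective q
  simp [e.injective.mem_set_image, e.lt_iff_lt]

theorem OrderIso.image_setOf_forall_gt {α β : Type*} [Preorder α] [Preorder β] (e : α ≃o β)
    (s : Set α) : e '' {p | ∀ m ∈ s, m < p} = {q | ∀ m ∈ e '' s, m < q} := by
  ext q
  obtain ⟨p, rfl⟩ := e.surjective q
  simp [e.injective.mem_set_image, e.lt_iff_lt]

theorem Cardinal.mk_Iio_le_of_strictMono {α β : Type u} [LinearOrder α] [Preorder β] {g : α → β}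
    (hg : StrictMono g) (x : α) : #(Iio x) ≤ #(Iio (g x)) :=
  (mk_image_eq hg.injective).symm.le.trans
    (mk_le_mk_of_subset (image_subset_iff.2 fun _ hy => hg hy))

theorem Cardinal.mk_Ioi_le_of_strictMono {α β : Type u} [LinearOrder α] [Preorder β] {g : α → β}
    (hg : StrictMono g) (x : α) : #(Ioi x) ≤ #(Ioi (g x)) :=
  (mk_image_eq hg.injective).symm.le.trans
    (mk_le_mk_of_subset (image_subset_iff.2 fun _ hy => hg hy))

section LexSum

variable {A X B : Type*}

abbrev lexLeft (a : A) : (A ⊕ₗ X) ⊕ₗ B := Sum.inlₗ (Sum.inlₗ a)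

abbrev lexMid (x : X) : (A ⊕ₗ X) ⊕ₗ B := Sum.inlₗ (Sum.inrₗ x)

abbrev lexRight (b : B) : (A ⊕ₗ X) ⊕ₗ B := Sum.inrₗ b

variable [Preorder A] [Preorder X] [Preorder B]

theorem lexMid_strictMono : StrictMono (lexMid : X → (A ⊕ₗ X) ⊕ₗ B) :=
  fun _ _ h => Sum.Lex.inl_lt_inl_iff.2 (Sum.Lex.inr_lt_inr_iff.2 h)

theorem lexLeft_lt_lexMid (a : A) (x : X) : (lexLeft a : (A ⊕ₗ X) ⊕ₗ B) < lexMid x :=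
  Sum.Lex.inl_lt_inl_iff.2 (Sum.Lex.inl_lt_inr a x)

theorem lexMid_lt_lexRight (x : X) (b : B) : (lexMid x : (A ⊕ₗ X) ⊕ₗ B) < lexRight b :=
  Sum.Lex.inl_lt_inr _ b

theorem Iio_lexLeft_subset (a : A) : Iio (lexLeft a : (A ⊕ₗ X) ⊕ₗ B) ⊆ range lexLeft := by
  rintro ((a' | x) | b) h
  · exact ⟨a', rfl⟩
  · exact absurd (Sum.Lex.inl_lt_inl_iff.1 h) Sum.Lex.not_inr_lt_inl
  · exact absurd h Sum.Lex.not_inr_lt_inl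

theorem Ioi_lexRight_subset (b : B) : Ioi (lexRight b : (A ⊕ₗ X) ⊕ₗ B) ⊆ range lexRight := by
  rintro ((a | x) | b') h
  · exact absurd h Sum.Lex.not_inr_lt_inl
  · exact absurd h Sum.Lex.not_inr_lt_inl
  · exact ⟨b', rfl⟩

theorem range_lexLeft [Nonempty X] :
    range (lexLeft : A → (A ⊕ₗ X) ⊕ₗ B) = {p | ∀ m ∈ range lexMid, p < m} := by
  refine subset_antisymm ?_ fun p h => ?_
  · rintro _ ⟨a, rfl⟩ _ ⟨x, rfl⟩
    exact lexLeft_lt_lexMid a x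
  · obtain ⟨x⟩ := ‹Nonempty X›
    rcases p with ((a | x') | b)
    · exact ⟨a, rfl⟩
    · exact absurd (h _ (mem_range_self x')) (lt_irrefl _)
    · exact absurd (h _ (mem_range_self x)) Sum.Lex.not_inr_lt_inl

theorem range_lexRight [Nonempty X] :
    range (lexRight : B → (A ⊕ₗ X) ⊕ₗ B) = {p | ∀ m ∈ range lexMid, m < p} := by
  refine subset_antisymm ?_ fun p h => ?_
  · rintro _ ⟨b, rfl⟩ _ ⟨x, rfl⟩
    exact lexMid_lt_lexRight x b
  · obtain ⟨x⟩ := ‹Nonempty X›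
    rcases p with ((a | x') | b)
    · exact absurd (h _ (mem_range_self x)) (lexLeft_lt_lexMid a x).asymm
    · exact absurd (h _ (mem_range_self x')) (lt_irrefl _)
    · exact ⟨b, rfl⟩

end LexSum

section Rigidity

variable {A B C D X : Type u} [Preorder A] [Preorder B] [Preorder C] [Preorder D]
  [LinearOrder X] {κ : Cardinal.{u}}

theorem lexMid_mem_range_of_lt_mk (hIio : ∀ x : X, κ < #(Iio x)) (hIoi : ∀ x : X, κ < #(Ioi x))
    (hC : #C ≤ κ) (hD : #D ≤ κ) (f : (A ⊕ₗ X) ⊕ₗ B ≃o (C ⊕ₗ X) ⊕ₗ D) (x : X) :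
    f (lexMid x) ∈ range lexMid := by
  have hfx : StrictMono (f ∘ lexMid) := f.strictMono.comp lexMid_strictMono
  rcases hx : f (lexMid x) with ((c | x') | d)
  · have hle := mk_Iio_le_of_strictMono hfx x
    rw [Function.comp_apply, hx] at hle
    exact absurd (hle.trans ((mk_le_mk_of_subset (Iio_lexLeft_subset c)).trans
      (mk_range_le.trans hC))) (hIio x).not_ge
  · exact ⟨x', rfl⟩
  · have hle := mk_Ioi_le_of_strictMono hfx x
    rw [Function.comp_apply, hx] at hle
    exact absurd (hle.trans ((mk_le_mk_of_subset (Ioi_lexRight_subset d)).trans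
      (mk_range_le.trans hD))) (hIoi x).not_ge

theorem image_range_lexMid_of_lt_mk (hIio : ∀ x : X, κ < #(Iio x))
    (hIoi : ∀ x : X, κ < #(Ioi x)) (hA : #A ≤ κ) (hB : #B ≤ κ) (hC : #C ≤ κ) (hD : #D ≤ κ)
    (f : (A ⊕ₗ X) ⊕ₗ B ≃o (C ⊕ₗ X) ⊕ₗ D) : f '' range lexMid = range lexMid := by
  refine (image_subset_iff.2 ?_).antisymm ?_
  · rintro _ ⟨x, rfl⟩
    exact lexMid_mem_range_of_lt_mk hIio hIoi hC hD f x
  · rintro _ ⟨x, rfl⟩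
    obtain ⟨y, hy⟩ := lexMid_mem_range_of_lt_mk hIio hIoi hA hB f.symm x
    exact ⟨lexMid y, mem_range_self y, by rw [hy, f.apply_symm_apply]⟩

variable [Nonempty X]

theorem image_range_lexLeft (f : (A ⊕ₗ X) ⊕ₗ B ≃o (C ⊕ₗ X) ⊕ₗ D)
    (hf : f '' range lexMid = range lexMid) : f '' range lexLeft = range lexLeft := by
  rw [range_lexLeft, range_lexLeft, f.image_setOf_forall_lt, hf]

theorem image_range_lexRight (f : (A ⊕ₗ X) ⊕ₗ B ≃o (C ⊕ₗ X) ⊕ₗ D)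
    (hf : f '' range lexMid = range lexMid) : f '' range lexRight = range lexRight := by
  rw [range_lexRight, range_lexRight, f.image_setOf_forall_gt, hf]

end Rigidity

/-- **The distinguishing lemma.** For every infinite cardinal `κ` there is a linear order `X`
of cardinality `2 ^ κ` such that (a) for all linear orders `A, B, C, D` of cardinality at most
`κ`, every order isomorphism `f : A + X + B ≃o C + X + D` (lexicographic sums) maps the copy
of `A` onto the copy of `C`, the copy of `X` onto the copy of `X`, and the copy of `B` onto
the copy of `D`; and (b) every nonempty proper initial segment `I` of `X` is order-isomorphic
to a strictly larger initial segment `J` of `X`. -/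
theorem distinguishing_lemma (κ : Cardinal.{u}) (hκ : Cardinal.aleph0 ≤ κ) :
    ∃ X : LinOrd.{u},
      Cardinal.mk ↥X = 2 ^ κ ∧
      (∀ (A B C D : Type u) [LinearOrder A] [LinearOrder B] [LinearOrder C] [LinearOrder D],
        Cardinal.mk A ≤ κ → Cardinal.mk B ≤ κ → Cardinal.mk C ≤ κ → Cardinal.mk D ≤ κ →
        ∀ f : ((A ⊕ₗ ↥X) ⊕ₗ B) ≃o ((C ⊕ₗ ↥X) ⊕ₗ D),
          (⇑f '' Set.range (fun a : A => toLex (Sum.inl (toLex (Sum.inl a))))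
            = Set.range (fun c : C => toLex (Sum.inl (toLex (Sum.inl c))))) ∧
          (⇑f '' Set.range (fun x : ↥X => toLex (Sum.inl (toLex (Sum.inr x))))
            = Set.range (fun x : ↥X => toLex (Sum.inl (toLex (Sum.inr x))))) ∧
          (⇑f '' Set.range (fun b : B => toLex (Sum.inr b))
            = Set.range (fun d : D => toLex (Sum.inr d)))) ∧
      (∀ I : Set ↥X, IsLowerSet I → I.Nonempty → I ≠ Set.univ →
        ∃ J : Set ↥X, IsLowerSet J ∧ I ⊂ J ∧ Nonempty (↥J ≃o ↥I)) := by
  let G := Lex (κ.ord.ToType → ℤ)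
  have hG : #G = 2 ^ κ := by
    rw [show #G = #(κ.ord.ToType → ℤ) from rfl, mk_arrow, mk_int, mk_ord_toType, lift_aleph0,
      lift_uzero]
    exact power_eq_two_power hκ (natCast_lt_aleph0 (n := 2)).le hκ
  have : Infinite G := infinite_iff.2 (hG ▸ hκ.trans (cantor κ).le)
  have hIoi (x : G) : κ < #(Ioi x) := by rw [mk_Ioi_eq, hG]; exact cantor κ
  have hIio (x : G) : κ < #(Iio x) := by rw [mk_Iio_eq_mk_Ioi]; exact hIoi x
  refine ⟨LinOrd.of G, hG, fun A B C D _ _ _ _ hA hB hC hD f => ?_,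
    fun I hI hne hI_ne_univ =>
      hI.exists_ssuperset_orderIso_of_homogeneous exists_orderIso_apply_eq hne hI_ne_univ⟩
  have hmid := image_range_lexMid_of_lt_mk hIio hIoi hA hB hC hD f
  exact ⟨image_range_lexLeft f hmid, hmid, image_range_lexRight f hmid⟩
end

section
/- For all nonempty linear orders A and B, there do not exist a linear order S together with order embeddings f : A → S and g : B → S such that for every linear order T and all order embeddings h : A → T and k : B → T there exists a unique order embedding φ : S → T with φ ∘ f = h and φ ∘ g = k. (That is, no pair of nonempty linear orders has a coproduct in the category of linear orders with strictly order-preserving maps.) -/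
universe u

def inlL (A B : Type u) [LinearOrder A] [LinearOrder B] : A ↪o (A ⊕ₗ B) :=
  OrderEmbedding.ofStrictMono (fun a => toLex (Sum.inl a))
    (fun _ _ h => Sum.Lex.inl_lt_inl_iff.2 h)

def inrL (A B : Type u) [LinearOrder A] [LinearOrder B] : B ↪o (A ⊕ₗ B) :=
  OrderEmbedding.ofStrictMono (fun b => toLex (Sum.inr b))
    (fun _ _ h => Sum.Lex.inr_lt_inr_iff.2 h)

/-- No pair of nonempty linear orders has a coproduct in the category of linear orders
with strictly order-preserving maps: there is no linear order `S` with embeddings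
`f : A ↪o S`, `g : B ↪o S` satisfying the universal property of the coproduct. -/
theorem no_coproduct_of_linear_orders (A B : Type u) [LinearOrder A] [LinearOrder B]
    [Nonempty A] [Nonempty B] :
    ¬ ∃ (S : LinOrd.{u}) (f : A ↪o ↥S) (g : B ↪o ↥S),
        ∀ (T : Type u) [LinearOrder T] (h : A ↪o T) (k : B ↪o T),
          ∃! φ : ↥S ↪o T, (∀ a, φ (f a) = h a) ∧ (∀ b, φ (g b) = k b) := by
  rintro ⟨S, f, g, H⟩
  obtain a := Classical.arbitrary A
  obtain b := Classical.arbitrary B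
  obtain ⟨φ, ⟨hφ1, hφ2⟩, -⟩ := H (A ⊕ₗ B) (inlL A B) (inrL A B)
  obtain ⟨ψ, ⟨hψ1, hψ2⟩, -⟩ := H (B ⊕ₗ A) (inrL B A) (inlL B A)
  have h1 : f a < g b := by
    rw [← φ.lt_iff_lt, hφ1, hφ2]
    exact Sum.Lex.inl_lt_inr a b
  have h2 : g b < f a := by
    rw [← ψ.lt_iff_lt, hψ1, hψ2]
    exact Sum.Lex.inl_lt_inr b a
  exact absurd h1 (not_lt_of_gt h2)
end

section
/- Let Σ be a regular, associative, semi-standard sum operation on linear orders. Then either Σ(A,B) is order-isomorphic to A + B for all linear orders A, B, or Σ(A,B) is order-isomorphic to B + A for all linear orders A, B. -/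
universe u

/-- The `≤` relation underlying an explicitly given linear order. -/
def LO.le {α : Type u} (i : LinearOrder α) : LE α := i.toPartialOrder.toPreorder.toLE

/-- The `<` relation underlying an explicitly given linear order. -/
def LO.lt {α : Type u} (i : LinearOrder α) : α → α → Prop := i.toPartialOrder.toPreorder.toLT.lt

/-- A *sum operation* on linear orders: it assigns to every pair of linear orders `A`, `B`
a linear order on the disjoint union `A ⊕ B` whose restriction to `A` is the order of `A`
and whose restriction to `B` is the order of `B`. -/
structure SumOp : Type (u + 1) where
  ord : ∀ (A B : Type u) [LinearOrder A] [LinearOrder B], LinearOrder (A ⊕ B)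
  restrict_left : ∀ (A B : Type u) [iA : LinearOrder A] [LinearOrder B] (a a' : A),
    LO.lt (ord A B) (Sum.inl a) (Sum.inl a') ↔ LO.lt iA a a'
  restrict_right : ∀ (A B : Type u) [LinearOrder A] [iB : LinearOrder B] (b b' : B),
    LO.lt (ord A B) (Sum.inr b) (Sum.inr b') ↔ LO.lt iB b b'

/-- A sum operation is *regular* if isomorphic inputs yield isomorphic outputs. -/
def SumOp.Regular (S : SumOp.{u}) : Prop :=
  ∀ (A A' B B' : Type u) [LinearOrder A] [LinearOrder A'] [LinearOrder B] [LinearOrder B'],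
    Nonempty (A ≃o A') → Nonempty (B ≃o B') →
    Nonempty (@OrderIso (A ⊕ B) (A' ⊕ B') (LO.le (S.ord A B)) (LO.le (S.ord A' B')))

/-- A sum operation is *associative* if `Σ(Σ(A,B),C)` is always isomorphic to `Σ(A,Σ(B,C))`,
where the inner sums carry the orders produced by the operation itself. -/
def SumOp.Assoc (S : SumOp.{u}) : Prop :=
  ∀ (A B C : Type u) [LinearOrder A] [LinearOrder B] [LinearOrder C],
    Nonempty (@OrderIso ((A ⊕ B) ⊕ C) (A ⊕ (B ⊕ C))
      (LO.le (@SumOp.ord S (A ⊕ B) C (S.ord A B) _))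
      (LO.le (@SumOp.ord S A (B ⊕ C) _ (S.ord B C))))

/-- A sum operation is *semi-standard* if in `Σ(A,B)` both the copy of `A` and the copy of
`B` are convex. -/
def SumOp.SemiStandard (S : SumOp.{u}) : Prop :=
  ∀ (A B : Type u) [LinearOrder A] [LinearOrder B],
    (∀ (a a' : A) (x : A ⊕ B), LO.lt (S.ord A B) (Sum.inl a) x →
      LO.lt (S.ord A B) x (Sum.inl a') → ∃ a'' : A, x = Sum.inl a'') ∧
    (∀ (b b' : B) (x : A ⊕ B), LO.lt (S.ord A B) (Sum.inr b) x →
      LO.lt (S.ord A B) x (Sum.inr b') → ∃ b'' : B, x = Sum.inr b'')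

noncomputable section SemiStdAux

open Sum Set Cardinal Ordinal

/-- Build an order isomorphism from an equivalence that preserves `<`. -/
def ltIso {α β : Type u} [LinearOrder α] [LinearOrder β] (e : α ≃ β)
    (h : ∀ a b : α, e a < e b ↔ a < b) : α ≃o β where
  toEquiv := e
  map_rel_iff' := by
    intro a b
    constructor
    · intro hle
      by_contra hba
      exact absurd ((h b a).2 (lt_of_not_ge hba)) (not_lt.2 hle)
    · intro hle
      by_contra hba
      exact absurd ((h b a).1 (lt_of_not_ge hba)) (not_lt.2 hle)

/-- Congruence of lexicographic sums of order isos. -/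
def lexCongr {α β γ δ : Type u} [LinearOrder α] [LinearOrder β] [LinearOrder γ] [LinearOrder δ]
    (e₁ : α ≃o γ) (e₂ : β ≃o δ) : (α ⊕ₗ β) ≃o (γ ⊕ₗ δ) :=
  ltIso (show (α ⊕ₗ β) ≃ (γ ⊕ₗ δ) from Equiv.sumCongr e₁.toEquiv e₂.toEquiv) (by
    rintro (a | b) (a' | b')
    · show toLex (Sum.inl (e₁ a)) < toLex (Sum.inl (e₁ a')) ↔
        toLex (Sum.inl a) < toLex (Sum.inl a')
      rw [Sum.Lex.inl_lt_inl_iff, Sum.Lex.inl_lt_inl_iff]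
      exact e₁.lt_iff_lt
    · show toLex (Sum.inl (e₁ a)) < toLex (Sum.inr (e₂ b')) ↔
        toLex (Sum.inl a) < toLex (Sum.inr b')
      exact iff_of_true (Sum.Lex.inl_lt_inr _ _) (Sum.Lex.inl_lt_inr _ _)
    · show toLex (Sum.inr (e₂ b)) < toLex (Sum.inl (e₁ a')) ↔
        toLex (Sum.inr b) < toLex (Sum.inl a')
      exact iff_of_false Sum.Lex.not_inr_lt_inl Sum.Lex.not_inr_lt_inl
    · show toLex (Sum.inr (e₂ b)) < toLex (Sum.inr (e₂ b')) ↔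
        toLex (Sum.inr b) < toLex (Sum.inr b')
      rw [Sum.Lex.inr_lt_inr_iff, Sum.Lex.inr_lt_inr_iff]
      exact e₂.lt_iff_lt)

theorem lo_lt_asymm {α : Type u} {i : LinearOrder α} {a b : α} (h : LO.lt i a b) :
    ¬ LO.lt i b a :=
  @lt_asymm α i.toPartialOrder.toPreorder a b h

/-- `Σ(A,B)` puts all of `A` before all of `B`. -/
def SumOp.Pos (S : SumOp.{u}) (A B : Type u) [LinearOrder A] [LinearOrder B] : Prop :=
  ∀ (a : A) (b : B), LO.lt (S.ord A B) (Sum.inl a) (Sum.inr b)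

/-- `Σ(A,B)` puts all of `B` before all of `A`. -/
def SumOp.Neg (S : SumOp.{u}) (A B : Type u) [LinearOrder A] [LinearOrder B] : Prop :=
  ∀ (a : A) (b : B), LO.lt (S.ord A B) (Sum.inr b) (Sum.inl a)

theorem SumOp.pos_or_neg (S : SumOp.{u}) (hss : S.SemiStandard) (A B : Type u)
    [LinearOrder A] [LinearOrder B] [Nonempty A] [Nonempty B] :
    S.Pos A B ∨ S.Neg A B := by
  letI := S.ord A B
  have tri : ∀ (a : A) (b : B), LO.lt (S.ord A B) (Sum.inl a) (Sum.inr b) ∨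
      LO.lt (S.ord A B) (Sum.inr b) (Sum.inl a) := by
    intro a b
    rcases lt_trichotomy (Sum.inl a : A ⊕ B) (Sum.inr b) with h | h | h
    · exact Or.inl h
    · exact absurd h (by simp)
    · exact Or.inr h
  obtain ⟨a₀⟩ := ‹Nonempty A›
  obtain ⟨b₀⟩ := ‹Nonempty B›
  rcases tri a₀ b₀ with h | h
  · left
    intro a b
    rcases tri a b with h' | h'
    · exact h'
    · exfalso
      rcases tri a₀ b with h'' | h''
      · obtain ⟨a'', ha''⟩ := (hss A B).1 a₀ a (Sum.inr b) h'' h'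
        exact Sum.inr_ne_inl ha''
      · obtain ⟨b'', hb''⟩ := (hss A B).2 b b₀ (Sum.inl a₀) h'' h
        exact Sum.inl_ne_inr hb''
  · right
    intro a b
    rcases tri a b with h' | h'
    · exfalso
      rcases tri a₀ b with h'' | h''
      · obtain ⟨b'', hb''⟩ := (hss A B).2 b₀ b (Sum.inl a₀) h h''
        exact Sum.inl_ne_inr hb''
      · obtain ⟨a'', ha''⟩ := (hss A B).1 a a₀ (Sum.inr b) h' h''
        exact Sum.inr_ne_inl ha''
    · exact h'

/-- If `Σ(A,B)` is positively oriented, it is the lexicographic sum. -/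
def SumOp.posIso (S : SumOp.{u}) (A B : Type u) [LinearOrder A] [LinearOrder B]
    (h : S.Pos A B) :
    @OrderIso (A ⊕ B) (A ⊕ₗ B) (LO.le (S.ord A B)) _ :=
  letI := S.ord A B
  ltIso (toLex : (A ⊕ B) ≃ (A ⊕ₗ B)) (by
    rintro (a | b) (a' | b')
    · rw [Sum.Lex.inl_lt_inl_iff]
      exact (S.restrict_left A B a a').symm
    · exact iff_of_true (Sum.Lex.inl_lt_inr _ _) (h a b')
    · exact iff_of_false Sum.Lex.not_inr_lt_inl (lo_lt_asymm (h a' b))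
    · rw [Sum.Lex.inr_lt_inr_iff]
      exact (S.restrict_right A B b b').symm)

/-- If `Σ(A,B)` is negatively oriented, it is the reversed lexicographic sum. -/
def SumOp.negIso (S : SumOp.{u}) (A B : Type u) [LinearOrder A] [LinearOrder B]
    (h : S.Neg A B) :
    @OrderIso (A ⊕ B) (B ⊕ₗ A) (LO.le (S.ord A B)) _ :=
  letI := S.ord A B
  ltIso ((Equiv.sumComm A B).trans (toLex : (B ⊕ A) ≃ (B ⊕ₗ A))) (by
    rintro (a | b) (a' | b')
    · show toLex (Sum.inr a) < toLex (Sum.inr a') ↔ _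
      rw [Sum.Lex.inr_lt_inr_iff]
      exact (S.restrict_left A B a a').symm
    · show toLex (Sum.inr a) < toLex (Sum.inl b') ↔ _
      exact iff_of_false Sum.Lex.not_inr_lt_inl (lo_lt_asymm (h a b'))
    · show toLex (Sum.inl b) < toLex (Sum.inr a') ↔ _
      exact iff_of_true (Sum.Lex.inl_lt_inr _ _) (h a' b)
    · show toLex (Sum.inl b) < toLex (Sum.inl b') ↔ _
      rw [Sum.Lex.inl_lt_inl_iff]
      exact (S.restrict_right A B b b').symm)

/-! ### Coinitiality and cofinality invariants -/

/-- `W` has a coinitial subset of size at most `μ`. -/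
def Coinit (W : Type u) [LinearOrder W] (μ : Cardinal.{u}) : Prop :=
  ∃ T : Set W, (∀ y, ∃ x ∈ T, x ≤ y) ∧ #T ≤ μ

/-- `W` has a cofinal subset of size at most `μ`. -/
def Cofin (W : Type u) [LinearOrder W] (μ : Cardinal.{u}) : Prop :=
  ∃ T : Set W, (∀ y, ∃ x ∈ T, y ≤ x) ∧ #T ≤ μ

theorem coinit_of_card {W : Type u} [LinearOrder W] {μ : Cardinal.{u}} (h : #W ≤ μ) :
    Coinit W μ :=
  ⟨Set.univ, fun y => ⟨y, trivial, le_rfl⟩, le_trans (by rw [mk_univ]) h⟩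

theorem cofin_of_card {W : Type u} [LinearOrder W] {μ : Cardinal.{u}} (h : #W ≤ μ) :
    Cofin W μ :=
  ⟨Set.univ, fun y => ⟨y, trivial, le_rfl⟩, le_trans (by rw [mk_univ]) h⟩

theorem Coinit.of_iso {W W' : Type u} [LinearOrder W] [LinearOrder W'] {μ : Cardinal.{u}}
    (h : Coinit W μ) (e : W ≃o W') : Coinit W' μ := by
  obtain ⟨T, hT, hc⟩ := h
  refine ⟨e '' T, fun y => ?_, mk_image_le.trans hc⟩
  obtain ⟨x, hx, hxy⟩ := hT (e.symm y)
  refine ⟨e x, ⟨x, hx, rfl⟩, ?_⟩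
  have := e.monotone hxy
  rwa [e.apply_symm_apply] at this

theorem Cofin.of_iso {W W' : Type u} [LinearOrder W] [LinearOrder W'] {μ : Cardinal.{u}}
    (h : Cofin W μ) (e : W ≃o W') : Cofin W' μ := by
  obtain ⟨T, hT, hc⟩ := h
  refine ⟨e '' T, fun y => ?_, mk_image_le.trans hc⟩
  obtain ⟨x, hx, hxy⟩ := hT (e.symm y)
  refine ⟨e x, ⟨x, hx, rfl⟩, ?_⟩
  have := e.monotone hxy
  rwa [e.apply_symm_apply] at this

theorem coinit_lex_left {X Y : Type u} [LinearOrder X] [LinearOrder Y] [Nonempty X]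
    {μ : Cardinal.{u}} (h : Coinit X μ) : Coinit (X ⊕ₗ Y) μ := by
  obtain ⟨T, hT, hc⟩ := h
  refine ⟨(fun x => toLex (Sum.inl x)) '' T, ?_, mk_image_le.trans hc⟩
  rintro (x | b)
  · obtain ⟨x', hx', hle⟩ := hT x
    exact ⟨toLex (Sum.inl x'), ⟨x', hx', rfl⟩, Sum.Lex.inl_le_inl_iff.2 hle⟩
  · obtain ⟨x', hx', _⟩ := hT (Classical.arbitrary X)
    exact ⟨toLex (Sum.inl x'), ⟨x', hx', rfl⟩, Sum.Lex.inl_le_inr _ _⟩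

theorem cofin_lex_right {X Y : Type u} [LinearOrder X] [LinearOrder Y] [Nonempty Y]
    {μ : Cardinal.{u}} (h : Cofin Y μ) : Cofin (X ⊕ₗ Y) μ := by
  obtain ⟨T, hT, hc⟩ := h
  refine ⟨(fun y => toLex (Sum.inr y)) '' T, ?_, mk_image_le.trans hc⟩
  rintro (a | y)
  · obtain ⟨y', hy', _⟩ := hT (Classical.arbitrary Y)
    exact ⟨toLex (Sum.inr y'), ⟨y', hy', rfl⟩, Sum.Lex.inl_le_inr _ _⟩
  · obtain ⟨y', hy', hle⟩ := hT y
    exact ⟨toLex (Sum.inr y'), ⟨y', hy', rfl⟩, Sum.Lex.inr_le_inr_iff.2 hle⟩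

theorem coinit_lex_projL {X Y : Type u} [LinearOrder X] [LinearOrder Y] {μ : Cardinal.{u}}
    (h : Coinit (X ⊕ₗ Y) μ) : Coinit X μ := by
  obtain ⟨T, hT, hc⟩ := h
  refine ⟨{x | toLex (Sum.inl x) ∈ T}, ?_, ?_⟩
  · intro x
    obtain ⟨z, hz, hle⟩ := hT (toLex (Sum.inl x))
    rcases z with x' | y'
    · exact ⟨x', hz, Sum.Lex.inl_le_inl_iff.1 hle⟩
    · exact absurd hle Sum.Lex.not_inr_le_inl
  · refine le_trans (mk_le_of_injective
      (f := fun x : {x : X | toLex (Sum.inl x) ∈ T} => (⟨toLex (Sum.inl x.1), x.2⟩ : T)) ?_) hc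
    intro x x' hxx
    apply Subtype.ext
    have := congrArg Subtype.val hxx
    exact Sum.inl_injective (by exact this)

theorem cofin_lex_projR {X Y : Type u} [LinearOrder X] [LinearOrder Y] {μ : Cardinal.{u}}
    (h : Cofin (X ⊕ₗ Y) μ) : Cofin Y μ := by
  obtain ⟨T, hT, hc⟩ := h
  refine ⟨{y | toLex (Sum.inr y) ∈ T}, ?_, ?_⟩
  · intro y
    obtain ⟨z, hz, hle⟩ := hT (toLex (Sum.inr y))
    rcases z with x' | y'
    · exact absurd hle Sum.Lex.not_inr_le_inl
    · exact ⟨y', hz, Sum.Lex.inr_le_inr_iff.1 hle⟩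
  · refine le_trans (mk_le_of_injective
      (f := fun y : {y : Y | toLex (Sum.inr y) ∈ T} => (⟨toLex (Sum.inr y.1), y.2⟩ : T)) ?_) hc
    intro y y' hyy
    apply Subtype.ext
    have := congrArg Subtype.val hyy
    exact Sum.inr_injective (by exact this)

/-! ### The `SmallLow` and `SmallUp` invariants -/

/-- Elements with fewer than `κ` predecessors. -/
def SmallLow (κ : Cardinal.{u}) (W : Type u) [LinearOrder W] : Set W := {x | #(Iio x) < κ}

/-- Elements with fewer than `κ` successors. -/
def SmallUp (κ : Cardinal.{u}) (W : Type u) [LinearOrder W] : Set W := {x | #(Ioi x) < κ}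

theorem mk_Iio_orderIso {W W' : Type u} [LinearOrder W] [LinearOrder W'] (e : W ≃o W')
    (x : W) : #(Iio (e x)) = #(Iio x) := by
  refine Cardinal.mk_congr ⟨fun y => ⟨e.symm y.1, ?_⟩, fun z => ⟨e z.1, ?_⟩, ?_, ?_⟩
  · have := e.symm.strictMono y.2
    simpa using this
  · exact e.strictMono z.2
  · intro y; apply Subtype.ext; simp
  · intro z; apply Subtype.ext; simp

theorem mk_Ioi_orderIso {W W' : Type u} [LinearOrder W] [LinearOrder W'] (e : W ≃o W')
    (x : W) : #(Ioi (e x)) = #(Ioi x) := by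
  refine Cardinal.mk_congr ⟨fun y => ⟨e.symm y.1, ?_⟩, fun z => ⟨e z.1, ?_⟩, ?_, ?_⟩
  · have := e.symm.strictMono y.2
    simpa using this
  · exact e.strictMono z.2
  · intro y; apply Subtype.ext; simp
  · intro z; apply Subtype.ext; simp

def smallLowMapIso {W W' : Type u} [LinearOrder W] [LinearOrder W'] {κ : Cardinal.{u}}
    (e : W ≃o W') : ↥(SmallLow κ W) ≃o ↥(SmallLow κ W') where
  toFun x := ⟨e x.1, show #(Iio (e x.1)) < κ by rw [mk_Iio_orderIso e]; exact x.2⟩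
  invFun y := ⟨e.symm y.1, show #(Iio (e.symm y.1)) < κ by
    rw [mk_Iio_orderIso e.symm]; exact y.2⟩
  left_inv x := by apply Subtype.ext; simp
  right_inv y := by apply Subtype.ext; simp
  map_rel_iff' := by
    intro a b
    show e a.1 ≤ e b.1 ↔ (a : W) ≤ b
    exact e.le_iff_le

def smallUpMapIso {W W' : Type u} [LinearOrder W] [LinearOrder W'] {κ : Cardinal.{u}}
    (e : W ≃o W') : ↥(SmallUp κ W) ≃o ↥(SmallUp κ W') where
  toFun x := ⟨e x.1, show #(Ioi (e x.1)) < κ by rw [mk_Ioi_orderIso e]; exact x.2⟩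
  invFun y := ⟨e.symm y.1, show #(Ioi (e.symm y.1)) < κ by
    rw [mk_Ioi_orderIso e.symm]; exact y.2⟩
  left_inv x := by apply Subtype.ext; simp
  right_inv y := by apply Subtype.ext; simp
  map_rel_iff' := by
    intro a b
    show e a.1 ≤ e b.1 ↔ (a : W) ≤ b
    exact e.le_iff_le

theorem smallLow_inl {X Y : Type u} [LinearOrder X] [LinearOrder Y] {κ : Cardinal.{u}}
    (hX : #X < κ) (x : X) : (toLex (Sum.inl x) : X ⊕ₗ Y) ∈ SmallLow κ (X ⊕ₗ Y) := by
  have hsub : Iio (toLex (Sum.inl x) : X ⊕ₗ Y) ⊆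
      Set.range (fun x' : X => (toLex (Sum.inl x') : X ⊕ₗ Y)) := by
    rintro (x' | y') hz
    · exact ⟨x', rfl⟩
    · exact absurd hz Sum.Lex.not_inr_lt_inl
  exact lt_of_le_of_lt ((mk_le_mk_of_subset hsub).trans mk_range_le) hX

theorem smallLow_not_inr {X Y : Type u} [LinearOrder X] [LinearOrder Y] {κ : Cardinal.{u}}
    (hY : ∀ y : Y, κ ≤ #(Iio y)) (y : Y) :
    (toLex (Sum.inr y) : X ⊕ₗ Y) ∉ SmallLow κ (X ⊕ₗ Y) := by
  intro hmem
  have hinj : κ ≤ #(Iio (toLex (Sum.inr y) : X ⊕ₗ Y)) := by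
    refine (hY y).trans (mk_le_of_injective (f := fun z : Iio y =>
      (⟨toLex (Sum.inr z.1), Sum.Lex.inr_lt_inr_iff.2 z.2⟩ :
        Iio (toLex (Sum.inr y) : X ⊕ₗ Y))) ?_)
    intro z z' hzz
    apply Subtype.ext
    have := congrArg Subtype.val hzz
    exact Sum.inr_injective (by exact this)
  exact absurd hmem (not_lt.2 hinj)

theorem smallUp_inr {X Y : Type u} [LinearOrder X] [LinearOrder Y] {κ : Cardinal.{u}}
    (hY : #Y < κ) (y : Y) : (toLex (Sum.inr y) : X ⊕ₗ Y) ∈ SmallUp κ (X ⊕ₗ Y) := by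
  have hsub : Ioi (toLex (Sum.inr y) : X ⊕ₗ Y) ⊆
      Set.range (fun y' : Y => (toLex (Sum.inr y') : X ⊕ₗ Y)) := by
    rintro (x' | y') hz
    · exact absurd hz Sum.Lex.not_inr_lt_inl
    · exact ⟨y', rfl⟩
  exact lt_of_le_of_lt ((mk_le_mk_of_subset hsub).trans mk_range_le) hY

theorem smallUp_not_inl {X Y : Type u} [LinearOrder X] [LinearOrder Y] {κ : Cardinal.{u}}
    (hX : ∀ x : X, κ ≤ #(Ioi x)) (x : X) :
    (toLex (Sum.inl x) : X ⊕ₗ Y) ∉ SmallUp κ (X ⊕ₗ Y) := by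
  intro hmem
  have hinj : κ ≤ #(Ioi (toLex (Sum.inl x) : X ⊕ₗ Y)) := by
    refine (hX x).trans (mk_le_of_injective (f := fun z : Ioi x =>
      (⟨toLex (Sum.inl z.1), Sum.Lex.inl_lt_inl_iff.2 z.2⟩ :
        Ioi (toLex (Sum.inl x) : X ⊕ₗ Y))) ?_)
    intro z z' hzz
    apply Subtype.ext
    have := congrArg Subtype.val hzz
    exact Sum.inl_injective (by exact this)
  exact absurd hmem (not_lt.2 hinj)

def smallLowLeftIso (κ : Cardinal.{u}) (X G : Type u) [LinearOrder X] [LinearOrder G]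
    (hX : #X < κ) (hG : ∀ g : G, κ ≤ #(Iio g)) :
    X ≃o ↥(SmallLow κ (X ⊕ₗ G)) := by
  refine StrictMono.orderIsoOfSurjective
    (fun x => ⟨toLex (Sum.inl x), smallLow_inl hX x⟩) ?_ ?_
  · intro a b h
    exact Subtype.mk_lt_mk.2 (Sum.Lex.inl_lt_inl_iff.2 h)
  · rintro ⟨(x | g), hz⟩
    · exact ⟨x, Subtype.ext rfl⟩
    · exact absurd hz (smallLow_not_inr hG g)

def smallUpRightIso (κ : Cardinal.{u}) (G X : Type u) [LinearOrder G] [LinearOrder X]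
    (hX : #X < κ) (hG : ∀ g : G, κ ≤ #(Ioi g)) :
    X ≃o ↥(SmallUp κ (G ⊕ₗ X)) := by
  refine StrictMono.orderIsoOfSurjective
    (fun x => ⟨toLex (Sum.inr x), smallUp_inr hX x⟩) ?_ ?_
  · intro a b h
    exact Subtype.mk_lt_mk.2 (Sum.Lex.inr_lt_inr_iff.2 h)
  · rintro ⟨(g | x), hz⟩
    · exact absurd hz (smallUp_not_inl hG g)
    · exact ⟨x, Subtype.ext rfl⟩

/-! ### The rigid letters built from regular cardinals -/

/-- The canonical linear order of size `c`. -/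
abbrev OT (c : Cardinal.{u}) : Type u := c.ord.ToType

/-- The "valley" order: a reversed copy of `c` followed by a copy of `c`. -/
abbrev Gam (c : Cardinal.{u}) : Type u := (OT c)ᵒᵈ ⊕ₗ OT c

theorem OT_nonempty {c : Cardinal.{u}} (hc : ℵ₀ ≤ c) : Nonempty (OT c) := by
  refine Ordinal.toType_nonempty_iff_ne_zero.2 fun h => ?_
  have hc0 : c ≠ 0 := (Cardinal.aleph0_pos.trans_le hc).ne'
  have := congrArg Ordinal.card h
  rw [Cardinal.card_ord] at this
  simp only [Ordinal.card_zero] at this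
  exact hc0 this

instance {c : Cardinal.{u}} : LinearOrder (Gam c) := Sum.Lex.linearOrder

theorem gam_nonempty {c : Cardinal.{u}} (hc : ℵ₀ ≤ c) : Nonempty (Gam c) := by
  obtain ⟨x⟩ := OT_nonempty hc
  exact ⟨toLex (Sum.inl (OrderDual.toDual x))⟩

theorem cofinal_big {c : Cardinal.{u}} (hreg : c.IsRegular) (T : Set (OT c))
    (hT : ∀ y, ∃ x ∈ T, y ≤ x) : c ≤ #T := by
  have hub : Set.Unbounded ((· < ·) : OT c → OT c → Prop) T := by
    intro y
    obtain ⟨x, hx, hyx⟩ := hT y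
    exact ⟨x, hx, not_lt.2 hyx⟩
  haveI : IsWellOrder (OT c) (· < ·) := isWellOrder_lt
  have h2 := Ordinal.cof_type_le (s := T) hT
  rwa [Ordinal.cof_toType, hreg.cof_eq] at h2

theorem mk_OT (c : Cardinal.{u}) : #(OT c) = c := by
  rw [Cardinal.mk_toType, Cardinal.card_ord]

theorem ioi_big {c : Cardinal.{u}} (hc : ℵ₀ ≤ c) (x : OT c) : c ≤ #(Ioi x) := by
  by_contra hlt
  push_neg at hlt
  have h1 : #(Iio x) < c := Cardinal.mk_Iio_ord_toType x
  have hsub : (Set.univ : Set (OT c)) ⊆ (Iio x ∪ Ioi x) ∪ {x} := by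
    intro z _
    rcases lt_trichotomy z x with h | h | h
    · exact Or.inl (Or.inl h)
    · exact Or.inr (by simp [h])
    · exact Or.inl (Or.inr h)
  have hle : c ≤ #(Iio x) + #(Ioi x) + #({x} : Set (OT c)) := by
    calc c = #(Set.univ : Set (OT c)) := by rw [mk_univ, mk_OT]
    _ ≤ #(((Iio x ∪ Ioi x) ∪ {x} : Set (OT c))) := mk_le_mk_of_subset hsub
    _ ≤ #((Iio x ∪ Ioi x : Set (OT c))) + #({x} : Set (OT c)) := mk_union_le _ _
    _ ≤ #(Iio x) + #(Ioi x) + #({x} : Set (OT c)) :=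
        add_le_add_left (mk_union_le _ _) _
  have hxlt : #({x} : Set (OT c)) < c := by
    rw [mk_singleton]
    exact lt_of_lt_of_le Cardinal.one_lt_aleph0 hc
  exact absurd hle (not_le.2 (Cardinal.add_lt_of_lt hc (Cardinal.add_lt_of_lt hc h1 hlt) hxlt))

theorem gam_iio_big {c : Cardinal.{u}} (hc : ℵ₀ ≤ c) (g : Gam c) : c ≤ #(Iio g) := by
  rcases g with a | b
  · refine (ioi_big hc (OrderDual.ofDual a)).trans (mk_le_of_injective
      (f := fun y : Ioi (OrderDual.ofDual a) =>
        (⟨toLex (Sum.inl (OrderDual.toDual y.1)), Sum.Lex.inl_lt_inl_iff.2 y.2⟩ :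
          Iio (toLex (Sum.inl a) : Gam c))) ?_)
    intro y y' hyy
    apply Subtype.ext
    have := congrArg Subtype.val hyy
    exact Sum.inl_injective (by exact this)
  · refine le_trans (le_of_eq (mk_OT c).symm) (mk_le_of_injective
      (f := fun x : OT c =>
        (⟨toLex (Sum.inl (OrderDual.toDual x)), Sum.Lex.inl_lt_inr _ _⟩ :
          Iio (toLex (Sum.inr b) : Gam c))) ?_)
    intro x x' hxx
    have := congrArg Subtype.val hxx
    exact Sum.inl_injective (by exact this)

theorem gam_ioi_big {c : Cardinal.{u}} (hc : ℵ₀ ≤ c) (g : Gam c) : c ≤ #(Ioi g) := by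
  rcases g with a | b
  · refine le_trans (le_of_eq (mk_OT c).symm) (mk_le_of_injective
      (f := fun x : OT c =>
        (⟨toLex (Sum.inr x), Sum.Lex.inl_lt_inr _ _⟩ :
          Ioi (toLex (Sum.inl a) : Gam c))) ?_)
    intro x x' hxx
    have := congrArg Subtype.val hxx
    exact Sum.inr_injective (by exact this)
  · refine (ioi_big hc b).trans (mk_le_of_injective
      (f := fun y : Ioi b =>
        (⟨toLex (Sum.inr y.1), Sum.Lex.inr_lt_inr_iff.2 y.2⟩ :
          Ioi (toLex (Sum.inr b) : Gam c))) ?_)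
    intro y y' hyy
    apply Subtype.ext
    have := congrArg Subtype.val hyy
    exact Sum.inr_injective (by exact this)

theorem gam_coinit {c : Cardinal.{u}} (hc : ℵ₀ ≤ c) : Coinit (Gam c) c := by
  refine ⟨Set.range (fun a : (OT c)ᵒᵈ => (toLex (Sum.inl a) : Gam c)), ?_, ?_⟩
  · rintro (a | b)
    · exact ⟨toLex (Sum.inl a), ⟨a, rfl⟩, le_refl _⟩
    · obtain ⟨x⟩ := OT_nonempty hc
      exact ⟨toLex (Sum.inl (OrderDual.toDual x)), ⟨_, rfl⟩, Sum.Lex.inl_le_inr _ _⟩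
  · refine mk_range_le.trans (le_of_eq ?_)
    rw [show #((OT c)ᵒᵈ) = #(OT c) from Cardinal.mk_congr (OrderDual.ofDual), mk_OT]

theorem gam_cofin {c : Cardinal.{u}} (hc : ℵ₀ ≤ c) : Cofin (Gam c) c := by
  refine ⟨Set.range (fun b : OT c => (toLex (Sum.inr b) : Gam c)), ?_, ?_⟩
  · rintro (a | b)
    · obtain ⟨x⟩ := OT_nonempty hc
      exact ⟨toLex (Sum.inr x), ⟨_, rfl⟩, Sum.Lex.inl_le_inr _ _⟩
    · exact ⟨toLex (Sum.inr b), ⟨b, rfl⟩, le_refl _⟩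
  · exact mk_range_le.trans (le_of_eq (mk_OT c))

theorem gam_not_coinit {c μ : Cardinal.{u}} (hreg : c.IsRegular) (hμ : μ < c) :
    ¬ Coinit (Gam c) μ := by
  intro h
  obtain ⟨T, hT, hc'⟩ := coinit_lex_projL h
  set T' : Set (OT c) := {x | OrderDual.toDual x ∈ T} with hT'def
  have hcof : ∀ y : OT c, ∃ x ∈ T', y ≤ x := by
    intro y
    obtain ⟨x, hx, hxy⟩ := hT (OrderDual.toDual y)
    exact ⟨OrderDual.ofDual x, hx, hxy⟩
  have hbig : c ≤ #T' := cofinal_big hreg T' hcof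
  have hsmall : #T' ≤ μ := by
    refine le_trans (mk_le_of_injective
      (f := fun x : T' => (⟨OrderDual.toDual x.1, x.2⟩ : T)) ?_) hc'
    intro x x' hxx
    apply Subtype.ext
    exact congrArg Subtype.val hxx
  exact absurd (hbig.trans hsmall) (not_le.2 hμ)

theorem gam_not_cofin {c μ : Cardinal.{u}} (hreg : c.IsRegular) (hμ : μ < c) :
    ¬ Cofin (Gam c) μ := by
  intro h
  obtain ⟨T, hT, hc'⟩ := cofin_lex_projR h
  have hbig : c ≤ #T := cofinal_big hreg T hT
  exact absurd (hbig.trans hc') (not_le.2 hμ)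

/-! ### The propagation lemmas -/

theorem f4pos (S : SumOp.{u}) (hassoc : S.Assoc) (hss : S.SemiStandard)
    {μ κ : Cardinal.{u}}
    (X G G' : Type u) [LinearOrder X] [LinearOrder G] [LinearOrder G']
    [Nonempty X] [Nonempty G] [Nonempty G']
    (hCoiX : Coinit X μ) (hCofX : Cofin X μ)
    (hCoiG : Coinit G κ) (hCofG : Cofin G κ)
    (hnCoiG : ¬ Coinit G μ) (hnCofG : ¬ Cofin G μ)
    (hnCoiG'μ : ¬ Coinit G' μ) (hnCoiG'κ : ¬ Coinit G' κ)
    (hnCofG'μ : ¬ Cofin G' μ) (hnCofG'κ : ¬ Cofin G' κ)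
    (hs : S.Pos G G') : S.Pos X G := by
  rcases S.pos_or_neg hss X G with hp | hp
  · exact hp
  exfalso
  letI i1 : LinearOrder (X ⊕ G) := S.ord X G
  letI i3 : LinearOrder (G ⊕ G') := S.ord G G'
  haveI : Nonempty (X ⊕ G) := ⟨Sum.inl (Classical.arbitrary X)⟩
  haveI : Nonempty (G ⊕ G') := ⟨Sum.inl (Classical.arbitrary G)⟩
  haveI : Nonempty (G ⊕ₗ G') := ⟨toLex (Sum.inl (Classical.arbitrary G))⟩
  haveI : Nonempty (G ⊕ₗ X) := ⟨toLex (Sum.inl (Classical.arbitrary G))⟩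
  obtain ⟨Φ⟩ := hassoc X G G'
  have eIn := S.negIso X G hp
  have eS := S.posIso G G' hs
  rcases S.pos_or_neg hss (X ⊕ G) G' with hq | hq <;>
    rcases S.pos_or_neg hss X (G ⊕ G') with hr | hr
  · -- q Pos, r Pos
    have ΨL := RelIso.trans (S.posIso (X ⊕ G) G' hq) (lexCongr eIn (OrderIso.refl G'))
    have ΨR := RelIso.trans (S.posIso X (G ⊕ G') hr) (lexCongr (OrderIso.refl X) eS)
    have e : ((G ⊕ₗ X) ⊕ₗ G') ≃o (X ⊕ₗ (G ⊕ₗ G')) := RelIso.trans (RelIso.trans (RelIso.symm ΨL) Φ) ΨR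
    exact hnCoiG (coinit_lex_projL (coinit_lex_projL
      ((coinit_lex_left hCoiX).of_iso e.symm)))
  · -- q Pos, r Neg
    have ΨL := RelIso.trans (S.posIso (X ⊕ G) G' hq) (lexCongr eIn (OrderIso.refl G'))
    have ΨR := RelIso.trans (S.negIso X (G ⊕ G') hr) (lexCongr eS (OrderIso.refl X))
    have e : ((G ⊕ₗ X) ⊕ₗ G') ≃o ((G ⊕ₗ G') ⊕ₗ X) := RelIso.trans (RelIso.trans (RelIso.symm ΨL) Φ) ΨR
    exact hnCofG'μ (cofin_lex_projR ((cofin_lex_right hCofX).of_iso e.symm))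
  · -- q Neg, r Pos
    have ΨL := RelIso.trans (S.negIso (X ⊕ G) G' hq) (lexCongr (OrderIso.refl G') eIn)
    have ΨR := RelIso.trans (S.posIso X (G ⊕ G') hr) (lexCongr (OrderIso.refl X) eS)
    have e : (G' ⊕ₗ (G ⊕ₗ X)) ≃o (X ⊕ₗ (G ⊕ₗ G')) := RelIso.trans (RelIso.trans (RelIso.symm ΨL) Φ) ΨR
    exact hnCoiG'μ (coinit_lex_projL ((coinit_lex_left hCoiX).of_iso e.symm))
  · -- q Neg, r Neg
    have ΨL := RelIso.trans (S.negIso (X ⊕ G) G' hq) (lexCongr (OrderIso.refl G') eIn)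
    have ΨR := RelIso.trans (S.negIso X (G ⊕ G') hr) (lexCongr eS (OrderIso.refl X))
    have e : (G' ⊕ₗ (G ⊕ₗ X)) ≃o ((G ⊕ₗ G') ⊕ₗ X) := RelIso.trans (RelIso.trans (RelIso.symm ΨL) Φ) ΨR
    exact hnCoiG'κ (coinit_lex_projL
      ((coinit_lex_left (coinit_lex_left hCoiG)).of_iso e.symm))

theorem f4neg (S : SumOp.{u}) (hassoc : S.Assoc) (hss : S.SemiStandard)
    {μ κ : Cardinal.{u}}
    (X G G' : Type u) [LinearOrder X] [LinearOrder G] [LinearOrder G']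
    [Nonempty X] [Nonempty G] [Nonempty G']
    (hCoiX : Coinit X μ) (hCofX : Cofin X μ)
    (hCoiG : Coinit G κ) (hCofG : Cofin G κ)
    (hnCoiG : ¬ Coinit G μ) (hnCofG : ¬ Cofin G μ)
    (hnCoiG'μ : ¬ Coinit G' μ) (hnCoiG'κ : ¬ Coinit G' κ)
    (hnCofG'μ : ¬ Cofin G' μ) (hnCofG'κ : ¬ Cofin G' κ)
    (hs : S.Neg G G') : S.Neg X G := by
  rcases S.pos_or_neg hss X G with hp | hp
  swap
  · exact hp
  exfalso
  letI i1 : LinearOrder (X ⊕ G) := S.ord X G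
  letI i3 : LinearOrder (G ⊕ G') := S.ord G G'
  haveI : Nonempty (X ⊕ G) := ⟨Sum.inl (Classical.arbitrary X)⟩
  haveI : Nonempty (G ⊕ G') := ⟨Sum.inl (Classical.arbitrary G)⟩
  haveI : Nonempty (G' ⊕ₗ G) := ⟨toLex (Sum.inr (Classical.arbitrary G))⟩
  haveI : Nonempty (X ⊕ₗ G) := ⟨toLex (Sum.inl (Classical.arbitrary X))⟩
  obtain ⟨Φ⟩ := hassoc X G G'
  have eIn := S.posIso X G hp
  have eS := S.negIso G G' hs
  rcases S.pos_or_neg hss (X ⊕ G) G' with hq | hq <;>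
    rcases S.pos_or_neg hss X (G ⊕ G') with hr | hr
  · -- q Pos, r Pos
    have ΨL := RelIso.trans (S.posIso (X ⊕ G) G' hq) (lexCongr eIn (OrderIso.refl G'))
    have ΨR := RelIso.trans (S.posIso X (G ⊕ G') hr) (lexCongr (OrderIso.refl X) eS)
    have e : ((X ⊕ₗ G) ⊕ₗ G') ≃o (X ⊕ₗ (G' ⊕ₗ G)) := RelIso.trans (RelIso.trans (RelIso.symm ΨL) Φ) ΨR
    exact hnCofG'κ (cofin_lex_projR
      ((cofin_lex_right (cofin_lex_right hCofG)).of_iso e.symm))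
  · -- q Pos, r Neg
    have ΨL := RelIso.trans (S.posIso (X ⊕ G) G' hq) (lexCongr eIn (OrderIso.refl G'))
    have ΨR := RelIso.trans (S.negIso X (G ⊕ G') hr) (lexCongr eS (OrderIso.refl X))
    have e : ((X ⊕ₗ G) ⊕ₗ G') ≃o ((G' ⊕ₗ G) ⊕ₗ X) := RelIso.trans (RelIso.trans (RelIso.symm ΨL) Φ) ΨR
    exact hnCoiG'μ (coinit_lex_projL (coinit_lex_projL
      ((coinit_lex_left (coinit_lex_left hCoiX)).of_iso e)))
  · -- q Neg, r Pos
    have ΨL := RelIso.trans (S.negIso (X ⊕ G) G' hq) (lexCongr (OrderIso.refl G') eIn)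
    have ΨR := RelIso.trans (S.posIso X (G ⊕ G') hr) (lexCongr (OrderIso.refl X) eS)
    have e : (G' ⊕ₗ (X ⊕ₗ G)) ≃o (X ⊕ₗ (G' ⊕ₗ G)) := RelIso.trans (RelIso.trans (RelIso.symm ΨL) Φ) ΨR
    exact hnCoiG'μ (coinit_lex_projL ((coinit_lex_left hCoiX).of_iso e.symm))
  · -- q Neg, r Neg
    have ΨL := RelIso.trans (S.negIso (X ⊕ G) G' hq) (lexCongr (OrderIso.refl G') eIn)
    have ΨR := RelIso.trans (S.negIso X (G ⊕ G') hr) (lexCongr eS (OrderIso.refl X))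
    have e : (G' ⊕ₗ (X ⊕ₗ G)) ≃o ((G' ⊕ₗ G) ⊕ₗ X) := RelIso.trans (RelIso.trans (RelIso.symm ΨL) Φ) ΨR
    exact hnCofG (cofin_lex_projR (cofin_lex_projR
      ((cofin_lex_right hCofX).of_iso e.symm)))

/-! ### No coexistence of strictly positive and strictly negative pairs -/

theorem mk_lex_eq (P Q : Type u) : #(P ⊕ₗ Q) = #P + #Q := by
  have h1 : #(P ⊕ₗ Q) = #(P ⊕ Q) := Cardinal.mk_congr (ofLex : (P ⊕ₗ Q) ≃ (P ⊕ Q))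
  rw [h1, Cardinal.mk_sum, Cardinal.lift_id, Cardinal.lift_id]

theorem no_both (S : SumOp.{u}) (hassoc : S.Assoc) (hss : S.SemiStandard)
    (A B C D : Type u) [iA : LinearOrder A] [iB : LinearOrder B]
    [iC : LinearOrder C] [iD : LinearOrder D]
    [Nonempty A] [Nonempty B] [Nonempty C] [Nonempty D]
    (hAB : S.Neg A B) (hsAB : IsEmpty ((B ⊕ₗ A) ≃o (A ⊕ₗ B)))
    (hCD : S.Pos C D) (hsCD : IsEmpty ((C ⊕ₗ D) ≃o (D ⊕ₗ C))) : False := by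
  -- the small bound and two regular cardinals above it
  set μ : Cardinal.{u} := #A + #B + #C + #D + ℵ₀ with hμdef
  have hℵμ : ℵ₀ ≤ μ := le_add_self
  set κ : Cardinal.{u} := Order.succ μ with hκdef
  have hμκ : μ < κ := Order.lt_succ μ
  have hκreg : κ.IsRegular := Cardinal.isRegular_succ hℵμ
  have hℵκ : ℵ₀ ≤ κ := hℵμ.trans hμκ.le
  set lam : Cardinal.{u} := Order.succ κ with hlamdef
  have hκlam : κ < lam := Order.lt_succ κ
  have hlamreg : lam.IsRegular := Cardinal.isRegular_succ hℵκ
  have hμlam : μ < lam := hμκ.trans hκlam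
  -- cardinality bounds
  have hABCD : #A + #B + #C + #D ≤ μ := self_le_add_right _ _
  have hABC : #A + #B + #C ≤ μ := (self_le_add_right _ _).trans hABCD
  have hABμ' : #A + #B ≤ μ := (self_le_add_right _ _).trans hABC
  have hAμ : #A ≤ μ := (self_le_add_right _ _).trans hABμ'
  have hBμ : #B ≤ μ := (le_add_self).trans hABμ'
  have hCμ : #C ≤ μ := (le_add_self).trans hABC
  have hDμ : #D ≤ μ := (le_add_self).trans hABCD
  have hCDμ' : #C + #D ≤ μ := by
    calc #C + #D ≤ (#A + #B + #C) + #D := add_le_add_left le_add_self _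
    _ ≤ μ := hABCD
  have hABsum : #(A ⊕ B) ≤ μ := by
    rw [Cardinal.mk_sum, Cardinal.lift_id, Cardinal.lift_id]; exact hABμ'
  have hCDsum : #(C ⊕ D) ≤ μ := by
    rw [Cardinal.mk_sum, Cardinal.lift_id, Cardinal.lift_id]; exact hCDμ'
  have hBAlt : #(B ⊕ₗ A) < κ := by
    rw [mk_lex_eq]
    exact lt_of_le_of_lt (by rwa [add_comm]) hμκ
  have hABlt : #(A ⊕ₗ B) < κ := by
    rw [mk_lex_eq]; exact lt_of_le_of_lt hABμ' hμκ
  have hCDlt : #(C ⊕ₗ D) < κ := by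
    rw [mk_lex_eq]; exact lt_of_le_of_lt hCDμ' hμκ
  have hDClt : #(D ⊕ₗ C) < κ := by
    rw [mk_lex_eq]
    exact lt_of_le_of_lt (by rwa [add_comm]) hμκ
  -- the rigid letters
  haveI hGne : Nonempty (Gam κ) := gam_nonempty hℵκ
  haveI hG'ne : Nonempty (Gam lam) := gam_nonempty (hℵκ.trans hκlam.le)
  have hCoiG : Coinit (Gam κ) κ := gam_coinit hℵκ
  have hCofG : Cofin (Gam κ) κ := gam_cofin hℵκ
  have hnCoiG : ¬ Coinit (Gam κ) μ := gam_not_coinit hκreg hμκ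
  have hnCofG : ¬ Cofin (Gam κ) μ := gam_not_cofin hκreg hμκ
  have hnCoiG'μ : ¬ Coinit (Gam lam) μ := gam_not_coinit hlamreg hμlam
  have hnCoiG'κ : ¬ Coinit (Gam lam) κ := gam_not_coinit hlamreg hκlam
  have hnCofG'μ : ¬ Cofin (Gam lam) μ := gam_not_cofin hlamreg hμlam
  have hnCofG'κ : ¬ Cofin (Gam lam) κ := gam_not_cofin hlamreg hκlam
  have g1 : ∀ g : Gam κ, κ ≤ #(Iio g) := gam_iio_big hℵκ
  have g2 : ∀ g : Gam κ, κ ≤ #(Ioi g) := gam_ioi_big hℵκ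
  -- the orientation of the pair of rigid letters
  rcases S.pos_or_neg hss (Gam κ) (Gam lam) with hs | hs
  · -- positive orientation: contradict the negative pair (A, B)
    letI iP : LinearOrder (A ⊕ B) := S.ord A B
    haveI : Nonempty (A ⊕ B) := ⟨Sum.inl (Classical.arbitrary A)⟩
    have hPosP : S.Pos (A ⊕ B) (Gam κ) :=
      f4pos S hassoc hss (A ⊕ B) (Gam κ) (Gam lam)
        (coinit_of_card hABsum) (cofin_of_card hABsum)
        hCoiG hCofG hnCoiG hnCofG hnCoiG'μ hnCoiG'κ hnCofG'μ hnCofG'κ hs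
    have hPosB : S.Pos B (Gam κ) :=
      f4pos S hassoc hss B (Gam κ) (Gam lam)
        (coinit_of_card hBμ) (cofin_of_card hBμ)
        hCoiG hCofG hnCoiG hnCofG hnCoiG'μ hnCoiG'κ hnCofG'μ hnCofG'κ hs
    obtain ⟨Φ⟩ := hassoc A B (Gam κ)
    letI iQ : LinearOrder (B ⊕ Gam κ) := S.ord B (Gam κ)
    haveI : Nonempty (B ⊕ Gam κ) := ⟨Sum.inl (Classical.arbitrary B)⟩
    have eP := S.negIso A B hAB
    have eQ := S.posIso B (Gam κ) hPosB
    have ΨL :=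
      RelIso.trans (S.posIso (A ⊕ B) (Gam κ) hPosP) (lexCongr eP (OrderIso.refl (Gam κ)))
    rcases S.pos_or_neg hss A (B ⊕ Gam κ) with ht | ht
    · have ΨR :=
        RelIso.trans (S.posIso A (B ⊕ Gam κ) ht) (lexCongr (OrderIso.refl A) eQ)
      have e : ((B ⊕ₗ A) ⊕ₗ Gam κ) ≃o (A ⊕ₗ (B ⊕ₗ Gam κ)) := RelIso.trans (RelIso.trans (RelIso.symm ΨL) Φ) ΨR
      have i1 : (B ⊕ₗ A) ≃o ↥(SmallLow κ ((B ⊕ₗ A) ⊕ₗ Gam κ)) :=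
        smallLowLeftIso κ (B ⊕ₗ A) (Gam κ) hBAlt g1
      have i2 : ↥(SmallLow κ ((B ⊕ₗ A) ⊕ₗ Gam κ)) ≃o ↥(SmallLow κ (A ⊕ₗ (B ⊕ₗ Gam κ))) :=
        smallLowMapIso e
      have i3 : ↥(SmallLow κ (A ⊕ₗ (B ⊕ₗ Gam κ))) ≃o ↥(SmallLow κ ((A ⊕ₗ B) ⊕ₗ Gam κ)) :=
        smallLowMapIso (OrderIso.sumLexAssoc A B (Gam κ)).symm
      have i4 : (A ⊕ₗ B) ≃o ↥(SmallLow κ ((A ⊕ₗ B) ⊕ₗ Gam κ)) :=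
        smallLowLeftIso κ (A ⊕ₗ B) (Gam κ) hABlt g1
      exact hsAB.false (((i1.trans i2).trans i3).trans i4.symm)
    · have ΨR :=
        RelIso.trans (S.negIso A (B ⊕ Gam κ) ht) (lexCongr eQ (OrderIso.refl A))
      have e : ((B ⊕ₗ A) ⊕ₗ Gam κ) ≃o ((B ⊕ₗ Gam κ) ⊕ₗ A) := RelIso.trans (RelIso.trans (RelIso.symm ΨL) Φ) ΨR
      have h1 : Cofin ((B ⊕ₗ Gam κ) ⊕ₗ A) μ := cofin_lex_right (cofin_of_card hAμ)
      exact hnCofG (cofin_lex_projR (h1.of_iso e.symm))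
  · -- negative orientation: contradict the positive pair (C, D)
    letI iP' : LinearOrder (C ⊕ D) := S.ord C D
    haveI : Nonempty (C ⊕ D) := ⟨Sum.inl (Classical.arbitrary C)⟩
    have hNegP' : S.Neg (C ⊕ D) (Gam κ) :=
      f4neg S hassoc hss (C ⊕ D) (Gam κ) (Gam lam)
        (coinit_of_card hCDsum) (cofin_of_card hCDsum)
        hCoiG hCofG hnCoiG hnCofG hnCoiG'μ hnCoiG'κ hnCofG'μ hnCofG'κ hs
    have hNegD : S.Neg D (Gam κ) :=
      f4neg S hassoc hss D (Gam κ) (Gam lam)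
        (coinit_of_card hDμ) (cofin_of_card hDμ)
        hCoiG hCofG hnCoiG hnCofG hnCoiG'μ hnCoiG'κ hnCofG'μ hnCofG'κ hs
    obtain ⟨Φ⟩ := hassoc C D (Gam κ)
    letI iQ' : LinearOrder (D ⊕ Gam κ) := S.ord D (Gam κ)
    haveI : Nonempty (D ⊕ Gam κ) := ⟨Sum.inl (Classical.arbitrary D)⟩
    have eP' := S.posIso C D hCD
    have eQ' := S.negIso D (Gam κ) hNegD
    have ΨL :=
      RelIso.trans (S.negIso (C ⊕ D) (Gam κ) hNegP') (lexCongr (OrderIso.refl (Gam κ)) eP')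
    rcases S.pos_or_neg hss C (D ⊕ Gam κ) with ht | ht
    · have ΨR :=
        RelIso.trans (S.posIso C (D ⊕ Gam κ) ht) (lexCongr (OrderIso.refl C) eQ')
      have e : (Gam κ ⊕ₗ (C ⊕ₗ D)) ≃o (C ⊕ₗ (Gam κ ⊕ₗ D)) := RelIso.trans (RelIso.trans (RelIso.symm ΨL) Φ) ΨR
      have h1 : Coinit (C ⊕ₗ (Gam κ ⊕ₗ D)) μ := coinit_lex_left (coinit_of_card hCμ)
      exact hnCoiG (coinit_lex_projL (h1.of_iso e.symm))
    · have ΨR :=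
        RelIso.trans (S.negIso C (D ⊕ Gam κ) ht) (lexCongr eQ' (OrderIso.refl C))
      have e : (Gam κ ⊕ₗ (C ⊕ₗ D)) ≃o ((Gam κ ⊕ₗ D) ⊕ₗ C) := RelIso.trans (RelIso.trans (RelIso.symm ΨL) Φ) ΨR
      have u1 : (C ⊕ₗ D) ≃o ↥(SmallUp κ (Gam κ ⊕ₗ (C ⊕ₗ D))) :=
        smallUpRightIso κ (Gam κ) (C ⊕ₗ D) hCDlt g2
      have u2 : ↥(SmallUp κ (Gam κ ⊕ₗ (C ⊕ₗ D))) ≃o ↥(SmallUp κ ((Gam κ ⊕ₗ D) ⊕ₗ C)) :=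
        smallUpMapIso e
      have u3 : ↥(SmallUp κ ((Gam κ ⊕ₗ D) ⊕ₗ C)) ≃o ↥(SmallUp κ (Gam κ ⊕ₗ (D ⊕ₗ C))) :=
        smallUpMapIso (OrderIso.sumLexAssoc (Gam κ) D C)
      have u4 : (D ⊕ₗ C) ≃o ↥(SmallUp κ (Gam κ ⊕ₗ (D ⊕ₗ C))) :=
        smallUpRightIso κ (Gam κ) (D ⊕ₗ C) hDClt g2
      exact hsCD.false (((u1.trans u2).trans u3).trans u4.symm)

end SemiStdAux

/-- Every regular, associative, semi-standard sum operation is (up to isomorphism) the usual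
sum `A + B` or the reverse sum `B + A`, uniformly in `A` and `B`. -/
theorem semiStandard_sum_is_standard (S : SumOp.{u})
    (hreg : S.Regular) (hassoc : S.Assoc) (hss : S.SemiStandard) :
    (∀ (A B : Type u) [LinearOrder A] [LinearOrder B],
      Nonempty (@OrderIso (A ⊕ B) (A ⊕ₗ B) (LO.le (S.ord A B)) (LO.le Sum.Lex.linearOrder))) ∨
    (∀ (A B : Type u) [LinearOrder A] [LinearOrder B],
      Nonempty (@OrderIso (A ⊕ B) (B ⊕ₗ A) (LO.le (S.ord A B)) (LO.le Sum.Lex.linearOrder))) := by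

  classical
  by_cases h1 : ∀ (A B : Type u) [LinearOrder A] [LinearOrder B],
      Nonempty (@OrderIso (A ⊕ B) (A ⊕ₗ B) (LO.le (S.ord A B)) (LO.le Sum.Lex.linearOrder))
  · exact Or.inl h1
  right
  intro C D iC iD
  by_contra hCD'
  simp only [not_forall] at h1
  obtain ⟨A, B, iA, iB, hAB'⟩ := h1
  -- the pair (A, B) is strictly negative
  have hnPos : ¬ S.Pos A B := fun h => hAB' ⟨S.posIso A B h⟩
  haveI hneA : Nonempty A := by
    by_contra hA
    rw [not_nonempty_iff] at hA
    exact hnPos fun a b => (hA.false a).elim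
  haveI hneB : Nonempty B := by
    by_contra hB
    rw [not_nonempty_iff] at hB
    exact hnPos fun a b => (hB.false b).elim
  have hNeg : S.Neg A B := (S.pos_or_neg hss A B).resolve_left hnPos
  have hsAB : IsEmpty ((B ⊕ₗ A) ≃o (A ⊕ₗ B)) := by
    rw [← not_nonempty_iff]
    rintro ⟨e⟩
    exact hAB' ⟨RelIso.trans (S.negIso A B hNeg) e⟩
  -- the pair (C, D) is strictly positive
  have hnNeg : ¬ S.Neg C D := fun h => hCD' ⟨S.negIso C D h⟩
  haveI hneC : Nonempty C := by
    by_contra hC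
    rw [not_nonempty_iff] at hC
    exact hnNeg fun c d => (hC.false c).elim
  haveI hneD : Nonempty D := by
    by_contra hD
    rw [not_nonempty_iff] at hD
    exact hnNeg fun c d => (hD.false d).elim
  have hPos : S.Pos C D := (S.pos_or_neg hss C D).resolve_right hnNeg
  have hsCD : IsEmpty ((C ⊕ₗ D) ≃o (D ⊕ₗ C)) := by
    rw [← not_nonempty_iff]
    rintro ⟨e⟩
    exact hCD' ⟨RelIso.trans (S.posIso C D hPos) e⟩
  exact no_both S hassoc hss A B C D hNeg hsAB hPos hsCD
end

section
/- Let 𝒞 be a left sum-generating class. Then every linear order A has a unique partition into an initial segment A_L and the complementary final segment A_R such that A_L (with the induced order) belongs to 𝒞 and A_R (with the induced order) belongs to 𝒞^⊥. Moreover this decomposition is preserved under isomorphism: if f : A → B is an order isomorphism, then f maps A_L onto B_L and A_R onto B_R. -/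
universe u

/-- A *left sum-generating class*: a class of linear orders closed under isomorphism,
under final segments of two-term lexicographic sums, and under ordinal-indexed
lexicographic sums of members. -/
structure IsLeftSGC (𝒞 : Set LinOrd.{u}) : Prop where
  iso_closed : ∀ A B : LinOrd.{u}, A ∈ 𝒞 → Nonempty (↥A ≃o ↥B) → B ∈ 𝒞
  final_mem : ∀ A B : LinOrd.{u}, LinOrd.of (↥A ⊕ₗ ↥B) ∈ 𝒞 → B ∈ 𝒞
  ordSum_mem : ∀ (β : Ordinal.{u}) (A : β.ToType → LinOrd.{u}),
    (∀ i, A i ∈ 𝒞) → LinOrd.of (Σₗ i, ↥(A i)) ∈ 𝒞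

/-- The class `𝒞^⊥` of linear orders having no nonempty initial segment in `𝒞`. -/
def perpClass (𝒞 : Set LinOrd.{u}) : Set LinOrd.{u} :=
  {A | ∀ L : Set ↥A, IsLowerSet L → L.Nonempty → LinOrd.of ↥L ∉ 𝒞}


open Set

noncomputable def imageIso {α β : Type*} [Preorder α] [Preorder β] (e : α ≃o β) (s : Set α) :
    s ≃o (e '' s : Set β) where
  toEquiv := e.toEquiv.image s
  map_rel_iff' := by intro a b; exact e.le_iff_le

def nestIso {α : Type*} [Preorder α] (s : Set α) (T : Set ↥s) :
    ↥T ≃o ↥(Subtype.val '' T : Set α) where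
  toFun x := ⟨x.1.1, ⟨x.1, x.2, rfl⟩⟩
  invFun y := ⟨⟨y.1, by obtain ⟨z, hz, he⟩ := y.2; exact he ▸ z.2⟩, by
    obtain ⟨z, hz, he⟩ := y.2
    have h2 : z = ⟨y.1, he ▸ z.2⟩ := Subtype.ext he
    exact h2 ▸ hz⟩
  left_inv x := by ext; rfl
  right_inv y := by ext; rfl
  map_rel_iff' := Iff.rfl

open scoped Classical in
noncomputable def lowerSplit {α : Type*} [LinearOrder α] {s : Set α} (hs : IsLowerSet s) :
    α ≃o (↥s ⊕ₗ ↥(sᶜ : Set α)) where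
  toFun x := if h : x ∈ s then toLex (Sum.inl ⟨x, h⟩) else toLex (Sum.inr ⟨x, h⟩)
  invFun y := Sum.elim Subtype.val Subtype.val (ofLex y)
  left_inv x := by by_cases h : x ∈ s <;> simp [h]
  right_inv y := by
    rcases h : ofLex y with ⟨x, hx⟩ | ⟨x, hx⟩
    · have hy : y = toLex (Sum.inl ⟨x, hx⟩) := by rw [← h]; rfl
      subst hy; simp [hx]
    · have hy : y = toLex (Sum.inr ⟨x, hx⟩) := by rw [← h]; rfl
      subst hy; simp [show x ∉ s from hx]
  map_rel_iff' := by
    intro a b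
    simp only [Equiv.coe_fn_mk]
    by_cases ha : a ∈ s <;> by_cases hb : b ∈ s
    · rw [dif_pos ha, dif_pos hb]; simp [Sum.Lex.inl_le_inl_iff]
    · rw [dif_pos ha, dif_neg hb]
      exact iff_of_true (Sum.Lex.inl_le_inr _ _)
        (by by_contra hab; exact hb (hs (le_of_not_ge hab) ha))
    · rw [dif_neg ha, dif_pos hb]
      exact iff_of_false Sum.lex_inr_inl (fun hab => ha (hs hab hb))
    · rw [dif_neg ha, dif_neg hb]; simp [Sum.Lex.inr_le_inr_iff]

theorem rec_val {ι : Type*} {α : Type u} (g : α → ι) {i j : ι} (h : i = j)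
    (a : {x : α | g x = i}) : ((h ▸ a : {x : α | g x = j}) : α) = (a : α) := by
  cases h; rfl

theorem mem_iso {𝒞 : Set LinOrd.{u}} (h𝒞 : IsLeftSGC 𝒞) {X Y : Type u}
    [LinearOrder X] [LinearOrder Y] (e : X ≃o Y) (h : LinOrd.of X ∈ 𝒞) :
    LinOrd.of Y ∈ 𝒞 :=
  h𝒞.iso_closed (LinOrd.of X) (LinOrd.of Y) h ⟨e⟩

theorem mem_of_mono {𝒞 : Set LinOrd.{u}} (h𝒞 : IsLeftSGC 𝒞) (A : LinOrd.{u})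
    (β : Ordinal.{u}) (g : ↥A → β.ToType) (hg : Monotone g)
    (hfib : ∀ i, LinOrd.of ↥({x : ↥A | g x = i}) ∈ 𝒞) : A ∈ 𝒞 := by
  have hsum := h𝒞.ordSum_mem β (fun i => LinOrd.of ↥({x : ↥A | g x = i})) hfib
  refine h𝒞.iso_closed _ A hsum ⟨?_⟩
  refine ⟨⟨fun p => (show {x : ↥A | g x = (ofLex p).1} from (ofLex p).2).1, fun x => toLex ⟨g x, ⟨x, rfl⟩⟩, ?_, ?_⟩, ?_⟩
  · rintro ⟨i, x, hx⟩
    subst hx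
    rfl
  · intro x; rfl
  · rintro ⟨i, ⟨x, hx⟩⟩ ⟨j, ⟨y, hy⟩⟩
    subst hx; subst hy
    simp only [Equiv.coe_fn_mk]
    refine Iff.trans ?_ Sigma.Lex.le_def.symm
    constructor
    · intro hxy
      rcases lt_or_eq_of_le (hg hxy) with h | h
      · exact Or.inl h
      · exact Or.inr ⟨h, Subtype.coe_le_coe.mp (by exact (le_of_eq (rec_val g h _)).trans hxy)⟩
    · rintro (h | ⟨h, h2⟩)
      · by_contra hxy
        exact absurd (hg (le_of_not_ge hxy)) (not_le_of_gt h)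
      · have := Subtype.coe_le_coe.mpr h2
        exact (le_of_eq (rec_val g h _).symm).trans this

theorem compl_mem {𝒞 : Set LinOrd.{u}} (h𝒞 : IsLeftSGC 𝒞) {A : LinOrd.{u}} (hA : A ∈ 𝒞)
    {s : Set ↥A} (hs : IsLowerSet s) : LinOrd.of ↥(sᶜ) ∈ 𝒞 :=
  h𝒞.final_mem (LinOrd.of ↥s) (LinOrd.of ↥(sᶜ))
    (h𝒞.iso_closed A (LinOrd.of (↥s ⊕ₗ ↥(sᶜ : Set ↥A))) hA ⟨lowerSplit hs⟩)

theorem ord_lt_two {o : Ordinal.{u}} (h : o < 2) : o = 0 ∨ o = 1 := by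
  rw [show (2 : Ordinal.{u}) = Order.succ 1 by rw [← Ordinal.add_one_eq_succ, one_add_one_eq_two],
    Order.lt_succ_iff, Ordinal.le_one_iff] at h
  exact h

theorem lexSum_mem {𝒞 : Set LinOrd.{u}} (h𝒞 : IsLeftSGC 𝒞) {X Y : LinOrd.{u}}
    (hX : X ∈ 𝒞) (hY : Y ∈ 𝒞) : LinOrd.of (↥X ⊕ₗ ↥Y) ∈ 𝒞 := by
  have e := Ordinal.ToType.mk (o := (2 : Ordinal.{u}))
  have h01 : (0 : Ordinal.{u}) < 2 := by norm_num
  have h11 : (1 : Ordinal.{u}) < 2 := by norm_num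
  let i0 : (2 : Ordinal.{u}).ToType := e ⟨0, h01⟩
  let i1 : (2 : Ordinal.{u}).ToType := e ⟨1, h11⟩
  have hne : i0 ≠ i1 := by
    intro h
    have h2 := e.injective h
    replace h2 := congrArg Subtype.val h2
    exact zero_ne_one h2
  have hlt : i0 ≤ i1 := by
    refine le_of_lt (e.strictMono ?_)
    show (0 : Ordinal.{u}) < 1; exact zero_lt_one
  let g : (↥X ⊕ₗ ↥Y) → (2 : Ordinal.{u}).ToType :=
    fun z => Sum.elim (fun _ => i0) (fun _ => i1) (ofLex z)
  have hcase : ∀ i : (2 : Ordinal.{u}).ToType, i = i0 ∨ i = i1 := by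
    intro i
    have hi : e (e.symm i) = i := e.apply_symm_apply i
    have ho : (e.symm i : Ordinal.{u}) = 0 ∨ (e.symm i : Ordinal.{u}) = 1 :=
      ord_lt_two (e.symm i).2
    rcases ho with ho | ho
    · left; rw [← hi]; congr 1; exact Subtype.ext ho
    · right; rw [← hi]; congr 1; exact Subtype.ext ho
  apply mem_of_mono h𝒞 (LinOrd.of (↥X ⊕ₗ ↥Y)) 2 g
  · intro a b hab
    rcases ha : ofLex a with x | x <;> rcases hb : ofLex b with y | y
    · show Sum.elim (fun _ => i0) (fun _ => i1) (ofLex a) ≤ Sum.elim (fun _ => i0) (fun _ => i1) (ofLex b)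
      exact ha ▸ hb ▸ le_rfl
    · show Sum.elim (fun _ => i0) (fun _ => i1) (ofLex a) ≤ Sum.elim (fun _ => i0) (fun _ => i1) (ofLex b)
      exact ha ▸ hb ▸ hlt
    · exfalso
      have ha2 : a = toLex (Sum.inr x) := by rw [← ha]; rfl
      have hb2 : b = toLex (Sum.inl y) := by rw [← hb]; rfl
      rw [ha2, hb2] at hab
      exact Sum.lex_inr_inl hab
    · show Sum.elim (fun _ => i0) (fun _ => i1) (ofLex a) ≤ Sum.elim (fun _ => i0) (fun _ => i1) (ofLex b)
      exact ha ▸ hb ▸ le_rfl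
  · intro i
    rcases hcase i with rfl | rfl
    · refine mem_iso h𝒞 ?_ hX
      refine StrictMono.orderIsoOfSurjective
        (fun x => (⟨toLex (Sum.inl x), rfl⟩ : {z : ↥X ⊕ₗ ↥Y | g z = i0})) ?_ ?_
      · intro x y hxy
        show (toLex (Sum.inl x) : ↥X ⊕ₗ ↥Y) < toLex (Sum.inl y)
        exact Sum.Lex.inl_lt_inl_iff.mpr hxy
      · rintro ⟨z, hz⟩
        rcases hzz : ofLex z with x | x
        · refine ⟨x, Subtype.ext ?_⟩
          show toLex (Sum.inl x) = z
          rw [← hzz]; rfl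
        · exfalso
          have : g z = i1 := by
            show Sum.elim (fun _ => i0) (fun _ => i1) (ofLex z) = i1
            exact hzz ▸ rfl
          rw [hz] at this
          exact hne this
    · refine mem_iso h𝒞 ?_ hY
      refine StrictMono.orderIsoOfSurjective
        (fun x => (⟨toLex (Sum.inr x), rfl⟩ : {z : ↥X ⊕ₗ ↥Y | g z = i1})) ?_ ?_
      · intro x y hxy
        show (toLex (Sum.inr x) : ↥X ⊕ₗ ↥Y) < toLex (Sum.inr y)
        exact Sum.Lex.inr_lt_inr_iff.mpr hxy
      · rintro ⟨z, hz⟩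
        rcases hzz : ofLex z with x | x
        · exfalso
          have : g z = i0 := by
            show Sum.elim (fun _ => i0) (fun _ => i1) (ofLex z) = i0
            exact hzz ▸ rfl
          rw [hz] at this
          exact hne this.symm
        · refine ⟨x, Subtype.ext ?_⟩
          show toLex (Sum.inr x) = z
          rw [← hzz]; rfl

theorem mem_of_split {𝒞 : Set LinOrd.{u}} (h𝒞 : IsLeftSGC 𝒞) (A : LinOrd.{u}) {s : Set ↥A}
    (hs : IsLowerSet s) (h1 : LinOrd.of ↥s ∈ 𝒞) (h2 : LinOrd.of ↥(sᶜ) ∈ 𝒞) : A ∈ 𝒞 :=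
  h𝒞.iso_closed (LinOrd.of (↥s ⊕ₗ ↥(sᶜ : Set ↥A))) A
    (lexSum_mem h𝒞 (X := LinOrd.of ↥s) (Y := LinOrd.of ↥(sᶜ)) h1 h2) ⟨(lowerSplit hs).symm⟩

theorem perp_iso {𝒞 : Set LinOrd.{u}} (h𝒞 : IsLeftSGC 𝒞) {X Y : LinOrd.{u}}
    (hX : X ∈ perpClass 𝒞) (e : ↥X ≃o ↥Y) : Y ∈ perpClass 𝒞 := by
  intro L hL hLne hmem
  refine hX (e.symm '' L) (hL.image e.symm) (hLne.image _) ?_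
  exact mem_iso h𝒞 (imageIso e.symm L) hmem

theorem unique_sub {𝒞 : Set LinOrd.{u}} (h𝒞 : IsLeftSGC 𝒞) (A : LinOrd.{u}) {L1 L2 : Set ↥A}
    (hL1 : IsLowerSet L1) (hp1 : LinOrd.of ↥(L1ᶜ) ∈ perpClass 𝒞)
    (hL2 : IsLowerSet L2) (hm2 : LinOrd.of ↥L2 ∈ 𝒞)
    (_hsub : L1 ⊆ L2) : L2 ⊆ L1 := by
  by_contra hns
  obtain ⟨a, ha2, ha1⟩ : ∃ a, a ∈ L2 ∧ a ∉ L1 := by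
    rw [Set.not_subset] at hns; exact hns
  set W : Set ↥(L1ᶜ : Set ↥A) := {x | x.1 ∈ L2} with hWdef
  have hWlow : IsLowerSet W := fun x y hyx hx => hL2 (Subtype.coe_le_coe.mpr hyx) hx
  have hWne : W.Nonempty := ⟨⟨a, ha1⟩, ha2⟩
  set P : Set ↥(L2 : Set ↥A) := {z | z.1 ∈ L1} with hPdef
  have hPlow : IsLowerSet P := fun x y hyx hx => hL1 (Subtype.coe_le_coe.mpr hyx) hx
  have hPc : LinOrd.of ↥(Pᶜ) ∈ 𝒞 := compl_mem h𝒞 hm2 hPlow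
  have hEq : (Subtype.val '' (Pᶜ) : Set ↥A) = (Subtype.val '' W : Set ↥A) := by
    ext b
    constructor
    · rintro ⟨z, hz, rfl⟩
      exact ⟨⟨z.1, hz⟩, z.2, rfl⟩
    · rintro ⟨x, hx, rfl⟩
      exact ⟨⟨x.1, hx⟩, x.2, rfl⟩
  refine hp1 W hWlow hWne (mem_iso h𝒞 ?_ hPc)
  exact (nestIso L2 (Pᶜ)).trans ((OrderIso.setCongr _ _ hEq).trans (nestIso (L1ᶜ) W).symm)

theorem unique_full {𝒞 : Set LinOrd.{u}} (h𝒞 : IsLeftSGC 𝒞) (A : LinOrd.{u}) {L1 L2 : Set ↥A}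
    (hL1 : IsLowerSet L1) (hm1 : LinOrd.of ↥L1 ∈ 𝒞) (hp1 : LinOrd.of ↥(L1ᶜ) ∈ perpClass 𝒞)
    (hL2 : IsLowerSet L2) (hm2 : LinOrd.of ↥L2 ∈ 𝒞) (hp2 : LinOrd.of ↥(L2ᶜ) ∈ perpClass 𝒞) :
    L1 = L2 := by
  rcases hL1.total hL2 with h | h
  · exact subset_antisymm h (unique_sub h𝒞 A hL1 hp1 hL2 hm2 h)
  · exact (subset_antisymm h (unique_sub h𝒞 A hL2 hp2 hL1 hm1 h)).symm

theorem exists_decomp {𝒞 : Set LinOrd.{u}} (h𝒞 : IsLeftSGC 𝒞) (A : LinOrd.{u}) :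
    ∃ L : Set ↥A, IsLowerSet L ∧ LinOrd.of ↥L ∈ 𝒞 ∧ LinOrd.of ↥(Lᶜ) ∈ perpClass 𝒞 := by
  classical
  set S : Set (Set ↥A) := {s | IsLowerSet s ∧ LinOrd.of ↥s ∈ 𝒞} with hSdef
  set U : Set ↥A := ⋃₀ S with hUdef
  have hUlow : IsLowerSet U := isLowerSet_sUnion (fun s hs => hs.1)
  haveI hwo : IsWellOrder ↥S WellOrderingRel := WellOrderingRel.isWellOrder
  set β : Ordinal.{u} := Ordinal.type (WellOrderingRel : ↥S → ↥S → Prop) with hβdef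
  haveI : IsWellOrder β.ToType ((· < ·) : β.ToType → β.ToType → Prop) := isWellOrder_lt
  obtain ⟨e⟩ : Nonempty (((· < ·) : β.ToType → β.ToType → Prop) ≃r
      (WellOrderingRel : ↥S → ↥S → Prop)) :=
    Ordinal.type_eq.mp (by rw [Ordinal.type_toType β])
  set enum : β.ToType → Set ↥A := fun i => ((e i : ↥S) : Set ↥A) with henumdef
  have henum : ∀ i, enum i ∈ S := fun i => (e i).2
  have hsurj : ∀ s ∈ S, ∃ i, enum i = s := by
    intro s hs
    refine ⟨e.symm ⟨s, hs⟩, ?_⟩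
    show (((e (e.symm ⟨s, hs⟩)) : ↥S) : Set ↥A) = s
    rw [e.apply_symm_apply]
  have hne : ∀ x : ↥U, {i | x.1 ∈ enum i}.Nonempty := by
    intro x
    obtain ⟨s, hsS, hxs⟩ := x.2
    obtain ⟨i, hi⟩ := hsurj s hsS
    exact ⟨i, by rw [Set.mem_setOf_eq, hi]; exact hxs⟩
  have wf : WellFounded ((· < ·) : β.ToType → β.ToType → Prop) := IsWellFounded.wf
  set g : ↥U → β.ToType := fun x => wf.min {i | x.1 ∈ enum i} (hne x) with hgdef
  have hg_mem : ∀ x : ↥U, x.1 ∈ enum (g x) := fun x => wf.min_mem _ (hne x)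
  have hg_min : ∀ (x : ↥U) (j), x.1 ∈ enum j → ¬ j < g x :=
    fun x j hj => wf.not_lt_min _ hj
  have hg_mono : Monotone g := by
    intro x y hxy
    have hx : x.1 ∈ enum (g y) := (henum (g y)).1 (Subtype.coe_le_coe.mpr hxy) (hg_mem y)
    exact le_of_not_gt (hg_min x (g y) hx)
  have hUmem : LinOrd.of ↥U ∈ 𝒞 := by
    refine mem_of_mono h𝒞 (LinOrd.of ↥U) β g hg_mono ?_
    intro i
    set P : Set ↥(enum i : Set ↥A) := {z | ∃ j, j < i ∧ z.1 ∈ enum j} with hPdef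
    have hPlow : IsLowerSet P := by
      rintro z w hwz ⟨j, hj, hzj⟩
      exact ⟨j, hj, (henum j).1 (Subtype.coe_le_coe.mpr hwz) hzj⟩
    have hPc : LinOrd.of ↥(Pᶜ) ∈ 𝒞 := compl_mem h𝒞 (henum i).2 hPlow
    refine mem_iso h𝒞 ?_ hPc
    have hEq : (Subtype.val '' (Pᶜ) : Set ↥A) =
        (Subtype.val '' {x : ↥U | g x = i} : Set ↥A) := by
      ext b
      constructor
      · rintro ⟨z, hz, rfl⟩
        have hbU : z.1 ∈ U := ⟨enum i, henum i, z.2⟩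
        refine ⟨⟨z.1, hbU⟩, ?_, rfl⟩
        show g ⟨z.1, hbU⟩ = i
        have h1 : ¬ g ⟨z.1, hbU⟩ < i := fun hlt => hz ⟨g ⟨z.1, hbU⟩, hlt, hg_mem ⟨z.1, hbU⟩⟩
        have h2 : ¬ i < g ⟨z.1, hbU⟩ := hg_min ⟨z.1, hbU⟩ i z.2
        exact le_antisymm (le_of_not_gt h2) (le_of_not_gt h1)
      · rintro ⟨x, hx, rfl⟩
        have hx' : g x = i := hx
        have hmem : x.1 ∈ enum i := hx' ▸ hg_mem x
        refine ⟨⟨x.1, hmem⟩, ?_, rfl⟩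
        rintro ⟨j, hj, hxj⟩
        exact hg_min x j hxj (hx' ▸ hj)
    exact (nestIso (enum i) (Pᶜ)).trans
      ((OrderIso.setCongr _ _ hEq).trans (nestIso U {x : ↥U | g x = i}).symm)
  have hmax : ∀ s ∈ S, s ⊆ U := fun s hs x hx => ⟨s, hs, hx⟩
  refine ⟨U, hUlow, hUmem, ?_⟩
  intro T hTlow hTne hTmem
  set T' : Set ↥A := Subtype.val '' T with hT'def
  set V : Set ↥A := U ∪ T' with hVdef
  have hUV : U ⊆ V := Set.subset_union_left
  have hVlow : IsLowerSet V := by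
    intro x y hyx hx
    rcases hx with hx | hx
    · exact Or.inl (hUlow hyx hx)
    · by_cases hyU : y ∈ U
      · exact Or.inl hyU
      · obtain ⟨z, hzT, rfl⟩ := hx
        right
        exact ⟨⟨y, hyU⟩, hTlow (Subtype.coe_le_coe.mp hyx) hzT, rfl⟩
  have hVmem : LinOrd.of ↥V ∈ 𝒞 := by
    refine mem_of_split h𝒞 (LinOrd.of ↥V) (s := {x : ↥V | x.1 ∈ U}) ?_ ?_ ?_
    · intro x y hyx hx
      exact hUlow (Subtype.coe_le_coe.mpr hyx) hx
    · refine mem_iso h𝒞 ?_ hUmem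
      have hEq : U = (Subtype.val '' {x : ↥V | x.1 ∈ U} : Set ↥A) := by
        ext b
        constructor
        · intro hb; exact ⟨⟨b, hUV hb⟩, hb, rfl⟩
        · rintro ⟨x, hx, rfl⟩; exact hx
      exact (OrderIso.setCongr _ _ hEq).trans (nestIso V {x : ↥V | x.1 ∈ U}).symm
    · refine mem_iso h𝒞 ?_ hTmem
      have hEq : (Subtype.val '' T : Set ↥A) =
          (Subtype.val '' ({x : ↥V | x.1 ∈ U}ᶜ) : Set ↥A) := by
        ext b
        constructor
        · rintro ⟨z, hzT, rfl⟩
          exact ⟨⟨z.1, Or.inr ⟨z, hzT, rfl⟩⟩, z.2, rfl⟩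
        · rintro ⟨x, hx, rfl⟩
          have : x.1 ∈ V := x.2
          rcases this with h | h
          · exact absurd h hx
          · exact h
      exact (nestIso (Uᶜ) T).trans
        ((OrderIso.setCongr _ _ hEq).trans (nestIso V ({x : ↥V | x.1 ∈ U}ᶜ)).symm)
  have hVS : V ∈ S := ⟨hVlow, hVmem⟩
  obtain ⟨x, hxT⟩ := hTne
  exact x.2 (hmax V hVS (Or.inr ⟨x, hxT, rfl⟩))

/-- **Rigidity.** For a left sum-generating class `𝒞`, every linear order `A` has a unique
partition into an initial segment belonging to `𝒞` and a complementary final segment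
belonging to `𝒞^⊥`; moreover this decomposition is preserved by every order isomorphism. -/
theorem rigidity {𝒞 : Set LinOrd.{u}} (h𝒞 : IsLeftSGC 𝒞) (A : LinOrd.{u}) :
    (∃! L : Set ↥A, IsLowerSet L ∧ LinOrd.of ↥L ∈ 𝒞 ∧ LinOrd.of ↥(Lᶜ) ∈ perpClass 𝒞) ∧
    (∀ (B : LinOrd.{u}) (f : ↥A ≃o ↥B) (L : Set ↥A) (M : Set ↥B),
      IsLowerSet L → LinOrd.of ↥L ∈ 𝒞 → LinOrd.of ↥(Lᶜ) ∈ perpClass 𝒞 →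
      IsLowerSet M → LinOrd.of ↥M ∈ 𝒞 → LinOrd.of ↥(Mᶜ) ∈ perpClass 𝒞 →
      ⇑f '' L = M ∧ ⇑f '' Lᶜ = Mᶜ) := by
  constructor
  · obtain ⟨L, hL⟩ := exists_decomp h𝒞 A
    exact ⟨L, hL, fun M hM => unique_full h𝒞 A hM.1 hM.2.1 hM.2.2 hL.1 hL.2.1 hL.2.2⟩
  · intro B f L M hLl hLm hLp hMl hMm hMp
    have h1 : IsLowerSet (⇑f '' L) := hLl.image f
    have h2 : LinOrd.of ↥(⇑f '' L) ∈ 𝒞 := mem_iso h𝒞 (imageIso f L) hLm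
    have hc : (⇑f '' L)ᶜ = ⇑f '' (Lᶜ) := (Set.image_compl_eq f.bijective).symm
    have h3 : LinOrd.of ↥((⇑f '' L)ᶜ) ∈ perpClass 𝒞 := by
      rw [hc]
      exact perp_iso h𝒞 (X := LinOrd.of ↥(Lᶜ)) (Y := LinOrd.of ↥(⇑f '' (Lᶜ))) hLp
        (imageIso f (Lᶜ))
    have hEq : ⇑f '' L = M := unique_full h𝒞 B h1 h2 h3 hMl hMm hMp
    refine ⟨hEq, ?_⟩
    rw [← hc, hEq]
end

section
/- For any left sum-generating class 𝒞, the dual class 𝒞^* is also a left sum-generating class. -/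
universe u

/-- The dual class `𝒞^*`: the class of all linear orders `L` such that the reverse order
`L^*` has no nonempty initial segment belonging to `𝒞`. -/
def dualClass (𝒞 : Set LinOrd.{u}) : Set LinOrd.{u} :=
  {A | ∀ S : Set (↥A)ᵒᵈ, IsLowerSet S → S.Nonempty → LinOrd.of ↥S ∉ 𝒞}

/-- Restriction of an order isomorphism to a preimage of a set. -/
def OrderIso.setPreimage {α β : Type*} [Preorder α] [Preorder β] (e : α ≃o β) (S : Set β) :
    (e ⁻¹' S : Set α) ≃o S where
  toEquiv := e.toEquiv.subtypeEquiv fun _ => Iff.rfl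
  map_rel_iff' := e.map_rel_iff

/-- Restriction of an order embedding to a set, as an order isomorphism onto the image. -/
noncomputable def OrderEmbedding.setImage {α β : Type*} [Preorder α] [Preorder β] (f : α ↪o β) (S : Set α) :
    S ≃o (f '' S : Set β) where
  toEquiv := Equiv.Set.image f S f.injective
  map_rel_iff' := f.map_rel_iff

/-- For any left sum-generating class `𝒞`, the dual class `𝒞^*` is also a left
sum-generating class. -/
theorem dualClass_isLeftSGC {𝒞 : Set LinOrd.{u}} (h𝒞 : IsLeftSGC 𝒞) :
    IsLeftSGC (dualClass 𝒞) := by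
  constructor
  · -- isomorphism closure
    rintro A B hA ⟨e⟩ S hS hSne hmem
    obtain ⟨s, hs⟩ := hSne
    refine hA (e.dual ⁻¹' S) (hS.preimage e.dual.monotone)
      ⟨e.dual.symm s, by simp [Set.mem_preimage, hs]⟩
      (h𝒞.iso_closed _ _ hmem ⟨(e.dual.setPreimage S).symm⟩)
  · -- final segments of two-term sums
    rintro A B hAB S hS hSne hmem
    let g : (↥B)ᵒᵈ ↪o (↥(LinOrd.of (↥A ⊕ₗ ↥B)))ᵒᵈ :=
      { toFun := fun b => OrderDual.toDual (toLex (Sum.inr (OrderDual.ofDual b)))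
        inj' := fun a b h =>
          Sum.inr_injective (toLex.injective (OrderDual.toDual.injective h))
        map_rel_iff' := by
          intro a b
          exact Sum.Lex.inr_le_inr_iff }
    refine hAB (g '' S) ?_ (hSne.image g) (h𝒞.iso_closed _ _ hmem ⟨g.setImage S⟩)
    rintro x y hyx ⟨b, hb, rfl⟩
    -- `hyx : y ≤ g b` in the dual order, i.e. `inr b ≤ y` in the lex sum
    have h' : Sum.Lex (· ≤ ·) (· ≤ ·) (Sum.inr (OrderDual.ofDual b))
        (ofLex (OrderDual.ofDual y)) := Sum.Lex.le_def.1 hyx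
    cases h' with
    | inr h' =>
        rename_i b'
        have hb' : OrderDual.toDual b' ∈ S := hS (show OrderDual.toDual b' ≤ b from h') hb
        exact ⟨OrderDual.toDual b', hb', rfl⟩
  · -- ordinal-indexed sums
    rintro β A hA S hSlow hSne hmem
    -- the set of indices meeting `S`
    set I : Set β.ToType :=
      {i | ∃ a : ↥(A i), OrderDual.toDual (toLex (⟨i, a⟩ : Σ i, ↥(A i))) ∈ S} with hI
    have hIne : I.Nonempty := by
      obtain ⟨x, hx⟩ := hSne
      refine ⟨(ofLex (OrderDual.ofDual x)).1, (ofLex (OrderDual.ofDual x)).2, ?_⟩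
      have : (⟨(ofLex (OrderDual.ofDual x)).1, (ofLex (OrderDual.ofDual x)).2⟩ :
          Σ i, ↥(A i)) = ofLex (OrderDual.ofDual x) := Sigma.eta _
      rw [this]; exact hx
    have wf : WellFounded ((· < ·) : β.ToType → β.ToType → Prop) := wellFounded_lt
    set i₀ := wf.min I hIne with hi₀
    have h₀ : i₀ ∈ I := wf.min_mem I hIne
    have hmin : ∀ j ∈ I, ¬ j < i₀ := fun j hj => wf.not_lt_min I hj
    -- the trace of `S` on the fiber over `i₀`
    set T : Set (↥(A i₀))ᵒᵈ :=
      {a | OrderDual.toDual (toLex (⟨i₀, OrderDual.ofDual a⟩ : Σ i, ↥(A i))) ∈ S} with hT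
    have hTlow : IsLowerSet T := by
      intro a b hba ha
      refine hSlow ?_ ha
      show OrderDual.ofDual (OrderDual.toDual (toLex (⟨i₀, OrderDual.ofDual a⟩ : Σ i, ↥(A i))))
        ≤ _
      refine Sigma.Lex.le_def.2 (Or.inr ⟨rfl, ?_⟩)
      exact hba
    have hTne : T.Nonempty := by
      obtain ⟨a, ha⟩ := h₀
      exact ⟨OrderDual.toDual a, ha⟩
    -- the part of `S` above the fiber over `i₀`
    set U : Set (↥(LinOrd.of (Σₗ i, ↥(A i))))ᵒᵈ :=
      {x | x ∈ S ∧ (ofLex (OrderDual.ofDual x)).1 ≠ i₀} with hU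
    -- key fact : every element of `S` has index `≥ i₀`
    have hidx : ∀ x ∈ S, ¬ (ofLex (OrderDual.ofDual x)).1 < i₀ := by
      intro x hx
      refine hmin _ ⟨(ofLex (OrderDual.ofDual x)).2, ?_⟩
      have : (⟨(ofLex (OrderDual.ofDual x)).1, (ofLex (OrderDual.ofDual x)).2⟩ :
          Σ i, ↥(A i)) = ofLex (OrderDual.ofDual x) := Sigma.eta _
      rw [this]; exact hx
    -- decompose `S` as the lexicographic sum `U ⊕ₗ T`
    let f : (↥(LinOrd.of ↥U) ⊕ₗ ↥(LinOrd.of ↥T)) → ↥S := fun x =>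
      match ofLex x with
      | Sum.inl u => ⟨u.1, u.2.1⟩
      | Sum.inr t => ⟨OrderDual.toDual (toLex (⟨i₀, OrderDual.ofDual t.1⟩ : Σ i, ↥(A i))), t.2⟩
    have hfmono : StrictMono f := by
      intro x y hxy
      have h' := Sum.Lex.lt_def.1 hxy
      cases h' with
      | inl h' =>
          exact h'
      | inr h' =>
          rename_i t t'
          show f (toLex (Sum.inr t)) < f (toLex (Sum.inr t'))
          refine Subtype.mk_lt_mk.2 ?_
          show OrderDual.toDual (toLex (⟨i₀, OrderDual.ofDual t.1⟩ : Σ i, ↥(A i))) <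
            OrderDual.toDual (toLex (⟨i₀, OrderDual.ofDual t'.1⟩ : Σ i, ↥(A i)))
          refine Sigma.Lex.lt_def.2 (Or.inr ⟨rfl, ?_⟩)
          exact h'
      | sep u t =>
          show f (toLex (Sum.inl u)) < f (toLex (Sum.inr t))
          refine Subtype.mk_lt_mk.2 ?_
          show (toLex (⟨i₀, OrderDual.ofDual t.1⟩ : Σ i, ↥(A i))) <
            OrderDual.ofDual u.1
          refine Sigma.Lex.lt_def.2 (Or.inl ?_)
          obtain ⟨hu1, hu2⟩ := u.2
          have h1 := hidx u.1 hu1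
          exact lt_of_le_of_ne (not_lt.1 h1) (Ne.symm hu2)
    have hfsurj : Function.Surjective f := by
      rintro ⟨x, hx⟩
      rcases hp : ofLex (OrderDual.ofDual x) with ⟨j, a⟩
      have hx' : x = OrderDual.toDual (toLex (⟨j, a⟩ : Σ i, ↥(A i))) := by
        rw [← hp]; rfl
      by_cases h : j = i₀
      · subst h
        have ha : OrderDual.toDual a ∈ T := by
          show OrderDual.toDual (toLex (⟨i₀, a⟩ : Σ i, ↥(A i))) ∈ S
          exact hx' ▸ hx
        refine ⟨toLex (Sum.inr ⟨OrderDual.toDual a, ha⟩), ?_⟩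
        apply Subtype.ext
        show OrderDual.toDual (toLex (⟨i₀, a⟩ : Σ i, ↥(A i))) = x
        exact hx'.symm
      · have hu : x ∈ U := ⟨hx, by rw [hp]; exact h⟩
        exact ⟨toLex (Sum.inl ⟨x, hu⟩), rfl⟩
    have e := StrictMono.orderIsoOfSurjective f hfmono hfsurj
    have hsum : LinOrd.of (↥(LinOrd.of ↥U) ⊕ₗ ↥(LinOrd.of ↥T)) ∈ 𝒞 :=
      h𝒞.iso_closed _ _ hmem ⟨e.symm⟩
    exact hA i₀ T hTlow hTne (h𝒞.final_mem _ _ hsum)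
end

section
/- Let 𝒞 be a left sum-generating class. If A belongs to 𝒞 and B belongs to 𝒞^⊥, then the lexicographic sum B + A belongs to 𝒞 or to 𝒞^⊥. -/
universe u

/-- A lex sigma over a two-element index is order-isomorphic to the binary lex sum. -/
lemma sigma_two_iso {ι : Type u} [LinearOrder ι] {a b : ι} (hab : a < b)
    (hall : ∀ i, i = a ∨ i = b) (γ : ι → LinOrd.{u}) :
    Nonempty ((Σₗ i, ↥(γ i)) ≃o (↥(γ a) ⊕ₗ ↥(γ b))) := by
  let f : ↥(γ a) ⊕ₗ ↥(γ b) → (Σₗ i, ↥(γ i)) :=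
    fun x => Sum.elim (fun u => toLex ⟨a, u⟩) (fun v => toLex ⟨b, v⟩) (ofLex x)
  have hmono : StrictMono f := by
    rintro (u | u) (v | v) h
    · exact @Sigma.Lex.right ι (fun i => ↥(γ i)) (· < ·) (fun i x y => x < y) a u v
        (Sum.Lex.inl_lt_inl_iff.mp h)
    · exact @Sigma.Lex.left ι (fun i => ↥(γ i)) (· < ·) (fun i x y => x < y) a b u v hab
    · exact (Sum.Lex.not_inr_lt_inl h).elim
    · exact @Sigma.Lex.right ι (fun i => ↥(γ i)) (· < ·) (fun i x y => x < y) b u v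
        (Sum.Lex.inr_lt_inr_iff.mp h)
  have hsurj : Function.Surjective f := by
    rintro ⟨i, z⟩
    rcases hall i with rfl | rfl
    · exact ⟨Sum.inl z, rfl⟩
    · exact ⟨Sum.inr z, rfl⟩
  exact ⟨(StrictMono.orderIsoOfSurjective f hmono hsurj).symm⟩

/-- A left SGC is closed under binary lexicographic sums. -/
lemma IsLeftSGC.binary_mem {𝒞 : Set LinOrd.{u}} (h𝒞 : IsLeftSGC 𝒞)
    (X Y : LinOrd.{u}) (hX : X ∈ 𝒞) (hY : Y ∈ 𝒞) :
    LinOrd.of (↥X ⊕ₗ ↥Y) ∈ 𝒞 := by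
  classical
  let f := Ordinal.ToType.mk (o := (2 : Ordinal.{u}))
  set a : (2 : Ordinal.{u}).ToType := f ⟨0, by norm_num⟩ with ha
  set b : (2 : Ordinal.{u}).ToType := f ⟨1, by norm_num⟩ with hb
  have hab : a < b := f.lt_iff_lt.2 (by exact Subtype.mk_lt_mk.2 zero_lt_one)
  have hall : ∀ i, i = a ∨ i = b := by
    intro i
    have h2 : (f.symm i : Ordinal) < 2 := (f.symm i).2
    have h1 : (f.symm i : Ordinal) ≤ 1 :=
      Order.lt_succ_iff.1 (by rw [Ordinal.succ_one]; exact h2)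
    rcases Ordinal.le_one_iff.1 h1 with h0 | h0
    · left
      have : f.symm i = ⟨0, by norm_num⟩ := Subtype.ext h0
      rw [← f.apply_symm_apply i, this]
    · right
      have : f.symm i = ⟨1, by norm_num⟩ := Subtype.ext h0
      rw [← f.apply_symm_apply i, this]
  set γ : (2 : Ordinal.{u}).ToType → LinOrd.{u} := fun i => if i = a then X else Y with hγ
  have hγa : γ a = X := if_pos rfl
  have hγb : γ b = Y := if_neg hab.ne'
  have hmem : ∀ i, γ i ∈ 𝒞 := by
    intro i
    rcases hall i with rfl | rfl
    · rwa [hγa]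
    · rwa [hγb]
  have hsum := h𝒞.ordSum_mem 2 γ hmem
  have hiso : Nonempty ((Σₗ i, ↥(γ i)) ≃o (↥(γ a) ⊕ₗ ↥(γ b))) := sigma_two_iso hab hall γ
  rw [hγa, hγb] at hiso
  exact h𝒞.iso_closed _ _ hsum hiso

/-- If `𝒞` is a left sum-generating class, `A ∈ 𝒞` and `B ∈ 𝒞^⊥`, then the lexicographic
sum `B + A` belongs to `𝒞` or to `𝒞^⊥`. -/
theorem revSum_mem_or_mem_perp {𝒞 : Set LinOrd.{u}} (h𝒞 : IsLeftSGC 𝒞)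
    (A B : LinOrd.{u}) (hA : A ∈ 𝒞) (hB : B ∈ perpClass 𝒞) :
    LinOrd.of (↥B ⊕ₗ ↥A) ∈ 𝒞 ∨ LinOrd.of (↥B ⊕ₗ ↥A) ∈ perpClass 𝒞 := by
  classical
  by_cases hperp : LinOrd.of (↥B ⊕ₗ ↥A) ∈ perpClass 𝒞
  · exact Or.inr hperp
  left
  -- there is a nonempty lower set `L` of `B ⊕ₗ A` with `L ∈ 𝒞`
  simp only [perpClass, Set.mem_setOf_eq, not_forall] at hperp
  obtain ⟨L, hLlow, hLne, hLmem⟩ := hperp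
  rw [not_not] at hLmem
  -- `L` must meet the `A` part
  by_cases hmeet : ∃ x : ↥A, (toLex (Sum.inr x) : ↥B ⊕ₗ ↥A) ∈ L
  · obtain ⟨a₀, ha₀⟩ := hmeet
    -- the trace of `L` on `A`, a lower set `S` of `A`
    set S : Set ↥A := {x : ↥A | (toLex (Sum.inr x) : ↥B ⊕ₗ ↥A) ∈ L} with hS
    have hSlow : IsLowerSet S := by
      intro x y hxy hx
      exact hLlow (show (toLex (Sum.inr y) : ↥B ⊕ₗ ↥A) ≤ toLex (Sum.inr x) from
        Sum.Lex.inr_le_inr_iff.2 hxy) hx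
    -- every element of `B` part is in `L`
    have hBsub : ∀ b : ↥B, (toLex (Sum.inl b) : ↥B ⊕ₗ ↥A) ∈ L := fun b =>
      hLlow (show (toLex (Sum.inl b) : ↥B ⊕ₗ ↥A) ≤ toLex (Sum.inr a₀) from
        Sum.Lex.inl_le_inr b a₀) ha₀
    -- `A ≃o S ⊕ₗ Sᶜ`, so `Sᶜ ∈ 𝒞`
    have hFiso : Nonempty (↥A ≃o (↥S ⊕ₗ ↥(Sᶜ : Set ↥A))) := by
      let g : (↥S ⊕ₗ ↥(Sᶜ : Set ↥A)) → ↥A :=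
        fun x => Sum.elim (fun u => u.1) (fun v => v.1) (ofLex x)
      have hmono : StrictMono g := by
        rintro (⟨u, hu⟩ | ⟨u, hu⟩) (⟨v, hv⟩ | ⟨v, hv⟩) h
        · exact Subtype.coe_lt_coe.2 (Sum.Lex.inl_lt_inl_iff.mp h)
        · exact lt_of_not_ge fun hle => hv (hSlow hle hu)
        · exact (Sum.Lex.not_inr_lt_inl h).elim
        · exact Subtype.coe_lt_coe.2 (Sum.Lex.inr_lt_inr_iff.mp h)
      have hsurj : Function.Surjective g := by
        intro x
        by_cases hx : x ∈ S
        · exact ⟨Sum.inl ⟨x, hx⟩, rfl⟩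
        · exact ⟨Sum.inr ⟨x, hx⟩, rfl⟩
      exact ⟨(StrictMono.orderIsoOfSurjective g hmono hsurj).symm⟩
    have hFmem : LinOrd.of ↥(Sᶜ : Set ↥A) ∈ 𝒞 :=
      h𝒞.final_mem (LinOrd.of ↥S) (LinOrd.of ↥(Sᶜ : Set ↥A))
        (h𝒞.iso_closed A (LinOrd.of (↥S ⊕ₗ ↥(Sᶜ : Set ↥A))) hA hFiso)
    -- `B ⊕ₗ A ≃o L ⊕ₗ Sᶜ`
    have hmain : Nonempty ((↥(LinOrd.of ↥L) ⊕ₗ ↥(LinOrd.of ↥(Sᶜ : Set ↥A))) ≃o (↥B ⊕ₗ ↥A)) := by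
      let g : (↥L ⊕ₗ ↥(Sᶜ : Set ↥A)) → (↥B ⊕ₗ ↥A) :=
        fun x => Sum.elim (fun u => u.1) (fun v => toLex (Sum.inr v.1)) (ofLex x)
      have key : ∀ (u : ↥L) (v : ↥(Sᶜ : Set ↥A)), u.1 < toLex (Sum.inr v.1) := by
        rintro ⟨u, hu⟩ ⟨v, hv⟩
        rcases h : (ofLex u) with ub | ua
        · have huu : u = toLex (Sum.inl ub) := h
          subst huu
          exact Sum.Lex.inl_lt_inr ub v
        · have huu : u = toLex (Sum.inr ua) := h
          subst huu
          exact Sum.Lex.inr_lt_inr_iff.2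
            (lt_of_not_ge fun hle => hv (hSlow hle (show ua ∈ S from hu)))
      have hmono : StrictMono g := by
        rintro (u | u) (v | v) h
        · exact Subtype.coe_lt_coe.2 (Sum.Lex.inl_lt_inl_iff.mp h)
        · exact key u v
        · exact (Sum.Lex.not_inr_lt_inl h).elim
        · exact Sum.Lex.inr_lt_inr_iff.2 (Subtype.coe_lt_coe.2 (Sum.Lex.inr_lt_inr_iff.mp h))
      have hsurj : Function.Surjective g := by
        rintro x
        rcases hx : (ofLex x) with xb | xa
        · exact ⟨Sum.inl ⟨x, by rw [show x = toLex (Sum.inl xb) from hx]; exact hBsub xb⟩, rfl⟩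
        · by_cases hxa : xa ∈ S
          · exact ⟨Sum.inl ⟨x, by rw [show x = toLex (Sum.inr xa) from hx]; exact hxa⟩, rfl⟩
          · exact ⟨Sum.inr ⟨xa, hxa⟩, (show x = toLex (Sum.inr xa) from hx).symm⟩
      exact ⟨StrictMono.orderIsoOfSurjective g hmono hsurj⟩
    exact h𝒞.iso_closed _ _
      (h𝒞.binary_mem (LinOrd.of ↥L) (LinOrd.of ↥(Sᶜ : Set ↥A)) hLmem hFmem) hmain
  · -- `L` lies in the `B` part, contradicting `B ∈ 𝒞^⊥`
    push_neg at hmeet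
    set L' : Set ↥B := {x : ↥B | (toLex (Sum.inl x) : ↥B ⊕ₗ ↥A) ∈ L} with hL'
    have hL'low : IsLowerSet L' := by
      intro x y hxy hx
      exact hLlow (show (toLex (Sum.inl y) : ↥B ⊕ₗ ↥A) ≤ toLex (Sum.inl x) from
        Sum.Lex.inl_le_inl_iff.2 hxy) hx
    have hL'ne : L'.Nonempty := by
      obtain ⟨x, hx⟩ := hLne
      rcases h : (ofLex x) with xb | xa
      · exact ⟨xb, by rwa [show x = toLex (Sum.inl xb) from h] at hx⟩
      · exact absurd (by rwa [show x = toLex (Sum.inr xa) from h] at hx) (hmeet xa)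
    have hiso : Nonempty (↥(LinOrd.of ↥L) ≃o ↥(LinOrd.of ↥L')) := by
      let g : ↥L' → ↥L := fun x => ⟨toLex (Sum.inl x.1), x.2⟩
      have hmono : StrictMono g := by
        rintro ⟨u, hu⟩ ⟨v, hv⟩ h
        exact Sum.Lex.inl_lt_inl_iff.2 (Subtype.coe_lt_coe.1 h)
      have hsurj : Function.Surjective g := by
        rintro ⟨x, hx⟩
        rcases h : (ofLex x) with xb | xa
        · refine ⟨⟨xb, by rwa [show x = toLex (Sum.inl xb) from h] at hx⟩, ?_⟩
          exact Subtype.ext (show x = toLex (Sum.inl xb) from h).symm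
        · exact absurd (by rwa [show x = toLex (Sum.inr xa) from h] at hx) (hmeet xa)
      exact ⟨(StrictMono.orderIsoOfSurjective g hmono hsurj).symm⟩
    exact absurd (h𝒞.iso_closed (LinOrd.of ↥L) (LinOrd.of ↥L') hLmem hiso)
      (hB L' hL'low hL'ne)
end

section
/- Let S be a class of ordinals containing a nonzero ordinal such that: (a) whenever α + β ∈ S, then β ∈ S; and (b) for every ordinal δ and every function f assigning to each ordinal i < δ a member of S, the ordinal-indexed sum Σ_{i<δ} f(i) (the order type of the lexicographic sum of the family) belongs to S. Then there exists an ordinal γ such that S is exactly the class of ordinals of the form ω^γ · δ for an ordinal δ, i.e., S is the class of ordinals left-divisible by ω^γ. -/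
universe u v

instance sigmaLexWellFoundedLT (ι : Type u) [LinearOrder ι] [WellFoundedLT ι]
    (α : ι → Type v) [∀ i, LinearOrder (α i)] [∀ i, WellFoundedLT (α i)] :
    WellFoundedLT (Σₗ i, α i) := by
  constructor
  have hp : WellFounded (PSigma.Lex ((· < ·) : ι → ι → Prop)
      fun i => ((· < ·) : α i → α i → Prop)) :=
    WellFounded.psigma_lex wellFounded_lt fun i => wellFounded_lt
  have hinv : WellFounded (InvImage
      (PSigma.Lex ((· < ·) : ι → ι → Prop) fun i => ((· < ·) : α i → α i → Prop))
      (fun x : Σₗ i, α i => (⟨(ofLex x).1, (ofLex x).2⟩ : Σ' i, α i))) :=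
    InvImage.wf _ hp
  refine Subrelation.wf (fun {a b} hab => ?_) hinv
  rw [Sigma.Lex.lt_def] at hab
  unfold InvImage
  rcases hab with h | ⟨h, h'⟩
  · exact PSigma.Lex.left _ _ h
  · obtain ⟨i, a⟩ := a
    obtain ⟨j, b⟩ := b
    dsimp only at h h' ⊢
    subst h
    exact PSigma.Lex.right _ h'

/-- The ordinal-indexed sum `Σ_{i<δ} f i` of ordinals: the order type of the lexicographic
sum of the family `(f i)_{i<δ}`. -/
noncomputable def ordIndexedSum (δ : Ordinal.{u}) (f : Ordinal.{u} → Ordinal.{u}) :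
    Ordinal.{u} :=
  @Ordinal.type (Σₗ i : δ.ToType, (f (@Ordinal.typein δ.ToType (· < ·) isWellOrder_lt i)).ToType)
    (· < ·) isWellOrder_lt

theorem ordIndexedSum_const (δ μ : Ordinal.{u}) :
    ordIndexedSum δ (fun _ => μ) = μ * δ := by
  show (@Ordinal.type (Σₗ _ : δ.ToType, μ.ToType) (· < ·) isWellOrder_lt) = μ * δ
  have h := @Ordinal.type_prod_lex μ.ToType δ.ToType (· < ·) (· < ·)
      isWellOrder_lt isWellOrder_lt
  rw [Ordinal.type_toType, Ordinal.type_toType] at h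
  refine Eq.trans ?_ h
  refine (@Ordinal.type_eq _ _ _ _ isWellOrder_lt
      (@instIsWellOrderProdLex _ _ _ _ isWellOrder_lt isWellOrder_lt)).2
    ⟨⟨Equiv.sigmaEquivProd δ.ToType μ.ToType, ?_⟩⟩
  rintro ⟨i, x⟩ ⟨j, y⟩
  simp only [Equiv.sigmaEquivProd, Equiv.coe_fn_mk, Prod.lex_def]
  change (i < j ∨ i = j ∧ x < y) ↔
    (toLex ⟨i, x⟩ : Σₗ _ : δ.ToType, μ.ToType) < toLex ⟨j, y⟩
  rw [Sigma.Lex.lt_def]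
  constructor
  · intro hab
    rcases hab with h | ⟨h, h2⟩
    · exact Or.inl h
    · cases h
      exact Or.inr ⟨rfl, h2⟩
  · intro hab
    rcases hab with h | ⟨h, h2⟩
    · exact Or.inl h
    · cases h
      exact Or.inr ⟨rfl, h2⟩

/-- **Every sum-generating class of well-orders is principal.** If a class `S` of ordinals
contains a nonzero ordinal, is closed under final segments (`α + β ∈ S → β ∈ S`) and under
ordinal-indexed sums of members, then there is an ordinal `γ` such that `S` is exactly the
class of ordinals left-divisible by `ω ^ γ`. -/
theorem sgc_of_ordinals_principal (S : Set Ordinal.{u})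
    (h0 : ∃ α ∈ S, α ≠ 0)
    (hfinal : ∀ α β : Ordinal.{u}, α + β ∈ S → β ∈ S)
    (hsum : ∀ (δ : Ordinal.{u}) (f : Ordinal.{u} → Ordinal.{u}),
      (∀ i < δ, f i ∈ S) → ordIndexedSum δ f ∈ S) :
    ∃ γ : Ordinal.{u}, S = {α | ∃ δ : Ordinal.{u}, α = Ordinal.omega0 ^ γ * δ} := by
  obtain ⟨α₀, hα₀S, hα₀⟩ := h0
  set T : Set Ordinal.{u} := {α | α ∈ S ∧ α ≠ 0} with hT
  have hTne : T.Nonempty := ⟨α₀, hα₀S, hα₀⟩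
  set μ : Ordinal.{u} := (wellFounded_lt (α := Ordinal.{u})).min T hTne with hμdef
  obtain ⟨hμS, hμ0⟩ : μ ∈ S ∧ μ ≠ 0 := (wellFounded_lt).min_mem T hTne
  have hmin : ∀ β ∈ S, β ≠ 0 → ¬ β < μ := fun β hβ hβ0 =>
    (wellFounded_lt).not_lt_min T ⟨hβ, hβ0⟩
  -- all multiples of μ are in S
  have hmul : ∀ δ : Ordinal.{u}, μ * δ ∈ S := fun δ => by
    have := hsum δ (fun _ => μ) (fun i _ => hμS)
    rwa [ordIndexedSum_const] at this
  -- μ is additively principal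
  have hprin : Ordinal.Principal (· + ·) μ := by
    intro a b ha hb
    by_contra hle
    push_neg at hle
    have hsub : μ = a + (μ - a) := (Ordinal.add_sub_cancel_of_le ha.le).symm
    have hmem : μ - a ∈ S := hfinal a (μ - a) (hsub ▸ hμS)
    have hne : μ - a ≠ 0 := fun h => by
      rw [Ordinal.sub_eq_zero_iff_le] at h
      exact absurd h ha.not_ge
    have hlt : μ - a < μ := lt_of_le_of_lt (Ordinal.sub_le.2 hle) hb
    exact hmin _ hmem hne hlt
  obtain hz | ⟨γ, hγ'⟩ := Ordinal.principal_add_iff_zero_or_omega0_opow.1 hprin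
  · exact absurd hz hμ0
  have hγ : Ordinal.omega0 ^ γ = μ := hγ'
  refine ⟨γ, Set.ext fun α => ⟨fun hα => ?_, fun ⟨δ, hδ⟩ => ?_⟩⟩
  · -- α ∈ S → α is a multiple of μ = ω ^ γ
    have hd := Ordinal.div_add_mod α μ
    have hrS : α % μ ∈ S := hfinal (μ * (α / μ)) (α % μ) (by rw [hd]; exact hα)
    have hr0 : α % μ = 0 := by
      by_contra hr
      exact hmin _ hrS hr (Ordinal.mod_lt α hμ0)
    refine ⟨α / μ, ?_⟩
    rw [hγ]
    conv_lhs => rw [← hd]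
    rw [hr0, add_zero]
  · rw [hδ, hγ]
    exact hmul δ
end

section
/- Let 𝒞 be a left sum-generating class. Then there exist linear orders A and B, together with decompositions A ≅ A_L + A_R and B ≅ B_L + B_R where A_L, B_L ∈ 𝒞 and A_R, B_R ∈ 𝒞^⊥, such that the lexicographic sum B_L + A + B_R is not order-isomorphic to the lexicographic sum A_L + B + A_R. (That is, the simple sum generated by 𝒞 is not commutative.) -/
universe u

namespace SGCAux

open Sum

instance : LinearOrder PEmpty.{u+1} :=
  LinearOrder.lift' (fun x : PEmpty.{u+1} => (isEmptyElim x : PUnit.{u+1}))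
    (fun a => isEmptyElim a)

instance : IsEmpty ↥(LinOrd.of PEmpty.{u+1}) := inferInstanceAs (IsEmpty PEmpty)

instance : Unique ↥(LinOrd.of PUnit.{u+1}) := inferInstanceAs (Unique PUnit)

instance : WellFoundedLT (ULift.{u} ℕ) :=
  ⟨InvImage.wf (fun x : ULift ℕ => x.down) Nat.lt_wfRel.wf⟩

/-- Case analysis for lexicographic sums. -/
lemma lex_cases {α β : Type*} (x : α ⊕ₗ β) :
    (∃ a, x = toLex (Sum.inl a)) ∨ (∃ b, x = toLex (Sum.inr b)) := by
  rcases h : ofLex x with a | b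
  · exact Or.inl ⟨a, by rw [← h]; rfl⟩
  · exact Or.inr ⟨b, by rw [← h]; rfl⟩

/-- The lexicographic sigma of singleton fibers is isomorphic to the index order. -/
def sigmaUniqueIso {ι : Type*} [LinearOrder ι] (π : ι → Type*) [∀ i, Unique (π i)]
    [∀ i, Preorder (π i)] : (Σₗ i, π i) ≃o ι where
  toFun x := (ofLex x).1
  invFun i := toLex ⟨i, default⟩
  left_inv x := by
    obtain ⟨i, a⟩ := x
    show (⟨i, default⟩ : Σ i, π i) = ⟨i, a⟩
    rw [Unique.eq_default a]
  right_inv i := rfl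
  map_rel_iff' := by
    intro a b
    obtain ⟨i, x⟩ := a; obtain ⟨j, y⟩ := b
    constructor
    · intro h
      rcases lt_or_eq_of_le h with h | h
      · exact Sigma.Lex.le_def.mpr (Or.inl h)
      · subst h
        exact Sigma.Lex.le_def.mpr (Or.inr ⟨rfl, le_of_eq (Subsingleton.elim x y)⟩)
    · intro h
      rcases Sigma.Lex.le_def.mp h with h | ⟨h, _⟩
      · exact le_of_lt h
      · exact le_of_eq h

/-- The canonical type of the ordinal of `ULift ℕ` is isomorphic to `ULift ℕ`. -/
noncomputable def toTypeNatIso :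
    (Ordinal.type ((· < ·) : ULift.{u} ℕ → ULift.{u} ℕ → Prop)).ToType ≃o ULift.{u} ℕ := by
  haveI i1 : IsWellOrder
      (Ordinal.type ((· < ·) : ULift.{u} ℕ → ULift.{u} ℕ → Prop)).ToType
      ((· < ·) : _ → _ → Prop) := isWellOrder_lt
  have h : Ordinal.type
        ((· < ·) : (Ordinal.type ((· < ·) : ULift.{u} ℕ → ULift.{u} ℕ → Prop)).ToType →
          (Ordinal.type ((· < ·) : ULift.{u} ℕ → ULift.{u} ℕ → Prop)).ToType → Prop)
      = Ordinal.type ((· < ·) : ULift.{u} ℕ → ULift.{u} ℕ → Prop) :=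
    Ordinal.type_toType _
  exact OrderIso.ofRelIsoLT (Classical.choice (Ordinal.type_eq.mp h))

variable {𝒞 : Set LinOrd.{u}}

lemma empty_mem (h : IsLeftSGC 𝒞) : LinOrd.of PEmpty.{u+1} ∈ 𝒞 := by
  have h0 := h.ordSum_mem 0 (fun _ => LinOrd.of PEmpty.{u+1}) (fun i => isEmptyElim i)
  refine h.iso_closed _ (LinOrd.of PEmpty.{u+1}) h0 ⟨?_⟩
  exact { toFun := fun x => isEmptyElim (ofLex x).1
          invFun := fun x => isEmptyElim x
          left_inv := fun x => isEmptyElim (ofLex x).1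
          right_inv := fun x => isEmptyElim x
          map_rel_iff' := fun {a b} => isEmptyElim (ofLex a).1 }

lemma empty_perp : LinOrd.of PEmpty.{u+1} ∈ perpClass 𝒞 := by
  rintro L _ ⟨x, _⟩
  exact isEmptyElim x

lemma nat_mem (h : IsLeftSGC 𝒞) (h1 : LinOrd.of PUnit.{u+1} ∈ 𝒞) :
    LinOrd.of (ULift.{u} ℕ) ∈ 𝒞 := by
  have h0 := h.ordSum_mem (Ordinal.type ((· < ·) : ULift.{u} ℕ → ULift.{u} ℕ → Prop))
    (fun _ => LinOrd.of PUnit.{u+1}) (fun _ => h1)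
  exact h.iso_closed _ _ h0 ⟨(sigmaUniqueIso _).trans toTypeNatIso⟩

lemma punit_perp (h : IsLeftSGC 𝒞) (h1 : LinOrd.of PUnit.{u+1} ∉ 𝒞) :
    LinOrd.of PUnit.{u+1} ∈ perpClass 𝒞 := by
  rintro L _ ⟨x, hx⟩ hmem
  refine h1 (h.iso_closed _ _ hmem ⟨?_⟩)
  haveI hss : Subsingleton ↥(LinOrd.of ↥L) :=
    ⟨fun a b => Subtype.ext (Subsingleton.elim _ _)⟩
  exact { toFun := fun _ => PUnit.unit
          invFun := fun _ => ⟨x, hx⟩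
          left_inv := fun y => Subsingleton.elim _ _
          right_inv := fun y => rfl
          map_rel_iff' := fun {a b} => by
            constructor
            · intro _
              exact (Subsingleton.elim a b).le
            · intro _
              exact le_refl _ }

/-- Shift isomorphism `ℕᵒᵈ + 1 ≃o ℕᵒᵈ`. -/
noncomputable def shiftIso : ((ULift.{u} ℕ)ᵒᵈ ⊕ₗ PUnit.{u+1}) ≃o (ULift.{u} ℕ)ᵒᵈ := by
  refine StrictMono.orderIsoOfSurjective
    (fun x => Sum.elim
      (fun n => OrderDual.toDual (ULift.up ((OrderDual.ofDual n).down + 1)))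
      (fun _ => OrderDual.toDual (ULift.up 0)) (ofLex x)) ?_ ?_
  · intro a b hab
    rcases lex_cases a with ⟨n, rfl⟩ | ⟨v, rfl⟩ <;> rcases lex_cases b with ⟨m, rfl⟩ | ⟨w, rfl⟩
    · have h1 : n < m := Sum.Lex.inl_lt_inl_iff.mp hab
      have h2 : OrderDual.ofDual m < OrderDual.ofDual n := h1
      have h3 : (OrderDual.ofDual m).down < (OrderDual.ofDual n).down := h2
      show OrderDual.toDual ((ULift.up ((OrderDual.ofDual n).down + 1) : ULift.{u} ℕ))
          < OrderDual.toDual ((ULift.up ((OrderDual.ofDual m).down + 1) : ULift.{u} ℕ))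
      rw [OrderDual.toDual_lt_toDual, ULift.up_lt]
      omega
    · show OrderDual.toDual ((ULift.up ((OrderDual.ofDual n).down + 1) : ULift.{u} ℕ))
          < OrderDual.toDual ((ULift.up 0 : ULift.{u} ℕ))
      rw [OrderDual.toDual_lt_toDual, ULift.up_lt]
      omega
    · exact absurd hab Sum.Lex.not_inr_lt_inl
    · exact absurd (Sum.Lex.inr_lt_inr_iff.mp hab) (lt_irrefl _)
  · intro n
    rcases hn : (OrderDual.ofDual n).down with _ | m
    · refine ⟨toLex (inr PUnit.unit), ?_⟩
      show OrderDual.toDual (ULift.up 0) = n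
      rw [← hn]
      rfl
    · refine ⟨toLex (inl (OrderDual.toDual (ULift.up m))), ?_⟩
      show OrderDual.toDual (ULift.up (m + 1)) = n
      rw [← hn]
      rfl

lemma natdual_notmem (h : IsLeftSGC 𝒞) (h1 : LinOrd.of PUnit.{u+1} ∉ 𝒞) :
    LinOrd.of (ULift.{u} ℕ)ᵒᵈ ∉ 𝒞 := by
  intro hmem
  have h2 : LinOrd.of (↥(LinOrd.of (ULift.{u} ℕ)ᵒᵈ) ⊕ₗ ↥(LinOrd.of PUnit.{u+1})) ∈ 𝒞 :=
    h.iso_closed _ _ hmem ⟨(shiftIso.{u}).symm⟩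
  exact h1 (h.final_mem _ _ h2)

lemma natdual_perp (h : IsLeftSGC 𝒞) (h1 : LinOrd.of PUnit.{u+1} ∉ 𝒞) :
    LinOrd.of (ULift.{u} ℕ)ᵒᵈ ∈ perpClass 𝒞 := by
  rintro L hL ⟨x, hx⟩ hmem
  refine natdual_notmem h h1 (h.iso_closed _ _ hmem ?_)
  -- `L` is a nonempty lower set of `ℕᵒᵈ`, hence an upper set of `ℕ`; it is iso to `ℕᵒᵈ`.
  have hxS : (OrderDual.ofDual x).down ∈ {m : ℕ | OrderDual.toDual (ULift.up m) ∈ L} := hx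
  set k : ℕ := sInf {m : ℕ | OrderDual.toDual (ULift.up m) ∈ L} with hk
  have hkS : k ∈ {m : ℕ | OrderDual.toDual (ULift.up m) ∈ L} := Nat.sInf_mem ⟨_, hxS⟩
  have hup : ∀ m : ℕ, k ≤ m → OrderDual.toDual (ULift.up m) ∈ L := by
    intro m hm
    exact hL (show (m : ℕ) ≥ k from hm) hkS
  have hdown : ∀ y : ↥(LinOrd.of (ULift.{u} ℕ)ᵒᵈ), y ∈ L →
      k ≤ (OrderDual.ofDual y).down := by
    intro y hy
    exact Nat.sInf_le hy
  suffices e : ↥L ≃o (ULift.{u} ℕ)ᵒᵈ by exact ⟨e⟩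
  refine (StrictMono.orderIsoOfSurjective
    (fun n : (ULift.{u} ℕ)ᵒᵈ =>
      (⟨OrderDual.toDual (ULift.up ((OrderDual.ofDual n).down + k)),
        hup _ (by omega)⟩ : ↥L))
    ?_ ?_).symm
  · intro a b hab
    have h2 : OrderDual.ofDual b < OrderDual.ofDual a := hab
    have h3 : (OrderDual.ofDual b).down < (OrderDual.ofDual a).down := h2
    refine Subtype.mk_lt_mk.mpr ?_
    have hval : (ULift.up ((OrderDual.ofDual b).down + k) : ULift.{u} ℕ)
        < ULift.up ((OrderDual.ofDual a).down + k) := by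
      rw [ULift.up_lt]
      omega
    exact hval
  · rintro ⟨y, hy⟩
    have hky := hdown y hy
    refine ⟨OrderDual.toDual (ULift.up ((OrderDual.ofDual y).down - k)), ?_⟩
    apply Subtype.ext
    show OrderDual.toDual (ULift.up ((OrderDual.ofDual y).down - k + k)) = y
    rw [Nat.sub_add_cancel hky]
    rfl

/-- Existence of a greatest element transfers along order isomorphisms. -/
lemma hasTop_congr {α β : Type*} [Preorder α] [Preorder β] (e : α ≃o β)
    (h : ∃ m : α, ∀ x, x ≤ m) : ∃ m : β, ∀ y, y ≤ m := by
  obtain ⟨m, hm⟩ := h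
  exact ⟨e m, fun y => by simpa using e.monotone (hm (e.symm y))⟩

/-- Existence of a least element transfers along order isomorphisms. -/
lemma hasBot_congr {α β : Type*} [Preorder α] [Preorder β] (e : α ≃o β)
    (h : ∃ m : α, ∀ x, m ≤ x) : ∃ m : β, ∀ y, m ≤ y := by
  obtain ⟨m, hm⟩ := h
  exact ⟨e m, fun y => by simpa using e.monotone (hm (e.symm y))⟩

end SGCAux

open Sum SGCAux

/-- **The simple sum generated by a left SGC is not commutative.** There are linear orders
`A ≅ A_L + A_R` and `B ≅ B_L + B_R` with `A_L, B_L ∈ 𝒞` and `A_R, B_R ∈ 𝒞^⊥` such that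
`B_L + A + B_R` is not isomorphic to `A_L + B + A_R`. -/
theorem simple_sum_not_commutative {𝒞 : Set LinOrd.{u}} (h𝒞 : IsLeftSGC 𝒞) :
    ∃ A B AL AR BL BR : LinOrd.{u},
      AL ∈ 𝒞 ∧ AR ∈ perpClass 𝒞 ∧ BL ∈ 𝒞 ∧ BR ∈ perpClass 𝒞 ∧
      Nonempty (↥A ≃o (↥AL ⊕ₗ ↥AR)) ∧ Nonempty (↥B ≃o (↥BL ⊕ₗ ↥BR)) ∧
      ¬ Nonempty (((↥BL ⊕ₗ ↥A) ⊕ₗ ↥BR) ≃o ((↥AL ⊕ₗ ↥B) ⊕ₗ ↥AR)) := by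
  by_cases h1 : LinOrd.of PUnit.{u+1} ∈ 𝒞
  · -- `1 ∈ 𝒞`: take `A = 1 + ∅`, `B = ω + ∅`. Then `ω + A ≅ ω + 1` has a top
    -- while `1 + B ≅ 1 + ω` does not.
    refine ⟨LinOrd.of (↥(LinOrd.of PUnit.{u+1}) ⊕ₗ ↥(LinOrd.of PEmpty.{u+1})),
      LinOrd.of (↥(LinOrd.of (ULift.{u} ℕ)) ⊕ₗ ↥(LinOrd.of PEmpty.{u+1})),
      LinOrd.of PUnit.{u+1}, LinOrd.of PEmpty.{u+1},
      LinOrd.of (ULift.{u} ℕ), LinOrd.of PEmpty.{u+1},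
      h1, empty_perp, nat_mem h𝒞 h1, empty_perp, ⟨OrderIso.refl _⟩, ⟨OrderIso.refl _⟩, ?_⟩
    rintro ⟨e⟩
    have htop := hasTop_congr e ⟨toLex (inl (toLex (inr (toLex (inl default))))), ?_⟩
    · obtain ⟨m, hm⟩ := htop
      rcases lex_cases m with ⟨m1, rfl⟩ | ⟨m2, rfl⟩
      · rcases lex_cases m1 with ⟨v, rfl⟩ | ⟨m3, rfl⟩
        · have h2 := hm (toLex (inl (toLex (inr (toLex (inl (ULift.up 0)))))))
          exact Sum.Lex.not_inr_le_inl (Sum.Lex.inl_le_inl_iff.mp h2)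
        · rcases lex_cases m3 with ⟨n, rfl⟩ | ⟨w, rfl⟩
          · have h2 := hm (toLex (inl (toLex (inr (toLex (inl (ULift.up (n.down + 1))))))))
            have h3 := Sum.Lex.inl_le_inl_iff.mp
              (Sum.Lex.inr_le_inr_iff.mp (Sum.Lex.inl_le_inl_iff.mp h2))
            have h5 : n.down + 1 ≤ n.down := h3
            omega
          · exact isEmptyElim w
      · exact isEmptyElim m2
    · -- the top element of `ω + (1 + ∅) + ∅`
      intro z
      rcases lex_cases z with ⟨z1, rfl⟩ | ⟨z2, rfl⟩
      · rcases lex_cases z1 with ⟨n, rfl⟩ | ⟨z3, rfl⟩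
        · exact Sum.Lex.inl_le_inl_iff.mpr (Sum.Lex.inl_le_inr _ _)
        · rcases lex_cases z3 with ⟨v, rfl⟩ | ⟨w, rfl⟩
          · rw [Unique.eq_default v]
            exact le_refl _
          · exact isEmptyElim w
      · exact isEmptyElim z2
  · -- `1 ∉ 𝒞`: take `A = ∅ + 1`, `B = ∅ + ℕᵒᵈ`. Then `A + ℕᵒᵈ ≅ 1 + ℕᵒᵈ` has a bottom
    -- while `B + 1 ≅ ℕᵒᵈ + 1` does not.
    refine ⟨LinOrd.of (↥(LinOrd.of PEmpty.{u+1}) ⊕ₗ ↥(LinOrd.of PUnit.{u+1})),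
      LinOrd.of (↥(LinOrd.of PEmpty.{u+1}) ⊕ₗ ↥(LinOrd.of (ULift.{u} ℕ)ᵒᵈ)),
      LinOrd.of PEmpty.{u+1}, LinOrd.of PUnit.{u+1},
      LinOrd.of PEmpty.{u+1}, LinOrd.of (ULift.{u} ℕ)ᵒᵈ,
      empty_mem h𝒞, punit_perp h𝒞 h1, empty_mem h𝒞, natdual_perp h𝒞 h1,
      ⟨OrderIso.refl _⟩, ⟨OrderIso.refl _⟩, ?_⟩
    rintro ⟨e⟩
    have hbot := hasBot_congr e ⟨toLex (inl (toLex (inr (toLex (inr default))))), ?_⟩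
    · obtain ⟨m, hm⟩ := hbot
      rcases lex_cases m with ⟨m1, rfl⟩ | ⟨m2, rfl⟩
      · rcases lex_cases m1 with ⟨w, rfl⟩ | ⟨m3, rfl⟩
        · exact isEmptyElim w
        · rcases lex_cases m3 with ⟨w, rfl⟩ | ⟨n, rfl⟩
          · exact isEmptyElim w
          · have h2 := hm (toLex (inl (toLex (inr (toLex (inr
              (OrderDual.toDual (ULift.up ((OrderDual.ofDual n).down + 1)))))))))
            have h3 := Sum.Lex.inr_le_inr_iff.mp
              (Sum.Lex.inr_le_inr_iff.mp (Sum.Lex.inl_le_inl_iff.mp h2))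
            have h4 : OrderDual.ofDual (OrderDual.toDual
                (ULift.up ((OrderDual.ofDual n).down + 1))) ≤ OrderDual.ofDual n := h3
            have h5 : (OrderDual.ofDual n).down + 1 ≤ (OrderDual.ofDual n).down := h4
            omega
      · have h2 := hm (toLex (inl (toLex (inr (toLex (inr
          (OrderDual.toDual (ULift.up 0))))))))
        exact Sum.Lex.not_inr_le_inl h2
    · -- the bottom element of `∅ + (∅ + 1) + ℕᵒᵈ`
      intro z
      rcases lex_cases z with ⟨z1, rfl⟩ | ⟨z2, rfl⟩
      · rcases lex_cases z1 with ⟨w, rfl⟩ | ⟨z3, rfl⟩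
        · exact isEmptyElim w
        · rcases lex_cases z3 with ⟨w, rfl⟩ | ⟨v, rfl⟩
          · exact isEmptyElim w
          · rw [Unique.eq_default v]
            exact le_refl _
      · exact Sum.Lex.inl_le_inr _ _
end

section
/- Let ⊕ be a natural ordinal operation. If an ordinal γ is an instance of a sum of ordinals α and β, then γ ≤ α ⊕ β. -/
universe u

/-- `γ` is an *instance of a sum* of `α` and `β`: the set of ordinals below `γ` can be
partitioned into two subsets whose induced orders have order types `α` and `β`
(equivalently, are order-isomorphic to the sets of ordinals below `α` resp. `β`). -/
def IsSumInstance (γ α β : Ordinal.{u}) : Prop :=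
  ∃ s : Set Ordinal.{u}, s ⊆ Set.Iio γ ∧
    Nonempty (↥s ≃o ↥(Set.Iio α)) ∧ Nonempty (↥(Set.Iio γ \ s) ≃o ↥(Set.Iio β))

/-- A *natural ordinal operation* in the sense of Carruth: commutative, associative, with
`0` as neutral element, and strictly monotone in each argument. -/
structure IsNaturalOrdinalOp (op : Ordinal.{u} → Ordinal.{u} → Ordinal.{u}) : Prop where
  comm : ∀ α β, op α β = op β α
  assoc : ∀ α β γ, op (op α β) γ = op α (op β γ)
  add_zero : ∀ α, op α 0 = α
  gt_iff_gt : ∀ γ α β, op γ α > op γ β ↔ α > β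

/-- A subset of a set order-isomorphic to `Iio β` is order-isomorphic to `Iio β₀`
for some `β₀ ≤ β`. -/
lemma exists_le_iso {β : Ordinal.{u}} {t u : Set Ordinal.{u}} (hu : u ⊆ t)
    (g : ↥t ≃o ↥(Set.Iio β)) : ∃ β₀ ≤ β, Nonempty (↥u ≃o ↥(Set.Iio β₀)) := by
  classical
  let E : ↥t ≃o β.ToType := g.trans ((Ordinal.ToType.mk (o := β)))
  let v : Set β.ToType := {y | ((E.symm y : ↥t) : Ordinal) ∈ u}
  have iso1 : ↥u ≃o ↥v :=
    { toFun := fun x => ⟨E ⟨x.1, hu x.2⟩, by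
        show ((E.symm (E ⟨x.1, hu x.2⟩) : ↥t) : Ordinal) ∈ u
        rw [E.symm_apply_apply]; exact x.2⟩
      invFun := fun y => ⟨((E.symm y.1 : ↥t) : Ordinal), y.2⟩
      left_inv := fun x => by simp
      right_inv := fun y => by simp
      map_rel_iff' := by
        intro a b
        simp only [Equiv.coe_fn_mk, Subtype.mk_le_mk, map_le_map_iff]
        rfl }
  let β₀ : Ordinal.{u} := @Ordinal.type ↥v (· < ·) isWellOrder_lt
  have hle : β₀ ≤ β := by
    have := @RelEmbedding.ordinal_type_le ↥v β.ToType (· < ·) (· < ·) isWellOrder_lt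
      isWellOrder_lt (Subrel.relEmbedding ((· < ·) : β.ToType → β.ToType → Prop) v)
    rwa [Ordinal.type_toType] at this
  have htype : β₀ = @Ordinal.type β₀.ToType (· < ·) isWellOrder_lt := (Ordinal.type_toType β₀).symm
  obtain ⟨R⟩ := (@Ordinal.type_eq ↥v β₀.ToType (· < ·) (· < ·) isWellOrder_lt isWellOrder_lt).1 htype
  have iso2 : ↥v ≃o β₀.ToType := OrderIso.ofRelIsoLT R
  exact ⟨β₀, hle, ⟨(iso1.trans iso2).trans ((Ordinal.ToType.mk (o := β₀))).symm⟩⟩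

/-- Cutting an order-isomorphism `s ≃o Iio α` below an element `δ ∈ s` yields
an isomorphism onto `Iio (e δ)`. -/
lemma init_iso {α : Ordinal.{u}} {s : Set Ordinal.{u}} (e : ↥s ≃o ↥(Set.Iio α))
    {δ : Ordinal.{u}} (hδ : δ ∈ s) :
    Nonempty (↥(s ∩ Set.Iio δ) ≃o ↥(Set.Iio ((e ⟨δ, hδ⟩ : Ordinal)))) := by
  have hmemα : ∀ y : Ordinal, y < (e ⟨δ, hδ⟩ : Ordinal) → y ∈ Set.Iio α :=
    fun y hy => lt_trans hy (e ⟨δ, hδ⟩).2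
  have htf : ∀ x : ↥(s ∩ Set.Iio δ),
      ((e ⟨x.1, x.2.1⟩ : ↥(Set.Iio α)) : Ordinal) ∈ Set.Iio ((e ⟨δ, hδ⟩ : Ordinal)) := by
    intro x
    have : (⟨x.1, x.2.1⟩ : ↥s) < ⟨δ, hδ⟩ := Subtype.mk_lt_mk.2 x.2.2
    exact Subtype.coe_lt_coe.2 (e.lt_iff_lt.2 this)
  have hif : ∀ y : ↥(Set.Iio ((e ⟨δ, hδ⟩ : Ordinal))),
      ((e.symm ⟨y.1, hmemα y.1 y.2⟩ : ↥s) : Ordinal) ∈ s ∩ Set.Iio δ := by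
    intro y
    refine ⟨(e.symm ⟨y.1, hmemα y.1 y.2⟩).2, ?_⟩
    have h1 : (⟨y.1, hmemα y.1 y.2⟩ : ↥(Set.Iio α)) < e ⟨δ, hδ⟩ := Subtype.mk_lt_mk.2 y.2
    have h2 := e.symm.lt_iff_lt.2 h1
    rw [e.symm_apply_apply] at h2
    exact Subtype.coe_lt_coe.2 h2
  refine ⟨{
    toFun := fun x => ⟨_, htf x⟩
    invFun := fun y => ⟨_, hif y⟩
    left_inv := ?_
    right_inv := ?_
    map_rel_iff' := ?_ }⟩
  · intro x
    apply Subtype.ext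
    show ((e.symm ⟨_, _⟩ : ↥s) : Ordinal) = x.1
    have : (⟨((e ⟨x.1, x.2.1⟩ : ↥(Set.Iio α)) : Ordinal), hmemα _ (htf x)⟩ : ↥(Set.Iio α))
        = e ⟨x.1, x.2.1⟩ := Subtype.ext rfl
    rw [this, e.symm_apply_apply]
  · intro y
    apply Subtype.ext
    show ((e ⟨_, _⟩ : ↥(Set.Iio α)) : Ordinal) = y.1
    have : (⟨((e.symm ⟨y.1, hmemα y.1 y.2⟩ : ↥s) : Ordinal), hif y⟩ : ↥(s ∩ Set.Iio δ)).1
        = (e.symm ⟨y.1, hmemα y.1 y.2⟩ : ↥s).1 := rfl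
    have h2 : (⟨((e.symm ⟨y.1, hmemα y.1 y.2⟩ : ↥s) : Ordinal), (hif y).1⟩ : ↥s)
        = e.symm ⟨y.1, hmemα y.1 y.2⟩ := Subtype.ext rfl
    rw [h2, e.apply_symm_apply]
  · intro a b
    show (⟨_, htf a⟩ : ↥(Set.Iio ((e ⟨δ, hδ⟩ : Ordinal)))) ≤ ⟨_, htf b⟩ ↔ a ≤ b
    rw [Subtype.mk_le_mk, Subtype.coe_le_coe, e.le_iff_le, Subtype.mk_le_mk]
    exact Subtype.coe_le_coe

lemma IsSumInstance.swap {γ α β : Ordinal.{u}} (h : IsSumInstance γ α β) :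
    IsSumInstance γ β α := by
  obtain ⟨s, hs, ⟨ea⟩, ⟨eb⟩⟩ := h
  refine ⟨Set.Iio γ \ s, Set.diff_subset, ⟨eb⟩, ?_⟩
  have hset : Set.Iio γ \ (Set.Iio γ \ s) = s := by
    rw [Set.diff_diff_right_self, Set.inter_eq_right.2 hs]
  exact ⟨(OrderIso.setCongr _ _ hset).trans ea⟩

lemma key_lemma (op : Ordinal.{u} → Ordinal.{u} → Ordinal.{u}) (hop : IsNaturalOrdinalOp op)
    {γ α β : Ordinal.{u}}
    (IH : ∀ δ < γ, ∀ a b : Ordinal.{u}, IsSumInstance δ a b → δ ≤ op a b)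
    {s : Set Ordinal.{u}} (hs : s ⊆ Set.Iio γ)
    (ea : ↥s ≃o ↥(Set.Iio α)) (eb : ↥(Set.Iio γ \ s) ≃o ↥(Set.Iio β))
    {δ : Ordinal.{u}} (hδ : δ ∈ s) : δ < op α β := by
  have hδγ : δ < γ := hs hδ
  set α₀ : Ordinal.{u} := (ea ⟨δ, hδ⟩ : Ordinal) with hα₀def
  have hα₀ : α₀ < α := (ea ⟨δ, hδ⟩).2
  -- complement piece
  have hsub : Set.Iio δ \ (s ∩ Set.Iio δ) ⊆ Set.Iio γ \ s := by
    rintro x ⟨hx1, hx2⟩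
    refine ⟨lt_trans hx1 hδγ, fun hxs => hx2 ⟨hxs, hx1⟩⟩
  obtain ⟨β₀, hβ₀, ⟨ib⟩⟩ := exists_le_iso hsub eb
  obtain ⟨ia⟩ := init_iso ea hδ
  have hinst : IsSumInstance δ α₀ β₀ :=
    ⟨s ∩ Set.Iio δ, Set.inter_subset_right, ⟨ia⟩, ⟨ib⟩⟩
  have h1 : δ ≤ op α₀ β₀ := IH δ hδγ _ _ hinst
  have h2 : op α₀ β₀ ≤ op α₀ β := by
    rcases lt_or_eq_of_le hβ₀ with hlt | heq
    · exact le_of_lt ((hop.gt_iff_gt α₀ β β₀).2 hlt)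
    · rw [heq]
  have h3 : op α₀ β < op α β := by
    rw [hop.comm α₀ β, hop.comm α β]
    exact (hop.gt_iff_gt β α α₀).2 hα₀
  exact lt_of_le_of_lt (le_trans h1 h2) h3

/-- If `⊕` is a natural ordinal operation and `γ` is an instance of a sum of `α` and `β`,
then `γ ≤ α ⊕ β`. -/
theorem sum_instance_le_naturalOp (op : Ordinal.{u} → Ordinal.{u} → Ordinal.{u})
    (hop : IsNaturalOrdinalOp op) {γ α β : Ordinal.{u}} (h : IsSumInstance γ α β) :
    γ ≤ op α β := by
  induction γ using Ordinal.induction generalizing α β with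
  | h γ IH =>
  by_contra hcon
  push_neg at hcon
  obtain ⟨s, hs, ⟨ea⟩, ⟨eb⟩⟩ := h
  have IH' : ∀ δ < γ, ∀ a b : Ordinal.{u}, IsSumInstance δ a b → δ ≤ op a b :=
    fun δ hδ a b hi => IH δ hδ hi
  have hlt : op α β < op α β := by
    by_cases hmem : op α β ∈ s
    · exact key_lemma op hop IH' hs ea eb hmem
    · have hmem' : op α β ∈ Set.Iio γ \ s := ⟨hcon, hmem⟩
      have hset : Set.Iio γ \ (Set.Iio γ \ s) = s := by
        rw [Set.diff_diff_right_self, Set.inter_eq_right.2 hs]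
      have ea' : ↥(Set.Iio γ \ (Set.Iio γ \ s)) ≃o ↥(Set.Iio α) :=
        (OrderIso.setCongr _ _ hset).trans ea
      have := key_lemma op hop IH' (Set.diff_subset) eb ea' hmem'
      rwa [hop.comm β α] at this
  exact lt_irrefl _ hlt
end

section
/- For every natural ordinal operation ⊕ and all ordinals α and β, the Hessenberg (natural) sum satisfies α ♯ β ≤ α ⊕ β. -/
universe u

namespace Ordinal

/-- Natural addition (Hessenberg sum), as Mathlib's former `Ordinal.nadd`. -/
noncomputable def nadd (a b : Ordinal.{u}) : Ordinal.{u} :=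
  max (⨆ x : Set.Iio a, Order.succ (nadd x.1 b)) (⨆ x : Set.Iio b, Order.succ (nadd a x.1))
termination_by (a, b)
decreasing_by all_goals cases x; decreasing_tactic

end Ordinal

infixl:65 " ♯ " => Ordinal.nadd

theorem Ordinal.nadd_le_of_forall {a b c : Ordinal.{u}} (h1 : ∀ a' < a, a' ♯ b < c)
    (h2 : ∀ b' < b, a ♯ b' < c) : a ♯ b ≤ c := by
  rw [Ordinal.nadd]
  exact max_le (ciSup_le' fun x => Order.succ_le_of_lt (h1 x.1 x.2))
    (ciSup_le' fun x => Order.succ_le_of_lt (h2 x.1 x.2))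

/-- The Hessenberg (natural) sum is a lower bound for every natural ordinal operation. -/
theorem nadd_le_naturalOp (op : Ordinal.{u} → Ordinal.{u} → Ordinal.{u})
    (hop : IsNaturalOrdinalOp op) (α β : Ordinal.{u}) :
    α ♯ β ≤ op α β := by
  induction α using Ordinal.induction generalizing β with
  | h α ih1 =>
  induction β using Ordinal.induction with
  | h β ih2 =>
  refine Ordinal.nadd_le_of_forall (fun a' ha' => ?_) (fun b' hb' => ?_)
  · calc a' ♯ β ≤ op a' β := ih1 a' ha' β
      _ < op α β := by
        rw [hop.comm a' β, hop.comm α β]; exact (hop.gt_iff_gt β α a').2 ha'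
  · calc α ♯ b' ≤ op α b' := ih2 b' hb'
      _ < op α β := (hop.gt_iff_gt α β b').2 hb'
end

section
/- The min sum +_min on the ordinals is commutative and associative, and for all ordinals α, β, the ordinal α +_min β is an instance of a sum of α and β. -/
open Ordinal Set


universe u

/-- The *min sum* of ordinals: writing `α = ω·α' + m` and `β = ω·β' + n` with `m, n < ω`,
`α +_min β = max α β` if `α' ≠ β'`, and `α +_min β = α + n` if `α' = β'`. -/
noncomputable def minSum (α β : Ordinal.{u}) : Ordinal.{u} :=
  if α / Ordinal.omega0 = β / Ordinal.omega0 then α + β % Ordinal.omega0 else max α β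


namespace MinSumAux

lemma div_omega0_eq {q k : Ordinal} (hk : k < ω) : (ω * q + k) / ω = q := by
  rw [mul_add_div _ omega0_ne_zero, div_eq_zero_of_lt hk, add_zero]

lemma mod_omega0_eq {q k : Ordinal} (hk : k < ω) : (ω * q + k) % ω = k := by
  rw [mul_add_mod_self, mod_eq_of_lt hk]

lemma lt_of_div_lt {α β : Ordinal} (h : α / ω < β / ω) : α < β := by
  calc α = ω * (α / ω) + α % ω := (div_add_mod α ω).symm
    _ < ω * (α / ω) + ω := add_lt_add_right (mod_lt α omega0_ne_zero) _
    _ = ω * (Order.succ (α / ω)) := (mul_succ _ _).symm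
    _ ≤ ω * (β / ω) := mul_le_mul_right (Order.succ_le_iff.2 h) ω
    _ ≤ β := mul_div_le β ω

noncomputable def e (x : Ordinal) : Ordinal := ω * (x / ω) + 2 * (x % ω)

lemma two_lt_omega0 : (2 : Ordinal) < ω := by
  simpa using nat_lt_omega0 2

lemma two_mul_mod_lt (x : Ordinal) : 2 * (x % ω) < ω :=
  principal_mul_omega0 two_lt_omega0 (mod_lt x omega0_ne_zero)

lemma two_mul_mod_succ_lt (x : Ordinal) : 2 * (x % ω) + 1 < ω :=
  principal_add_omega0 (two_mul_mod_lt x) one_lt_omega0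

lemma e_div (x : Ordinal) : e x / ω = x / ω := by
  rw [e]; exact div_omega0_eq (two_mul_mod_lt x)

lemma e_mod (x : Ordinal) : e x % ω = 2 * (x % ω) := by
  rw [e]; exact mod_omega0_eq (two_mul_mod_lt x)

lemma e_succ_div (x : Ordinal) : (e x + 1) / ω = x / ω := by
  rw [e, add_assoc]; exact div_omega0_eq (two_mul_mod_succ_lt x)

lemma e_succ_mod (x : Ordinal) : (e x + 1) % ω = 2 * (x % ω) + 1 := by
  rw [e, add_assoc]; exact mod_omega0_eq (two_mul_mod_succ_lt x)

lemma add_one_lt_add_one {a b : Ordinal} (h : a < b) : a + 1 < b + 1 := by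
  rw [← Order.succ_eq_add_one, ← Order.succ_eq_add_one]
  exact Order.succ_lt_succ h

lemma e_strictMono : StrictMono e := by
  intro x y hxy
  rcases lt_or_eq_of_le (div_le_left (le_of_lt hxy) ω) with h | h
  · calc e x < ω * (x / ω) + ω := add_lt_add_right (two_mul_mod_lt x) _
      _ = ω * (Order.succ (x / ω)) := (mul_succ _ _).symm
      _ ≤ ω * (y / ω) := mul_le_mul_right (Order.succ_le_iff.2 h) ω
      _ ≤ e y := le_self_add
  · have hm : x % ω < y % ω := by
      by_contra hc
      push_neg at hc
      have : y ≤ x := by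
        calc y = ω * (y / ω) + y % ω := (div_add_mod y ω).symm
          _ ≤ ω * (x / ω) + x % ω := by rw [← h]; exact add_le_add_right hc _
          _ = x := div_add_mod x ω
      exact absurd hxy (not_lt.2 this)
    unfold e
    rw [h]
    exact add_lt_add_right (mul_lt_mul_of_pos_left hm (by norm_num : (0:Ordinal) < 2)) _

lemma lt_mul_of_div_lt {x q : Ordinal} (h : x / ω < q) {k : Ordinal} (hk : k < ω) :
    ω * (x / ω) + k < ω * q := by
  calc ω * (x / ω) + k < ω * (x / ω) + ω := add_lt_add_right hk _
    _ = ω * (Order.succ (x / ω)) := (mul_succ _ _).symm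
    _ ≤ ω * q := mul_le_mul_right (Order.succ_le_iff.2 h) ω

lemma e_lt {x q : Ordinal} (h : x < ω * q) : e x < ω * q :=
  lt_mul_of_div_lt ((div_lt omega0_ne_zero).2 h) (two_mul_mod_lt x)

lemma e_succ_lt {x q : Ordinal} (h : x < ω * q) : e x + 1 < ω * q := by
  rw [e, add_assoc]
  exact lt_mul_of_div_lt ((div_lt omega0_ne_zero).2 h) (two_mul_mod_succ_lt x)

lemma isSumInstance_add_sub {α β : Ordinal.{u}} (h : α / ω ≤ β / ω) :
    IsSumInstance (α + (β - ω * (α / ω))) α β := by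
  set c := ω * (α / ω) with hc
  set δ := β - c with hδ
  set γ := α + δ with hγ
  have hcα : c ≤ α := mul_div_le α ω
  have hcβ : c ≤ β := le_trans (mul_le_mul_right h ω) (mul_div_le β ω)
  have hβeq : c + δ = β := Ordinal.add_sub_cancel_of_le hcβ
  have hαγ : α ≤ γ := le_self_add
  set s : Set Ordinal.{u} := e '' Iio c ∪ Ico c α with hs
  have hsα : s ⊆ Iio α := by
    rintro z (⟨x, hx, rfl⟩ | hz)
    · exact lt_of_lt_of_le (e_lt (hc ▸ hx)) hcα
    · exact hz.2
  have hsγ : s ⊆ Iio γ := fun z hz => lt_of_lt_of_le (hsα hz) hαγ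
  set f : Ordinal → Ordinal := fun x => if x < c then e x else x with hf
  set g : Ordinal → Ordinal := fun y => if y < c then e y + 1 else α + (y - c) with hg
  have hfmono : StrictMonoOn f (Iio α) := by
    intro x _ y _ hxy
    by_cases hyc : y < c
    · have hxc : x < c := lt_trans hxy hyc
      simpa [hf, hxc, hyc] using e_strictMono hxy
    · by_cases hxc : x < c
      · simpa [hf, hxc, hyc] using lt_of_lt_of_le (e_lt (hc ▸ hxc)) (not_lt.1 hyc)
      · simpa [hf, hxc, hyc] using hxy
  have hfimg : f '' Iio α = s := by
    apply Set.eq_of_subset_of_subset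
    · rintro z ⟨x, hx, rfl⟩
      by_cases hxc : x < c
      · exact Or.inl ⟨x, hxc, by simp [hf, hxc]⟩
      · have hfx : f x = x := by simp [hf, hxc]
        rw [hfx]
        exact Or.inr ⟨not_lt.1 hxc, hx⟩
    · rintro z (⟨x, hx, rfl⟩ | hz)
      · have hx' : x < c := hx
        exact ⟨x, lt_of_lt_of_le hx' hcα, by simp [hf, hx']⟩
      · exact ⟨z, hz.2, by simp [hf, not_lt.2 hz.1]⟩
  have hgmono : StrictMonoOn g (Iio β) := by
    intro x _ y _ hxy
    by_cases hyc : y < c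
    · have hxc : x < c := lt_trans hxy hyc
      simpa [hg, hxc, hyc] using add_one_lt_add_one (e_strictMono hxy)
    · by_cases hxc : x < c
      · have h1 : e x + 1 < c := e_succ_lt (hc ▸ hxc)
        have h2 : c ≤ α + (y - c) := le_trans hcα (le_self_add)
        simpa [hg, hxc, hyc] using lt_of_lt_of_le h1 h2
      · have hcx : c ≤ x := not_lt.1 hxc
        have hsub : x - c < y - c := by
          rw [← add_lt_add_iff_left c, Ordinal.add_sub_cancel_of_le hcx,
            Ordinal.add_sub_cancel_of_le (not_lt.1 hyc)]
          exact hxy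
        simpa [hg, hxc, hyc] using add_lt_add_right hsub α
  have hgimg : g '' Iio β = Iio γ \ s := by
    apply Set.eq_of_subset_of_subset
    · rintro z ⟨y, hy, rfl⟩
      by_cases hyc : y < c
      · have hec : e y + 1 < c := e_succ_lt (hc ▸ hyc)
        have hgy : g y = e y + 1 := by simp [hg, hyc]
        rw [hgy]
        refine ⟨lt_of_lt_of_le (lt_of_lt_of_le hec hcα) hαγ, ?_⟩
        rintro (⟨x, _, hxe⟩ | hmem)
        · have hmod : 2 * (x % ω) = 2 * (y % ω) + 1 := by
            rw [← e_mod x, ← e_succ_mod y, hxe]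
          obtain ⟨r, hr⟩ := lt_omega0.1 (mod_lt x omega0_ne_zero)
          obtain ⟨t, ht⟩ := lt_omega0.1 (mod_lt y omega0_ne_zero)
          rw [hr, ht] at hmod
          have hnat : ((2 * r : ℕ) : Ordinal) = ((2 * t + 1 : ℕ) : Ordinal) := by
            push_cast
            exact hmod
          have := Nat.cast_inj.1 hnat
          omega
        · exact absurd hmem.1 (not_le.2 hec)
      · have hcy : c ≤ y := not_lt.1 hyc
        have hsub : y - c < δ := by
          rw [hδ, ← add_lt_add_iff_left c, Ordinal.add_sub_cancel_of_le hcy, hβeq]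
          exact hy
        have hgy : g y = α + (y - c) := by simp [hg, hyc]
        rw [hgy]
        refine ⟨?_, ?_⟩
        · simpa [hγ] using add_lt_add_right hsub α
        · intro hmem
          have h1 : α + (y - c) < α := hsα hmem
          exact absurd h1 (not_lt.2 (le_self_add))
    · rintro z ⟨hzγ, hzs⟩
      by_cases hzc : z < c
      · obtain ⟨k, hk⟩ := lt_omega0.1 (mod_lt z omega0_ne_zero)
        have hzq : z / ω < α / ω := (div_lt omega0_ne_zero).2 (hc ▸ hzc)
        have hbound : ∀ r : ℕ, ω * (z / ω) + (r : Ordinal) < c := fun r => by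
          rw [hc]; exact lt_mul_of_div_lt hzq (nat_lt_omega0 r)
        have hdm : ∀ r : ℕ, (ω * (z / ω) + (r : Ordinal)) / ω = z / ω ∧
            (ω * (z / ω) + (r : Ordinal)) % ω = (r : Ordinal) :=
          fun r => ⟨div_omega0_eq (nat_lt_omega0 r), mod_omega0_eq (nat_lt_omega0 r)⟩
        rcases Nat.even_or_odd k with ⟨r, hr⟩ | ⟨r, hr⟩
        · exfalso
          apply hzs
          refine Or.inl ⟨ω * (z / ω) + (r : Ordinal), hbound r, ?_⟩
          rw [e, (hdm r).1, (hdm r).2]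
          have h2r : (2 : Ordinal) * (r : Ordinal) = (k : Ordinal) := by
            have hr' : k = 2 * r := by omega
            rw [hr']
            norm_cast
          rw [h2r, ← hk, div_add_mod]
        · refine ⟨ω * (z / ω) + (r : Ordinal), lt_of_lt_of_le (hbound r) hcβ, ?_⟩
          simp only [hg, if_pos (hbound r)]
          rw [e, (hdm r).1, (hdm r).2, add_assoc]
          have h2r : (2 : Ordinal) * (r : Ordinal) + 1 = (k : Ordinal) := by
            rw [hr]
            norm_cast
          rw [h2r, ← hk, div_add_mod]
      · have hcz : c ≤ z := not_lt.1 hzc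
        have hαz : α ≤ z := by
          by_contra hlt
          exact hzs (Or.inr ⟨hcz, not_le.1 hlt⟩)
        have hsubδ : z - α < δ := by
          rw [← add_lt_add_iff_left α, Ordinal.add_sub_cancel_of_le hαz]
          exact hγ ▸ hzγ
        refine ⟨c + (z - α), ?_, ?_⟩
        · show c + (z - α) < β
          rw [← hβeq]
          exact add_lt_add_right hsubδ c
        · have hnc : ¬ c + (z - α) < c := not_lt.2 (le_self_add)
          simp only [hg, if_neg hnc]
          rw [Ordinal.add_sub_cancel, Ordinal.add_sub_cancel_of_le hαz]
  -- assemble the isomorphisms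
  refine ⟨s, hsγ, ⟨?_⟩, ⟨?_⟩⟩
  · exact (((StrictMonoOn.orderIso f (Iio α) hfmono).trans
      (OrderIso.setCongr _ _ hfimg))).symm
  · exact (((StrictMonoOn.orderIso g (Iio β) hgmono).trans
      (OrderIso.setCongr _ _ hgimg))).symm


lemma msum_pos {α β : Ordinal.{u}} (h : α / ω = β / ω) : minSum α β = α + β % ω := if_pos h

lemma msum_neg {α β : Ordinal.{u}} (h : α / ω ≠ β / ω) : minSum α β = max α β := if_neg h

lemma addnat_div {α n : Ordinal} (hn : n < ω) : (α + n) / ω = α / ω := by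
  conv_lhs => rw [← div_add_mod α ω, add_assoc]
  rw [div_omega0_eq (principal_add_omega0 (mod_lt α omega0_ne_zero) hn)]

lemma addnat_mod {α n : Ordinal} (hn : n < ω) : (α + n) % ω = α % ω + n := by
  conv_lhs => rw [← div_add_mod α ω, add_assoc]
  rw [mod_omega0_eq (principal_add_omega0 (mod_lt α omega0_ne_zero) hn)]

lemma minSum_comm (α β : Ordinal.{u}) : minSum α β = minSum β α := by
  by_cases h : α / ω = β / ω
  · rw [msum_pos h, msum_pos h.symm]
    obtain ⟨m, hm⟩ := lt_omega0.1 (mod_lt α omega0_ne_zero)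
    obtain ⟨n, hn⟩ := lt_omega0.1 (mod_lt β omega0_ne_zero)
    conv_lhs => rw [← div_add_mod α ω]
    conv_rhs => rw [← div_add_mod β ω]
    rw [h, add_assoc, add_assoc, hm, hn, ← Nat.cast_add, ← Nat.cast_add, Nat.add_comm]
  · rw [msum_neg h, msum_neg (Ne.symm h), max_comm]

lemma minSum_assoc (α β γ : Ordinal.{u}) :
    minSum (minSum α β) γ = minSum α (minSum β γ) := by
  have hd1 : ∀ x y : Ordinal.{u}, (x + y % ω) / ω = x / ω :=
    fun x y => addnat_div (mod_lt y omega0_ne_zero)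
  have hm1 : ∀ x y : Ordinal.{u}, (x + y % ω) % ω = x % ω + y % ω :=
    fun x y => addnat_mod (mod_lt y omega0_ne_zero)
  by_cases hAB : α / ω = β / ω
  · by_cases hBC : β / ω = γ / ω
    · rw [msum_pos hAB, msum_pos hBC,
        msum_pos (show (α + β % ω) / ω = γ / ω by rw [hd1]; exact hAB.trans hBC),
        msum_pos (show α / ω = (β + γ % ω) / ω by rw [hd1]; exact hAB),
        hm1 β γ, add_assoc]
    · rcases Ne.lt_or_gt hBC with hlt | hlt
      · have hAC : α / ω ≠ γ / ω := by rw [hAB]; exact ne_of_lt hlt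
        have h1 : α + β % ω < γ := lt_of_div_lt (by rw [hd1, hAB]; exact hlt)
        have h2 : β < γ := lt_of_div_lt hlt
        have h3 : α < γ := lt_of_div_lt (by rw [hAB]; exact hlt)
        rw [msum_pos hAB, msum_neg (show (α + β % ω) / ω ≠ γ / ω by rw [hd1]; exact hAC),
          max_eq_right h1.le, msum_neg hBC, max_eq_right h2.le, msum_neg hAC,
          max_eq_right h3.le]
      · have hAC : α / ω ≠ γ / ω := by rw [hAB]; exact (ne_of_lt hlt).symm
        have h1 : γ < α + β % ω := lt_of_div_lt (by rw [hd1, hAB]; exact hlt)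
        have h2 : γ < β := lt_of_div_lt hlt
        rw [msum_pos hAB, msum_neg (show (α + β % ω) / ω ≠ γ / ω by rw [hd1]; exact hAC),
          max_eq_left h1.le, msum_neg hBC, max_eq_left h2.le, msum_pos hAB]
  · by_cases hBC : β / ω = γ / ω
    · rcases Ne.lt_or_gt hAB with hlt | hlt
      · have h1 : α < β := lt_of_div_lt hlt
        have h2 : α < β + γ % ω := lt_of_div_lt (by rw [hd1]; exact hlt)
        rw [msum_neg hAB, max_eq_right h1.le, msum_pos hBC,
          msum_neg (show α / ω ≠ (β + γ % ω) / ω by rw [hd1]; exact ne_of_lt hlt),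
          max_eq_right h2.le]
      · have h1 : β < α := lt_of_div_lt hlt
        have hAC : α / ω ≠ γ / ω := by rw [← hBC]; exact (ne_of_lt hlt).symm
        have h2 : γ < α := lt_of_div_lt (by rw [← hBC]; exact hlt)
        have h3 : β + γ % ω < α := lt_of_div_lt (by rw [hd1]; exact hlt)
        rw [msum_neg hAB, max_eq_left h1.le, msum_neg hAC, max_eq_left h2.le,
          msum_pos hBC,
          msum_neg (show α / ω ≠ (β + γ % ω) / ω by rw [hd1]; exact (ne_of_lt hlt).symm),
          max_eq_left h3.le]
    · rcases Ne.lt_or_gt hAB with h1 | h1 <;> rcases Ne.lt_or_gt hBC with h2 | h2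
      · have hαβ := lt_of_div_lt h1
        have hβγ := lt_of_div_lt h2
        have hAC : α / ω ≠ γ / ω := ne_of_lt (h1.trans h2)
        have hαγ := lt_of_div_lt (h1.trans h2)
        rw [msum_neg hAB, max_eq_right hαβ.le, msum_neg hBC, max_eq_right hβγ.le,
          msum_neg hAC, max_eq_right hαγ.le]
      · have hαβ := lt_of_div_lt h1
        have hγβ := lt_of_div_lt h2
        rw [msum_neg hAB, max_eq_right hαβ.le, msum_neg hBC, max_eq_left hγβ.le,
          msum_neg hAB, max_eq_right hαβ.le]
      · have hβα := lt_of_div_lt h1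
        have hβγ := lt_of_div_lt h2
        rw [msum_neg hAB, max_eq_left hβα.le, msum_neg hBC, max_eq_right hβγ.le]
      · have hβα := lt_of_div_lt h1
        have hγβ := lt_of_div_lt h2
        have hAC : α / ω ≠ γ / ω := (ne_of_lt (h2.trans h1)).symm
        rw [msum_neg hAB, max_eq_left hβα.le, msum_neg hAC,
          max_eq_left (lt_of_div_lt (h2.trans h1)).le, msum_neg hBC, max_eq_left hγβ.le,
          msum_neg hAB, max_eq_left hβα.le]

lemma minSum_eq_add_sub {α β : Ordinal.{u}} (h : α / ω ≤ β / ω) :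
    minSum α β = α + (β - ω * (α / ω)) := by
  rcases lt_or_eq_of_le h with hlt | heq
  · rw [msum_neg (ne_of_lt hlt), max_eq_right (lt_of_div_lt hlt).le]
    have hcsucc : ω * (α / ω) + ω ≤ β := by
      rw [← mul_succ]
      exact le_trans (mul_le_mul_right (Order.succ_le_iff.2 hlt) ω) (mul_div_le β ω)
    have hcβ : ω * (α / ω) ≤ β := le_trans (le_self_add) hcsucc
    set c := ω * (α / ω) with hcdef
    set δ := β - c with hδ
    have hβ : c + δ = β := Ordinal.add_sub_cancel_of_le hcβ
    have hωδ : ω ≤ δ := le_of_add_le_add_left (a := c) (hβ ▸ hcsucc)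
    have hδω : ω + (δ - ω) = δ := Ordinal.add_sub_cancel_of_le hωδ
    have hmδ : α % ω + δ = δ := by
      calc α % ω + δ = α % ω + (ω + (δ - ω)) := by rw [hδω]
        _ = (α % ω + ω) + (δ - ω) := (add_assoc _ _ _).symm
        _ = ω + (δ - ω) := by rw [add_omega0 (mod_lt α omega0_ne_zero)]
        _ = δ := hδω
    calc β = c + δ := hβ.symm
      _ = c + (α % ω + δ) := by rw [hmδ]
      _ = (c + α % ω) + δ := (add_assoc _ _ _).symm
      _ = α + δ := by rw [div_add_mod]
  · rw [msum_pos heq, heq, mod_def]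

lemma IsSumInstance.symm {γ α β : Ordinal.{u}} (h : IsSumInstance γ α β) :
    IsSumInstance γ β α := by
  obtain ⟨s, hs, ⟨f⟩, ⟨g⟩⟩ := h
  exact ⟨Iio γ \ s, diff_subset, ⟨g⟩,
    ⟨(OrderIso.setCongr _ _ (diff_diff_cancel_left hs)).trans f⟩⟩

end MinSumAux


open MinSumAux

/-- The min sum is commutative and associative, and `α +_min β` is always an instance of a
sum of `α` and `β` (i.e. `+_min` is a good sum on the ordinals). -/
theorem minSum_comm_assoc_isSumInstance :
    (∀ α β : Ordinal.{u}, minSum α β = minSum β α) ∧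
    (∀ α β γ : Ordinal.{u}, minSum (minSum α β) γ = minSum α (minSum β γ)) ∧
    (∀ α β : Ordinal.{u}, IsSumInstance (minSum α β) α β) := by

  refine ⟨minSum_comm, minSum_assoc, fun α β => ?_⟩
  rcases le_total (α / ω) (β / ω) with h | h
  · rw [minSum_eq_add_sub h]
    exact isSumInstance_add_sub h
  · rw [minSum_comm, minSum_eq_add_sub h]
    exact IsSumInstance.symm (isSumInstance_add_sub h)
end

section
/- Let ι be a nonempty countable index set. Let X and Y be countable dense linear orders without endpoints, let X = ⋃_{i∈ι} X_i be a partition of X into pairwise disjoint subsets each of which is dense in X, and let Y = ⋃_{i∈ι} Y_i be a partition of Y into pairwise disjoint subsets each of which is dense in Y. Then there exists an order isomorphism f : X → Y such that f(X_i) = Y_i for every i ∈ ι. -/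
noncomputable section SkolemAux

namespace SkolemAux

open Order

variable {ι α β : Type*} [LinearOrder α] [LinearOrder β]

/-- Colored version of `Order.exists_between_finsets`. -/
theorem exists_between_finsets_col [DenselyOrdered β] [NoMinOrder β] [NoMaxOrder β]
    [Nonempty β] (c : β → ι)
    (hc : ∀ i, ∀ x y : β, x < y → ∃ s, c s = i ∧ x < s ∧ s < y) (i : ι)
    (lo hi : Finset β) (lo_lt_hi : ∀ x ∈ lo, ∀ y ∈ hi, x < y) :
    ∃ m : β, c m = i ∧ (∀ x ∈ lo, x < m) ∧ ∀ y ∈ hi, m < y := by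
  obtain ⟨m, hm1, hm2⟩ := Order.exists_between_finsets lo hi lo_lt_hi
  by_cases nhi : hi.Nonempty
  · obtain ⟨s, hs, hms, hsy⟩ := hc i m (hi.min' nhi) (hm2 _ (Finset.min'_mem _ nhi))
    exact ⟨s, hs, fun x hx => (hm1 x hx).trans hms,
      fun y hy => hsy.trans_le (Finset.min'_le _ _ hy)⟩
  · obtain ⟨y, hy⟩ := exists_gt m
    obtain ⟨s, hs, hms, _⟩ := hc i m y hy
    exact ⟨s, hs, fun x hx => (hm1 x hx).trans hms,
      fun z hz => absurd ⟨z, hz⟩ nhi⟩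

variable (α β) in
/-- Colored partial isomorphisms. -/
def CPartialIso (c1 : α → ι) (c2 : β → ι) : Type _ :=
  { f : Finset (α × β) //
    (∀ p ∈ f, ∀ q ∈ f, cmp (Prod.fst p) (Prod.fst q) = cmp (Prod.snd p) (Prod.snd q)) ∧
      ∀ p ∈ f, c2 (Prod.snd p) = c1 (Prod.fst p) }

namespace CPartialIso

variable {c1 : α → ι} {c2 : β → ι}

instance : Inhabited (CPartialIso α β c1 c2) :=
  ⟨⟨∅, fun _p h => (Finset.notMem_empty _ h).elim,
    fun _p h => (Finset.notMem_empty _ h).elim⟩⟩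

instance : Preorder (CPartialIso α β c1 c2) := Subtype.preorder _

theorem exists_across [DenselyOrdered β] [NoMinOrder β] [NoMaxOrder β] [Nonempty β]
    (hc2 : ∀ i, ∀ x y : β, x < y → ∃ s, c2 s = i ∧ x < s ∧ s < y)
    (f : CPartialIso α β c1 c2) (a : α) :
    ∃ b : β, c2 b = c1 a ∧ ∀ p ∈ f.val, cmp (Prod.fst p) a = cmp (Prod.snd p) b := by
  by_cases h : ∃ b, (a, b) ∈ f.val
  · obtain ⟨b, hb⟩ := h
    exact ⟨b, f.prop.2 _ hb, fun p hp => f.prop.1 _ hp _ hb⟩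
  have : ∀ x ∈ (f.val.filter fun p : α × β => p.fst < a).image Prod.snd,
      ∀ y ∈ (f.val.filter fun p : α × β => a < p.fst).image Prod.snd, x < y := by
    intro x hx y hy
    rw [Finset.mem_image] at hx hy
    rcases hx with ⟨p, hp1, rfl⟩
    rcases hy with ⟨q, hq1, rfl⟩
    rw [Finset.mem_filter] at hp1 hq1
    rw [← lt_iff_lt_of_cmp_eq_cmp (f.prop.1 _ hp1.1 _ hq1.1)]
    exact lt_trans hp1.right hq1.right
  obtain ⟨b, hbc, hb1, hb2⟩ := exists_between_finsets_col c2 hc2 (c1 a) _ _ this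
  refine ⟨b, hbc, ?_⟩
  rintro ⟨p1, p2⟩ hp
  have hne : p1 ≠ a := fun he => h ⟨p2, he ▸ hp⟩
  cases' lt_or_gt_of_ne hne with hl hr
  · have : p1 < a ∧ p2 < b :=
      ⟨hl, hb1 _ (Finset.mem_image.mpr ⟨(p1, p2), Finset.mem_filter.mpr ⟨hp, hl⟩, rfl⟩)⟩
    rw [← cmp_eq_lt_iff, ← cmp_eq_lt_iff] at this
    exact this.1.trans this.2.symm
  · have : a < p1 ∧ b < p2 :=
      ⟨hr, hb2 _ (Finset.mem_image.mpr ⟨(p1, p2), Finset.mem_filter.mpr ⟨hp, hr⟩, rfl⟩)⟩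
    rw [← cmp_eq_gt_iff, ← cmp_eq_gt_iff] at this
    exact this.1.trans this.2.symm

/-- Swap the two sides of a colored partial isomorphism. -/
protected def comm (f : CPartialIso α β c1 c2) : CPartialIso β α c2 c1 :=
  ⟨f.val.image (Equiv.prodComm _ _), by
    constructor
    · intro p hp q hq
      rw [← Finset.mem_coe, Finset.coe_image, Equiv.image_eq_preimage_symm] at hp hq
      exact (f.prop.1 _ hp _ hq).symm
    · intro p hp
      rw [← Finset.mem_coe, Finset.coe_image, Equiv.image_eq_preimage_symm] at hp
      exact (f.prop.2 _ hp).symm⟩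

variable (β c2) in
/-- The cofinal set of colored partial isos defined at `a : α`. -/
def definedAtLeft [DenselyOrdered β] [NoMinOrder β] [NoMaxOrder β] [Nonempty β]
    (hc2 : ∀ i, ∀ x y : β, x < y → ∃ s, c2 s = i ∧ x < s ∧ s < y) (a : α) :
    Cofinal (CPartialIso α β c1 c2) where
  carrier := {f | ∃ b : β, (a, b) ∈ f.val}
  isCofinal f := by
    obtain ⟨b, hbc, a_b⟩ := exists_across hc2 f a
    refine ⟨⟨insert (a, b) f.val, ?_, ?_⟩, ⟨b, Finset.mem_insert_self _ _⟩,
      Finset.subset_insert _ _⟩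
    · intro p hp q hq
      rw [Finset.mem_insert] at hp hq
      rcases hp with (rfl | pf) <;> rcases hq with (rfl | qf)
      · simp only [cmp_self_eq_eq]
      · rw [cmp_eq_cmp_symm]; exact a_b _ qf
      · exact a_b _ pf
      · exact f.prop.1 _ pf _ qf
    · intro p hp
      rw [Finset.mem_insert] at hp
      rcases hp with (rfl | pf)
      · exact hbc
      · exact f.prop.2 _ pf

variable (α c1) in
/-- The cofinal set of colored partial isos defined at `b : β`. -/
def definedAtRight [DenselyOrdered α] [NoMinOrder α] [NoMaxOrder α] [Nonempty α]
    (hc1 : ∀ i, ∀ x y : α, x < y → ∃ s, c1 s = i ∧ x < s ∧ s < y) (b : β) :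
    Cofinal (CPartialIso α β c1 c2) where
  carrier := {f | ∃ a, (a, b) ∈ f.val}
  isCofinal f := by
    rcases (definedAtLeft α c1 hc1 b).isCofinal f.comm with ⟨f', ⟨a, ha⟩, hl⟩
    refine ⟨f'.comm, ⟨a, ?_⟩, ?_⟩
    · change (a, b) ∈ f'.val.image _
      rwa [← Finset.mem_coe, Finset.coe_image, Equiv.image_eq_preimage_symm]
    · change _ ⊆ f'.val.image _
      rwa [← Finset.coe_subset, Finset.coe_image, ← Equiv.symm_image_subset, ← Finset.coe_image,
        Finset.coe_subset]

end CPartialIso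

open CPartialIso in
/-- Colored back-and-forth: a color-preserving order isomorphism. -/
theorem iso_of_countable_dense_col [Countable α] [DenselyOrdered α] [NoMinOrder α] [NoMaxOrder α]
    [Nonempty α] [Countable β] [DenselyOrdered β] [NoMinOrder β] [NoMaxOrder β] [Nonempty β]
    (c1 : α → ι) (c2 : β → ι)
    (hc1 : ∀ i, ∀ x y : α, x < y → ∃ s, c1 s = i ∧ x < s ∧ s < y)
    (hc2 : ∀ i, ∀ x y : β, x < y → ∃ s, c2 s = i ∧ x < s ∧ s < y) :
    ∃ e : α ≃o β, ∀ a, c2 (e a) = c1 a := by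
  cases nonempty_encodable α
  cases nonempty_encodable β
  let to_cofinal : α ⊕ β → Cofinal (CPartialIso α β c1 c2) := fun p =>
    Sum.recOn p (definedAtLeft β c2 hc2) (definedAtRight α c1 hc1)
  let our_ideal : Ideal (CPartialIso α β c1 c2) := idealOfCofinals default to_cofinal
  have hF : ∀ a : α, ∃ b : β, ∃ f ∈ our_ideal, (a, b) ∈ f.val := by
    intro a
    obtain ⟨f, ⟨b, hb⟩, hf⟩ := cofinal_meets_idealOfCofinals default to_cofinal (Sum.inl a)
    exact ⟨b, f, hf, hb⟩
  have hG : ∀ b : β, ∃ a : α, ∃ f ∈ our_ideal, (a, b) ∈ f.val := by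
    intro b
    obtain ⟨f, ⟨a, ha⟩, hf⟩ := cofinal_meets_idealOfCofinals default to_cofinal (Sum.inr b)
    exact ⟨a, f, hf, ha⟩
  choose F hF using hF
  choose G hG using hG
  refine ⟨OrderIso.ofCmpEqCmp F G fun a b => ?_, fun a => ?_⟩
  · obtain ⟨f, hf, ha⟩ := hF a
    obtain ⟨g, hg, hb⟩ := hG b
    rcases our_ideal.directed _ hf _ hg with ⟨m, _, fm, gm⟩
    exact m.prop.1 (a, _) (fm ha) (_, b) (gm hb)
  · obtain ⟨f, _, ha⟩ := hF a
    exact f.prop.2 _ ha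

end SkolemAux

end SkolemAux

/-- **Skolem's extension of Cantor's theorem.** Let `ι` be a nonempty countable index set,
`X` and `Y` countable dense linear orders without endpoints, and let `(Xp i)` and `(Yp i)`
be partitions of `X` and `Y` into pairwise disjoint subsets, each dense. Then there is an
order isomorphism `f : X ≃o Y` with `f '' Xp i = Yp i` for every `i`. -/
theorem skolem_dense_partition {ι : Type*} [Countable ι] [Nonempty ι]
    {X Y : Type*} [LinearOrder X] [LinearOrder Y]
    [Countable X] [Countable Y] [Nonempty X] [Nonempty Y]
    [DenselyOrdered X] [DenselyOrdered Y]
    [NoMinOrder X] [NoMaxOrder X] [NoMinOrder Y] [NoMaxOrder Y]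
    (Xp : ι → Set X) (Yp : ι → Set Y)
    (hXdisj : Pairwise (Function.onFun Disjoint Xp)) (hXcov : ⋃ i, Xp i = Set.univ)
    (hYdisj : Pairwise (Function.onFun Disjoint Yp)) (hYcov : ⋃ i, Yp i = Set.univ)
    (hXdense : ∀ i, ∀ x y : X, x < y → ∃ s ∈ Xp i, x < s ∧ s < y)
    (hYdense : ∀ i, ∀ x y : Y, x < y → ∃ s ∈ Yp i, x < s ∧ s < y) :
    ∃ f : X ≃o Y, ∀ i, ⇑f '' Xp i = Yp i := by
  -- color maps
  have hx : ∀ x : X, ∃ i, x ∈ Xp i := fun x => by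
    have := hXcov ▸ Set.mem_univ x; simpa using Set.mem_iUnion.mp (hXcov ▸ Set.mem_univ x)
  have hy : ∀ y : Y, ∃ i, y ∈ Yp i := fun y => by
    simpa using Set.mem_iUnion.mp (hYcov ▸ Set.mem_univ y)
  choose cX hcX using hx
  choose cY hcY using hy
  have hXmem : ∀ (x : X) (i : ι), x ∈ Xp i ↔ cX x = i := by
    intro x i
    constructor
    · intro hxi
      by_contra hne
      exact Set.disjoint_left.mp (hXdisj hne) (hcX x) hxi
    · rintro rfl; exact hcX x
  have hYmem : ∀ (y : Y) (i : ι), y ∈ Yp i ↔ cY y = i := by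
    intro y i
    constructor
    · intro hyi
      by_contra hne
      exact Set.disjoint_left.mp (hYdisj hne) (hcY y) hyi
    · rintro rfl; exact hcY y
  have hc1 : ∀ i, ∀ x y : X, x < y → ∃ s, cX s = i ∧ x < s ∧ s < y := by
    intro i x y hxy
    obtain ⟨s, hs, h1, h2⟩ := hXdense i x y hxy
    exact ⟨s, (hXmem s i).mp hs, h1, h2⟩
  have hc2 : ∀ i, ∀ x y : Y, x < y → ∃ s, cY s = i ∧ x < s ∧ s < y := by
    intro i x y hxy
    obtain ⟨s, hs, h1, h2⟩ := hYdense i x y hxy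
    exact ⟨s, (hYmem s i).mp hs, h1, h2⟩
  obtain ⟨e, he⟩ := SkolemAux.iso_of_countable_dense_col cX cY hc1 hc2
  refine ⟨e, fun i => ?_⟩
  ext y
  constructor
  · rintro ⟨x, hx, rfl⟩
    rw [hYmem, he]
    exact (hXmem x i).mp hx
  · intro hyi
    refine ⟨e.symm y, ?_, e.apply_symm_apply y⟩
    rw [hXmem, ← he (e.symm y), e.apply_symm_apply]
    exact (hYmem y i).mp hyi
end
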